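/- arXiv:2207.11204 — 6 statements merged into one kernel-verified Lean document; each statement's English description precedes it below -/
import Mathlib

section
/- Under Assumption 1, if P(Sⁱ = ∞) > 0 then P(S₊ⁱ = ∞ | Sⁱ = ∞) = 1 and P(S₋ⁱ = ∞ | Sⁱ = ∞) = 1; equivalently, P(Sⁱ = ∞, S₊ⁱ < ∞) = 0 and P(Sⁱ = ∞, S₋ⁱ < ∞) = 0. -/
open MeasureTheory Filter Set ENNReal

noncomputable section

/-- The cluster `C(ω) = {t : I_t(ω) = 1}` of a binary process. -/
def clusterSet {Ω : Type*} (I : ℤ → Ω → Bool) (ω : Ω) : Set ℤ :=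
  {t : ℤ | I t ω = true}

/-- Inspected cluster size `Sⁱ(ω) = Σ_{t ∈ ℤ} I_t(ω) ∈ ℕ ∪ {∞}`. -/
def SiFn {Ω : Type*} (I : ℤ → Ω → Bool) (ω : Ω) : ℕ∞ :=
  {t : ℤ | I t ω = true}.encard

/-- Forward inspected cluster size `S₊ⁱ(ω) = Σ_{t ≥ 1} I_t(ω) ∈ ℕ₀ ∪ {∞}`. -/
def SplusFn {Ω : Type*} (I : ℤ → Ω → Bool) (ω : Ω) : ℕ∞ :=
  {t : ℤ | 0 < t ∧ I t ω = true}.encard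

/-- Backward inspected cluster size `S₋ⁱ(ω) = Σ_{t ≤ -1} I_t(ω) ∈ ℕ₀ ∪ {∞}`. -/
def SminusFn {Ω : Type*} (I : ℤ → Ω → Bool) (ω : Ω) : ℕ∞ :=
  {t : ℤ | t < 0 ∧ I t ω = true}.encard

/-!
Let `μ` be the law of the path `(I_t)_t` on `ℤ → Bool`. By Assumption 1 its cylinder
probabilities are limits of Palm probabilities of stationary processes, so `μ` is carried by
`{I₀ = 1}` and is point-stationary: recentring the path at a point `k` carries `μ` restricted to
`{I_k = 1}` onto `μ` restricted to `{I_{-k} = 1}`.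

A path with infinitely many points but finitely many positive ones has a last point `m ≥ 0`;
recentred there, it lies in the set `D = leftInfinite` of paths with no positive point and
infinitely many non-positive ones. The events "the last point is at `m` and the path recentred
at `m` lies in `D`" are disjoint, and by point-stationarity they have the masses
`μ (D ∩ {I_{-m} = 1})`. These masses are therefore summable, so by Borel–Cantelli almost every
path in `D` has only finitely many points: `μ D = 0`, which settles `S₊ⁱ`. Time reversal
preserves point-stationarity and settles `S₋ⁱ`.
-/

open Topology

namespace BoolSeq

def shift (k : ℤ) (f : ℤ → Bool) : ℤ → Bool := fun t => f (t + k)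

lemma measurable_shift (k : ℤ) : Measurable (shift k) :=
  measurable_pi_lambda _ fun t => measurable_pi_apply (t + k)

def reflect (f : ℤ → Bool) : ℤ → Bool := fun t => f (-t)

lemma measurable_reflect : Measurable reflect :=
  measurable_pi_lambda _ fun t => measurable_pi_apply (-t)

lemma shift_comp_reflect (k : ℤ) : shift k ∘ reflect = reflect ∘ shift (-k) := by
  ext f t
  simp [shift, reflect, add_comm]

def pattern (F : Finset ℤ) (ε : ℤ → Bool) : Set (ℤ → Bool) := {f | ∀ t ∈ F, f t = ε t}

-- `∅` is included so that the family is closed under intersection.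
def patterns : Set (Set (ℤ → Bool)) := {s | s = ∅ ∨ ∃ F ε, pattern F ε = s}

lemma measurableSet_pattern (F : Finset ℤ) (ε : ℤ → Bool) : MeasurableSet (pattern F ε) := by
  simp only [pattern, ofPred_forall]
  exact .biInter F.countable_toSet fun t _ =>
    measurableSet_eq_fun (measurable_pi_apply t) measurable_const

lemma measurableSet_of_mem_patterns {s : Set (ℤ → Bool)} (hs : s ∈ patterns) : MeasurableSet s := by
  obtain rfl | ⟨F, ε, rfl⟩ := hs
  exacts [.empty, measurableSet_pattern F ε]

lemma setOf_apply_eq_mem_patterns (k : ℤ) (b : Bool) : {f : ℤ → Bool | f k = b} ∈ patterns :=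
  Or.inr ⟨{k}, fun _ => b, by ext f; simp [pattern]⟩

lemma measurableSet_setOf_apply (k : ℤ) (b : Bool) : MeasurableSet {f : ℤ → Bool | f k = b} :=
  measurableSet_of_mem_patterns (setOf_apply_eq_mem_patterns k b)

lemma univ_mem_patterns : (univ : Set (ℤ → Bool)) ∈ patterns :=
  Or.inr ⟨∅, fun _ => true, by ext f; simp [pattern]⟩

open Classical in
lemma pattern_inter_pattern_mem (F G : Finset ℤ) (ε η : ℤ → Bool) :
    pattern F ε ∩ pattern G η ∈ patterns := by
  by_cases hcompat : ∀ t ∈ F, t ∈ G → ε t = η t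
  · refine Or.inr ⟨F ∪ G, fun t => if t ∈ F then ε t else η t, ?_⟩
    ext f
    simp only [pattern, mem_inter_iff, mem_ofPred_eq, Finset.mem_union]
    constructor
    · intro h
      refine ⟨fun t ht => by simpa [ht] using h t (.inl ht), fun t ht => ?_⟩
      by_cases htF : t ∈ F
      · simpa [htF, hcompat t htF ht] using h t (.inl htF)
      · simpa [htF] using h t (.inr ht)
    · rintro ⟨hF, hG⟩ t ht
      by_cases htF : t ∈ F
      · simp [htF, hF t htF]
      · simp [htF, hG t (ht.resolve_left htF)]
  · push Not at hcompat
    obtain ⟨t, htF, htG, hne⟩ := hcompat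
    exact Or.inl (eq_empty_of_forall_notMem fun f hf => hne ((hf.1 t htF).symm.trans (hf.2 t htG)))

lemma inter_mem_patterns {s t : Set (ℤ → Bool)} (hs : s ∈ patterns) (ht : t ∈ patterns) :
    s ∩ t ∈ patterns := by
  obtain rfl | ⟨F, ε, rfl⟩ := hs
  · exact Or.inl (empty_inter t)
  obtain rfl | ⟨G, η, rfl⟩ := ht
  · exact Or.inl (inter_empty _)
  exact pattern_inter_pattern_mem F G ε η

lemma preimage_shift_pattern (k : ℤ) (F : Finset ℤ) (ε : ℤ → Bool) :
    shift k ⁻¹' pattern F ε = pattern (F.image (· + k)) (fun t => ε (t - k)) := by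
  ext f
  simp only [pattern, shift, mem_preimage, mem_ofPred_eq, Finset.forall_mem_image,
    add_sub_cancel_right]

lemma preimage_shift_mem_patterns (k : ℤ) {s : Set (ℤ → Bool)} (hs : s ∈ patterns) :
    shift k ⁻¹' s ∈ patterns := by
  obtain rfl | ⟨F, ε, rfl⟩ := hs
  · exact Or.inl (preimage_empty)
  · exact Or.inr ⟨_, _, (preimage_shift_pattern k F ε).symm⟩

lemma isPiSystem_patterns : IsPiSystem patterns :=
  fun _ hs _ ht _ => inter_mem_patterns hs ht

lemma generateFrom_patterns : MeasurableSpace.generateFrom patterns = MeasurableSpace.pi := by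
  refine le_antisymm (MeasurableSpace.generateFrom_le fun _ => measurableSet_of_mem_patterns) ?_
  refine iSup_le fun i => Measurable.comap_le ?_
  exact @measurable_to_countable' Bool (ℤ → Bool) _ _ (.generateFrom patterns) _ fun b =>
    MeasurableSpace.measurableSet_generateFrom (setOf_apply_eq_mem_patterns i b)

lemma ext_of_patterns {μ ν : Measure (ℤ → Bool)} [IsFiniteMeasure μ]
    (h : ∀ s ∈ patterns, μ s = ν s) : μ = ν :=
  ext_of_generate_finite patterns generateFrom_patterns.symm isPiSystem_patterns h
    (h univ univ_mem_patterns)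

-- Point-stationarity of Palm laws: recentring the path at any of its points preserves the law.
def IsPointStationary (μ : Measure (ℤ → Bool)) : Prop :=
  ∀ k, (μ.restrict {f | f k = true}).map (shift k) = μ.restrict {f | f (-k) = true}

namespace IsPointStationary

variable {μ : Measure (ℤ → Bool)}

lemma measure_preimage_shift_inter (h : IsPointStationary μ) (k : ℤ) {A : Set (ℤ → Bool)}
    (hA : MeasurableSet A) :
    μ (shift k ⁻¹' A ∩ {f | f k = true}) = μ (A ∩ {f | f (-k) = true}) := by
  rw [← Measure.restrict_apply (measurable_shift k hA), ← Measure.map_apply (measurable_shift k) hA,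
    h k, Measure.restrict_apply hA]

lemma map_reflect (h : IsPointStationary μ) :
    IsPointStationary (μ.map reflect) := by
  intro k
  have hpre : ∀ j, reflect ⁻¹' {f | f j = true} = {f | f (-j) = true} := fun j => rfl
  rw [Measure.restrict_map measurable_reflect (measurableSet_setOf_apply _ _),
    Measure.restrict_map measurable_reflect (measurableSet_setOf_apply _ _), hpre, hpre,
    Measure.map_map (measurable_shift k) measurable_reflect, shift_comp_reflect,
    ← Measure.map_map measurable_reflect (measurable_shift _), h (-k)]

end IsPointStationary

def leftInfinite : Set (ℤ → Bool) :=
  {f | (∀ t, 0 < t → f t = false) ∧ ∃ᶠ m : ℕ in atTop, f (-m) = true}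

lemma measurableSet_leftInfinite : MeasurableSet leftInfinite := by
  have hpos : MeasurableSet {f : ℤ → Bool | ∀ t, 0 < t → f t = false} := by
    simp only [ofPred_forall]
    exact .iInter fun t => .iInter fun _ => measurableSet_setOf_apply t false
  have hfreq : MeasurableSet (limsup (fun m : ℕ => {f : ℤ → Bool | f (-m) = true}) atTop) :=
    .measurableSet_limsup fun m => measurableSet_setOf_apply _ _
  convert hpos.inter hfreq using 1
  ext f
  simp [leftInfinite, mem_limsup_iff_frequently_mem]

lemma shift_mem_leftInfinite_of_isGreatest {f : ℤ → Bool} (hinf : {t | f t = true}.Infinite)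
    {m : ℤ} (hm : IsGreatest {t | f t = true} m) : shift m f ∈ leftInfinite := by
  refine ⟨fun t ht => Bool.eq_false_iff.2 fun hf => ?_, Nat.frequently_atTop_iff_infinite.2 ?_⟩
  · have := hm.2 hf
    omega
  · intro hfin
    refine hinf ((hfin.image fun n : ℕ => m - n).subset fun t ht => ⟨(m - t).toNat, ?_, ?_⟩)
    all_goals have := hm.2 ht
    · show f (-((m - t).toNat : ℤ) + m) = true
      rwa [show -((m - t).toNat : ℤ) + m = t by omega]
    · show m - ((m - t).toNat : ℤ) = t
      omega

lemma disjoint_shift_leftInfinite {a b : ℕ} (hab : a < b) :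
    Disjoint (shift a ⁻¹' leftInfinite ∩ {f | f a = true})
      (shift b ⁻¹' leftInfinite ∩ {f | f b = true}) := by
  rw [Set.disjoint_left]
  rintro f ⟨ha, -⟩ ⟨-, hb⟩
  have := ha.1 (b - a) (by omega)
  simp_all [shift]

namespace IsPointStationary

variable {μ : Measure (ℤ → Bool)} [IsFiniteMeasure μ]

lemma measure_leftInfinite (h : IsPointStationary μ) : μ leftInfinite = 0 := by
  set L : ℕ → Set (ℤ → Bool) := fun m => shift m ⁻¹' leftInfinite ∩ {f | f m = true}
  have hL : ∀ m : ℕ, μ (L m) = μ (leftInfinite ∩ {f | f (-m) = true}) := fun m =>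
    h.measure_preimage_shift_inter m measurableSet_leftInfinite
  have hsum : ∑' m : ℕ, μ (leftInfinite ∩ {f | f (-m) = true}) ≠ ∞ := by
    simp_rw [← hL]
    rw [← measure_iUnion ((pairwise_disjoint_on L).2 fun a b => disjoint_shift_leftInfinite)
      fun m => (measurable_shift _ measurableSet_leftInfinite).inter
        (measurableSet_setOf_apply _ _)]
    exact measure_ne_top _ _
  refine measure_mono_null (fun f hf => ?_) (measure_limsup_atTop_eq_zero hsum)
  rw [mem_limsup_iff_frequently_mem]
  exact hf.2.mono fun m hm => ⟨hf, hm⟩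

lemma measure_infinite_finite_pos (h : IsPointStationary μ) (h0 : μ {f | f 0 = false} = 0) :
    μ {f | {t | f t = true}.Infinite ∧ {t | 0 < t ∧ f t = true}.Finite} = 0 := by
  refine measure_mono_null (t := (⋃ m : ℕ, shift m ⁻¹' leftInfinite ∩ {f | f m = true}) ∪
    {f | f 0 = false}) ?_ (measure_union_null (measure_iUnion_null fun m => ?_) h0)
  · rintro f ⟨hinf, hfin⟩
    cases hf0 : f 0
    · exact .inr hf0
    obtain ⟨b, hb⟩ := hfin.bddAbove
    have hbdd : ∃ b, ∀ z, f z = true → z ≤ b := ⟨max b 0, fun z hz =>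
      if hz0 : 0 < z then le_max_of_le_left (hb ⟨hz0, hz⟩) else le_max_of_le_right (not_lt.1 hz0)⟩
    obtain ⟨m, hm, hmax⟩ := Int.exists_greatest_of_bdd hbdd ⟨0, hf0⟩
    lift m to ℕ using hmax 0 hf0
    exact .inl (mem_iUnion.2 ⟨m, shift_mem_leftInfinite_of_isGreatest hinf ⟨hm, hmax⟩, hm⟩)
  · rw [h.measure_preimage_shift_inter m measurableSet_leftInfinite]
    exact measure_mono_null inter_subset_left h.measure_leftInfinite

lemma measure_infinite_finite_neg (h : IsPointStationary μ) (h0 : μ {f | f 0 = false} = 0) :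
    μ {f | {t | f t = true}.Infinite ∧ {t | t < 0 ∧ f t = true}.Finite} = 0 := by
  have h0' : μ.map reflect {f | f 0 = false} = 0 := by
    rwa [Measure.map_apply measurable_reflect
      (measurableSet_setOf_apply 0 false)]
  refine measure_mono_null (fun f hf => ?_) (nonpos_iff_eq_zero.1
    ((Measure.le_map_apply measurable_reflect.aemeasurable _).trans_eq
      (h.map_reflect.measure_infinite_finite_pos h0')))
  obtain ⟨hinf, hfin⟩ := hf
  refine ⟨fun hfin' => hinf ?_, ?_⟩
  · simpa [reflect] using hfin'.preimage (f := fun t : ℤ => -t) neg_injective.injOn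
  · simpa [reflect] using hfin.preimage (f := fun t : ℤ => -t) neg_injective.injOn

end IsPointStationary

lemma isPointStationary_of_tendsto {μ : Measure (ℤ → Bool)} [IsFiniteMeasure μ]
    (ν : ℕ → Set (ℤ → Bool) → ℝ≥0∞)
    (hlim : ∀ s ∈ patterns, Tendsto (fun n => ν n s) atTop (𝓝 (μ s)))
    (hν : ∀ n k, ∀ s ∈ patterns,
      ν n (shift k ⁻¹' s ∩ {f | f k = true}) = ν n (s ∩ {f | f (-k) = true})) :
    IsPointStationary μ := by
  intro k
  refine ext_of_patterns fun s hs => ?_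
  have hsm := measurableSet_of_mem_patterns hs
  rw [Measure.map_apply (measurable_shift k) hsm, Measure.restrict_apply (measurable_shift k hsm),
    Measure.restrict_apply hsm]
  have hcoord := setOf_apply_eq_mem_patterns
  exact tendsto_nhds_unique
    ((hlim _ (inter_mem_patterns (preimage_shift_mem_patterns k hs) (hcoord k true))).congr
      fun n => hν n k s hs)
    (hlim _ (inter_mem_patterns hs (hcoord (-k) true)))

section Palm

variable {Ω : Type*} [MeasurableSpace Ω] (Q : Measure Ω) (Y : ℤ → Ω → Bool)

def palmProb (s : Set (ℤ → Bool)) : ℝ≥0∞ :=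
  Q (Function.swap Y ⁻¹' s ∩ {ω | Y 0 ω = true}) / Q {ω | Y 0 ω = true}

lemma palmProb_setOf_apply_zero_eq_false : palmProb Q Y {f | f 0 = false} = 0 := by
  have : Function.swap Y ⁻¹' {f | f 0 = false} ∩ {ω | Y 0 ω = true} = ∅ := by
    ext ω
    simp [Function.swap]
  rw [palmProb, this, measure_empty, ENNReal.zero_div]

variable {Q Y}
variable (hstat : ∀ (F : Finset ℤ) (ε : ℤ → Bool) (k : ℤ),
  Q {ω | ∀ t ∈ F, Y t ω = ε t} = Q {ω | ∀ t ∈ F, Y (t + k) ω = ε t})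
include hstat

lemma measure_preimage_shift_of_mem_patterns (k : ℤ) {s : Set (ℤ → Bool)} (hs : s ∈ patterns) :
    Q (Function.swap Y ⁻¹' (shift k ⁻¹' s)) = Q (Function.swap Y ⁻¹' s) := by
  obtain rfl | ⟨F, ε, rfl⟩ := hs
  · rfl
  · exact (hstat F ε k).symm

lemma palmProb_preimage_shift_inter (k : ℤ) {s : Set (ℤ → Bool)} (hs : s ∈ patterns) :
    palmProb Q Y (shift k ⁻¹' s ∩ {f | f k = true}) = palmProb Q Y (s ∩ {f | f (-k) = true}) := by
  have hcoord := setOf_apply_eq_mem_patterns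
  have hc := inter_mem_patterns (inter_mem_patterns hs (hcoord (-k) true)) (hcoord 0 true)
  have hshift : shift k ⁻¹' (s ∩ {f | f (-k) = true} ∩ {f | f 0 = true}) =
      shift k ⁻¹' s ∩ {f | f k = true} ∩ {f | f 0 = true} := by
    ext f
    simp only [shift, preimage_inter, mem_inter_iff, mem_preimage, mem_ofPred_eq, neg_add_cancel,
      zero_add]
    tauto
  have key := measure_preimage_shift_of_mem_patterns hstat k hc
  rw [hshift] at key
  exact congrArg (· / Q {ω | Y 0 ω = true}) key

end Palm

end BoolSeq

lemma measure_inter_div_self_eq_one {Ω : Type*} [MeasurableSpace Ω] {P : Measure Ω}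
    [IsFiniteMeasure P] {A B : Set Ω} (hA : P A ≠ 0) (hAB : P (A \ B) = 0) :
    P (B ∩ A) / P A = 1 := by
  have : P (B ∩ A) = P A := le_antisymm (measure_mono inter_subset_right) <| by
    simpa [hAB, inter_comm] using measure_le_inter_add_sdiff P A B
  rw [this, ENNReal.div_self hA (measure_ne_top P A)]

lemma setOf_SiFn_eq_top_and_SplusFn_ne_top {Ω : Type*} (I : ℤ → Ω → Bool) :
    {ω | SiFn I ω = ⊤ ∧ SplusFn I ω ≠ ⊤} = Function.swap I ⁻¹'
      {f | {t | f t = true}.Infinite ∧ {t | 0 < t ∧ f t = true}.Finite} := by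
  ext ω
  simp [SiFn, SplusFn, Function.swap]

lemma setOf_SiFn_eq_top_and_SminusFn_ne_top {Ω : Type*} (I : ℤ → Ω → Bool) :
    {ω | SiFn I ω = ⊤ ∧ SminusFn I ω ≠ ⊤} = Function.swap I ⁻¹'
      {f | {t | f t = true}.Infinite ∧ {t | t < 0 ∧ f t = true}.Finite} := by
  ext ω
  simp [SiFn, SminusFn, Function.swap]

open BoolSeq in
theorem infinite_cluster_size_general
    {Ω : Type*} [MeasurableSpace Ω] (P : Measure Ω) [IsProbabilityMeasure P]
    (I : ℤ → Ω → Bool) (hI : ∀ t, Measurable (I t))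
    {Ωn : ℕ → Type*} [∀ n, MeasurableSpace (Ωn n)]
    (Pn : ∀ n, Measure (Ωn n))
    (In : ∀ n, ℤ → Ωn n → Bool)
    -- stationarity of each `(Iₜⁿ)ₜ`
    (hstat : ∀ n (F : Finset ℤ) (ε : ℤ → Bool) (k : ℤ),
      Pn n {ω | ∀ t ∈ F, In n t ω = ε t} = Pn n {ω | ∀ t ∈ F, In n (t + k) ω = ε t})
    -- convergence of the conditional finite-dimensional distributions
    (hconv : ∀ (F : Finset ℤ) (ε : ℤ → Bool),
      Tendsto (fun n =>
          Pn n ({ω | ∀ t ∈ F, In n t ω = ε t} ∩ {ω | In n 0 ω = true})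
            / Pn n {ω | In n 0 ω = true}) atTop
        (nhds (P {ω | ∀ t ∈ F, I t ω = ε t})))

    (hinf : 0 < P {ω | SiFn I ω = ⊤}) :
    P ({ω | SplusFn I ω = ⊤} ∩ {ω | SiFn I ω = ⊤}) / P {ω | SiFn I ω = ⊤} = 1
    ∧ P ({ω | SminusFn I ω = ⊤} ∩ {ω | SiFn I ω = ⊤}) / P {ω | SiFn I ω = ⊤} = 1
    ∧ P {ω | SiFn I ω = ⊤ ∧ SplusFn I ω ≠ ⊤} = 0
    ∧ P {ω | SiFn I ω = ⊤ ∧ SminusFn I ω ≠ ⊤} = 0 := by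
  have hX : Measurable (Function.swap I) := measurable_pi_lambda _ hI
  set μ := P.map (Function.swap I)
  have hlim : ∀ s ∈ patterns, Tendsto (fun n => palmProb (Pn n) (In n) s) atTop (𝓝 (μ s)) := by
    rintro s (rfl | ⟨F, ε, rfl⟩)
    · simp [palmProb]
    · rw [Measure.map_apply hX (measurableSet_pattern F ε)]
      exact hconv F ε
  have hμ : IsPointStationary μ := isPointStationary_of_tendsto _ hlim
    fun n k _ hs => palmProb_preimage_shift_inter (hstat n) k hs
  have h0 : μ {f | f 0 = false} = 0 := tendsto_nhds_unique
    (hlim _ (setOf_apply_eq_mem_patterns 0 false))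
    (by simpa only [palmProb_setOf_apply_zero_eq_false] using tendsto_const_nhds)
  have hlaw : ∀ E, P (Function.swap I ⁻¹' E) ≤ μ E := Measure.le_map_apply hX.aemeasurable
  have hplus : P {ω | SiFn I ω = ⊤ ∧ SplusFn I ω ≠ ⊤} = 0 := by
    rw [setOf_SiFn_eq_top_and_SplusFn_ne_top]
    exact le_zero_iff.1 ((hlaw _).trans_eq (hμ.measure_infinite_finite_pos h0))
  have hminus : P {ω | SiFn I ω = ⊤ ∧ SminusFn I ω ≠ ⊤} = 0 := by
    rw [setOf_SiFn_eq_top_and_SminusFn_ne_top]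
    exact le_zero_iff.1 ((hlaw _).trans_eq (hμ.measure_infinite_finite_neg h0))
  exact ⟨measure_inter_div_self_eq_one hinf.ne' hplus,
    measure_inter_div_self_eq_one hinf.ne' hminus, hplus, hminus⟩

/-- Theorem 3.3(c): under Assumption 1, if `P(Sⁱ = ∞) > 0` then
`P(S₊ⁱ = ∞ | Sⁱ = ∞) = 1` and `P(S₋ⁱ = ∞ | Sⁱ = ∞) = 1`; equivalently,
`P(Sⁱ = ∞, S₊ⁱ < ∞) = 0` and `P(Sⁱ = ∞, S₋ⁱ < ∞) = 0`. -/
theorem infinite_cluster_size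
    {Ω : Type*} [MeasurableSpace Ω] (P : Measure Ω) [IsProbabilityMeasure P]
    (I : ℤ → Ω → Bool) (hI : ∀ t, Measurable (I t))
    {Ωn : ℕ → Type*} [∀ n, MeasurableSpace (Ωn n)]
    (Pn : ∀ n, Measure (Ωn n)) (hPn : ∀ n, IsProbabilityMeasure (Pn n))
    (In : ∀ n, ℤ → Ωn n → Bool) (hIn : ∀ n t, Measurable (In n t))
    -- `P(I₀ⁿ = 1) > 0` for all `n`
    (hpos : ∀ n, 0 < Pn n {ω | In n 0 ω = true})
    -- stationarity of each `(Iₜⁿ)ₜ`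
    (hstat : ∀ n (F : Finset ℤ) (ε : ℤ → Bool) (k : ℤ),
      Pn n {ω | ∀ t ∈ F, In n t ω = ε t} = Pn n {ω | ∀ t ∈ F, In n (t + k) ω = ε t})
    -- convergence of the conditional finite-dimensional distributions
    (hconv : ∀ (F : Finset ℤ) (ε : ℤ → Bool),
      Tendsto (fun n =>
          Pn n ({ω | ∀ t ∈ F, In n t ω = ε t} ∩ {ω | In n 0 ω = true})
            / Pn n {ω | In n 0 ω = true}) atTop
        (nhds (P {ω | ∀ t ∈ F, I t ω = ε t})))

    (hinf : 0 < P {ω | SiFn I ω = ⊤}) :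
    P ({ω | SplusFn I ω = ⊤} ∩ {ω | SiFn I ω = ⊤}) / P {ω | SiFn I ω = ⊤} = 1
    ∧ P ({ω | SminusFn I ω = ⊤} ∩ {ω | SiFn I ω = ⊤}) / P {ω | SiFn I ω = ⊤} = 1
    ∧ P {ω | SiFn I ω = ⊤ ∧ SplusFn I ω ≠ ⊤} = 0
    ∧ P {ω | SiFn I ω = ⊤ ∧ SminusFn I ω ≠ ⊤} = 0 :=
  infinite_cluster_size_general P I hI Pn In hstat hconv hinf
end
end

section
/- Under Assumption 1, if θ := P(S₊ⁱ = 0) > 0, then the probability mass function of the typical cluster size satisfies π_k = θ⁻¹ · [P(S₊ⁱ = k − 1) − P(S₊ⁱ = k)] for every k ∈ ℕ, where π_k := P(Sⁱ = k | S₋ⁱ = 0). -/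
open MeasureTheory Filter Set ENNReal

noncomputable section
set_option maxHeartbeats 1000000
set_option linter.unusedSectionVars false
open scoped Classical

namespace ClusterAux


def cyl (F : Finset ℤ) (ε : ℤ → Bool) : Set (ℤ → Bool) := {f | ∀ t ∈ F, f t = ε t}

lemma measurableSet_bool_cond (t : ℤ) (Q : Bool → Prop) :
    MeasurableSet {f : ℤ → Bool | Q (f t)} := by
  have : {f : ℤ → Bool | Q (f t)} = (fun f : ℤ → Bool => f t) ⁻¹' {b | Q b} := rfl
  rw [this]
  exact measurable_pi_apply t (by measurability)

lemma measurableSet_cyl (F : Finset ℤ) (ε : ℤ → Bool) : MeasurableSet (cyl F ε) := by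
  have h : cyl F ε = ⋂ t ∈ F, {f : ℤ → Bool | f t = ε t} := by ext f; simp [cyl]
  rw [h]
  exact MeasurableSet.biInter F.countable_toSet
    fun t _ => measurableSet_bool_cond t (fun b => b = ε t)

lemma isPiSystem_cyl : IsPiSystem {C : Set (ℤ → Bool) | ∃ F ε, C = cyl F ε} := by
  rintro _ ⟨F, ε, rfl⟩ _ ⟨F', ε', rfl⟩ ⟨f, hf, hf'⟩
  refine ⟨F ∪ F', fun t => if t ∈ F then ε t else ε' t, ?_⟩
  ext g
  simp only [cyl, mem_inter_iff, mem_setOf_eq, Finset.mem_union]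
  constructor
  · rintro ⟨h1, h2⟩ t ht
    by_cases htF : t ∈ F
    · simp [htF, h1 t htF]
    · simp [htF, h2 t (ht.resolve_left htF)]
  · intro h
    constructor
    · intro t ht; have := h t (Or.inl ht); simpa [ht] using this
    · intro t ht
      by_cases htF : t ∈ F
      · have := h t (Or.inl htF); simp only [if_pos htF] at this
        rw [this, ← hf t htF, hf' t ht]
      · have := h t (Or.inr ht); simpa [htF] using this

lemma generate_cyl :
    (MeasurableSpace.pi : MeasurableSpace (ℤ → Bool)) =
      MeasurableSpace.generateFrom {C : Set (ℤ → Bool) | ∃ F ε, C = cyl F ε} := by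
  apply le_antisymm
  · rw [MeasurableSpace.pi]
    refine iSup_le fun t => ?_
    rw [← measurable_iff_comap_le]
    intro s _
    have hs : (fun f : ℤ → Bool => f t) ⁻¹' s = ⋃ b ∈ s, cyl {t} (fun _ => b) := by
      ext f; simp [cyl]
    rw [hs]
    refine MeasurableSet.biUnion s.to_countable fun b _ =>
      MeasurableSpace.measurableSet_generateFrom ⟨{t}, fun _ => b, rfl⟩
  · refine MeasurableSpace.generateFrom_le ?_
    rintro _ ⟨F, ε, rfl⟩
    exact measurableSet_cyl F ε

lemma measure_ext_cyl {μ ν : Measure (ℤ → Bool)} [IsFiniteMeasure μ]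
    (h : ∀ F ε, μ (cyl F ε) = ν (cyl F ε)) : μ = ν := by
  refine ext_of_generate_finite _ generate_cyl isPiSystem_cyl ?_ ?_
  · rintro _ ⟨F, ε, rfl⟩; exact h F ε
  · have := h ∅ (fun _ => true)
    simpa [cyl] using this




def posCount (f : ℤ → Bool) : ℕ∞ := {t : ℤ | 0 < t ∧ f t = true}.encard

lemma posCount_preimage_nat (n : ℕ) :
    posCount ⁻¹' {(n : ℕ∞)} =
      ⋃ T ∈ {T : Finset ℤ | T.card = n ∧ ∀ t ∈ T, 0 < t},
        ⋂ t : ℤ, {f : ℤ → Bool | 0 < t → (f t = true ↔ t ∈ T)} := by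
  ext f
  simp only [mem_preimage, mem_singleton_iff, mem_iUnion, mem_iInter, mem_setOf_eq]
  constructor
  · intro h
    have hfin : {t : ℤ | 0 < t ∧ f t = true}.Finite := Set.finite_of_encard_eq_coe h
    classical
    refine ⟨hfin.toFinset, ⟨?_, ?_⟩, ?_⟩
    · have := hfin.encard_eq_coe_toFinset_card
      rw [posCount, this] at h
      exact_mod_cast h
    · intro t ht; simp only [Set.Finite.mem_toFinset, mem_setOf_eq] at ht; exact ht.1
    · intro t ht
      simp only [Set.Finite.mem_toFinset, mem_setOf_eq]
      constructor
      · intro hft; exact ⟨ht, hft⟩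
      · intro h'; exact h'.2
  · rintro ⟨T, ⟨hcard, hpos⟩, hT⟩
    have : {t : ℤ | 0 < t ∧ f t = true} = ↑T := by
      ext t
      simp only [mem_setOf_eq, Finset.coe_sort_coe, Finset.mem_coe]
      constructor
      · rintro ⟨ht, hft⟩; exact (hT t ht).1 hft
      · intro htT; exact ⟨hpos t htT, (hT t (hpos t htT)).2 htT⟩
    rw [posCount, this, Set.encard_coe_eq_coe_finsetCard, hcard]

lemma measurable_posCount : Measurable posCount := by
  apply measurable_to_countable'
  intro y
  have key : ∀ n : ℕ, MeasurableSet (posCount ⁻¹' {(n : ℕ∞)}) := by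
    intro n
    rw [posCount_preimage_nat]
    refine MeasurableSet.biUnion (Set.to_countable _) fun T _ => ?_
    exact MeasurableSet.iInter fun t =>
      measurableSet_bool_cond t (fun b => 0 < t → (b = true ↔ t ∈ T))
  cases y with
  | top =>
      have : posCount ⁻¹' {(⊤ : ℕ∞)} = (⋃ n : ℕ, posCount ⁻¹' {(n : ℕ∞)})ᶜ := by
        ext f
        simp only [mem_preimage, mem_singleton_iff, mem_compl_iff, mem_iUnion, not_exists]
        constructor
        · intro h n hn; rw [h] at hn; exact (by simp : ((n:ℕ∞) ≠ ⊤)) hn.symm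
        · intro h
          cases hc : posCount f with
          | top => rfl
          | coe n => exact absurd hc (h n)
      rw [this]
      exact (MeasurableSet.iUnion key).compl
  | coe n => exact key n

/-- shift counting -/
lemma posCount_shift (g : ℤ → Bool) (c : ℤ) :
    posCount (fun t => g (t + c)) = {u : ℤ | c < u ∧ g u = true}.encard := by
  rw [posCount]
  have : {u : ℤ | c < u ∧ g u = true} = (fun t => t + c) '' {t : ℤ | 0 < t ∧ g (t + c) = true} := by
    ext u
    simp only [mem_image, mem_setOf_eq]
    constructor
    · rintro ⟨hu, hgu⟩; exact ⟨u - c, ⟨by omega, by simpa using hgu⟩, by ring⟩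
    · rintro ⟨t, ⟨ht, hgt⟩, rfl⟩; exact ⟨by omega, hgt⟩
  rw [this, Function.Injective.encard_image (fun a b => by omega)]




lemma cyl_decomp (g : ℤ → Bool) (F : Finset ℤ) (ε : ℤ → Bool) (s : ℤ)
    (hs : s ∈ F → ε s = true) (h0 : 0 ∈ F → ε 0 = true) :
    (∀ t ∈ insert 0 (insert s F), g t = (if t = 0 ∨ t = s then true else ε t))
      ↔ (∀ t ∈ F, g t = ε t) ∧ g s = true ∧ g 0 = true := by
  constructor
  · intro h
    refine ⟨?_, ?_, ?_⟩
    · intro t ht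
      have := h t (by simp [ht])
      by_cases h1 : t = 0 ∨ t = s
      · rcases h1 with rfl | rfl
        · rw [this, h0 ht]; simp
        · rw [this, hs ht]; simp
      · simpa [h1] using this
    · have := h s (by simp); simpa using this
    · have := h 0 (by simp); simpa using this
  · rintro ⟨h1, h2, h3⟩ t ht
    by_cases hc : t = 0 ∨ t = s
    · rcases hc with rfl | rfl <;> simp [h2, h3]
    · push_neg at hc
      simp only [Finset.mem_insert] at ht
      rcases ht with rfl | rfl | ht
      · exact absurd rfl hc.1
      · exact absurd rfl hc.2
      · simp [hc, h1 t ht]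

/-- intersecting with a full-measure set -/
lemma measure_inter_full {Ω : Type*} [MeasurableSpace Ω] (P : Measure Ω)
    [IsProbabilityMeasure P] {B : Set Ω} (hB : MeasurableSet B) (h1 : P B = 1)
    (A : Set Ω) : P (A ∩ B) = P A := by
  have h2 : P (A \ B) = 0 := by
    refine measure_mono_null (Set.diff_subset_compl A B) ?_
    rw [measure_compl hB (by simp [h1] : P B ≠ ⊤), h1]
    simp
  have := measure_inter_add_diff (μ := P) A hB
  rw [h2, add_zero] at this
  exact this


lemma measurableSet_bool (s : Set Bool) : MeasurableSet s := trivial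

lemma enat_add_one_cancel {x : ℕ∞} {j : ℕ} (h : x + 1 = (j : ℕ∞) + 1) : x = (j : ℕ∞) := by
  cases x with
  | top =>
    exfalso
    rw [top_add] at h
    have h2 : ((j : ℕ∞) + 1) = ((j + 1 : ℕ) : ℕ∞) := by push_cast; ring
    rw [h2] at h
    exact (ENat.coe_ne_top (j + 1)) h.symm
  | coe n =>
    have h' : ((n + 1 : ℕ) : ℕ∞) = ((j + 1 : ℕ) : ℕ∞) := by push_cast; exact h
    have : n + 1 = j + 1 := Nat.cast_inj.mp h'
    exact_mod_cast congrArg (Nat.cast : ℕ → ℕ∞) (by omega : n = j)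


section Swap
variable {Ω : Type*} [MeasurableSpace Ω] (P : Measure Ω) [IsProbabilityMeasure P]
    (I : ℤ → Ω → Bool)
    {Ωn : ℕ → Type*} [∀ n, MeasurableSpace (Ωn n)]
    (Pn : ∀ n, Measure (Ωn n)) (hPn : ∀ n, IsProbabilityMeasure (Pn n))
    (In : ∀ n, ℤ → Ωn n → Bool)
    (hpos : ∀ n, 0 < Pn n {ω | In n 0 ω = true})
    (hstat : ∀ n (F : Finset ℤ) (ε : ℤ → Bool) (k : ℤ),
      Pn n {ω | ∀ t ∈ F, In n t ω = ε t} = Pn n {ω | ∀ t ∈ F, In n (t + k) ω = ε t})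
    (hconv : ∀ (F : Finset ℤ) (ε : ℤ → Bool),
      Tendsto (fun n =>
          Pn n ({ω | ∀ t ∈ F, In n t ω = ε t} ∩ {ω | In n 0 ω = true})
            / Pn n {ω | In n 0 ω = true}) atTop
        (nhds (P {ω | ∀ t ∈ F, I t ω = ε t})))

include hPn hpos hconv in
lemma prob_I0 : P {ω | I 0 ω = true} = 1 := by
  have h := hconv {0} (fun _ => true)
  have heq : ∀ n, Pn n ({ω | ∀ t ∈ ({0} : Finset ℤ), In n t ω = true} ∩ {ω | In n 0 ω = true})
      / Pn n {ω | In n 0 ω = true} = 1 := by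
    intro n
    haveI := hPn n
    have hset : {ω | ∀ t ∈ ({0} : Finset ℤ), In n t ω = true} = {ω | In n 0 ω = true} := by
      ext ω; simp
    rw [hset, Set.inter_self]
    exact ENNReal.div_self (hpos n).ne' (measure_ne_top _ _)
  have h2 : Tendsto (fun _ : ℕ => (1 : ℝ≥0∞)) atTop
      (nhds (P {ω | ∀ t ∈ ({0} : Finset ℤ), I t ω = true})) := by
    refine h.congr fun n => (heq n)
  have h3 := tendsto_nhds_unique h2 tendsto_const_nhds
  have hset : {ω | ∀ t ∈ ({0} : Finset ℤ), I t ω = true} = {ω | I 0 ω = true} := by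
    ext ω; simp
  rw [← hset, h3]

variable (hI : ∀ t, Measurable (I t))

include hI hPn hpos hstat hconv in
lemma swap_cyl (F : Finset ℤ) (ε : ℤ → Bool) (s : ℤ) :
    P ({ω | ∀ t ∈ F, I t ω = ε t} ∩ {ω | I s ω = true})
      = P ({ω | ∀ t ∈ F, I (t - s) ω = ε t} ∩ {ω | I (-s) ω = true}) := by
  have h1 : P {ω | I 0 ω = true} = 1 := prob_I0 P I Pn hPn In hpos hconv
  have hm0 : MeasurableSet {ω | I 0 ω = true} := (hI 0) (measurableSet_singleton true)
  by_cases hbad1 : s ∈ F ∧ ε s = false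
  · -- LHS set empty, RHS ⊆ {I 0 = false}
    have hL : {ω | ∀ t ∈ F, I t ω = ε t} ∩ {ω | I s ω = true} = ∅ := by
      ext ω; simp only [Set.mem_inter_iff, mem_setOf_eq, Set.mem_empty_iff_false, iff_false]
      rintro ⟨ha, hb⟩
      have := ha s hbad1.1; rw [hbad1.2] at this; rw [hb] at this; exact Bool.noConfusion this
    have hR : {ω | ∀ t ∈ F, I (t - s) ω = ε t} ∩ {ω | I (-s) ω = true} ⊆ {ω | I 0 ω = true}ᶜ := by
      intro ω hω
      have := hω.1 s hbad1.1
      rw [hbad1.2, sub_self] at this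
      simp only [Set.mem_compl_iff, mem_setOf_eq, this]
      simp
    rw [hL, measure_empty]
    refine (measure_mono_null hR ?_).symm
    rw [measure_compl hm0 (measure_ne_top _ _), h1]; simp
  · by_cases hbad2 : 0 ∈ F ∧ ε 0 = false
    · have hR : {ω | ∀ t ∈ F, I (t - s) ω = ε t} ∩ {ω | I (-s) ω = true} = ∅ := by
        ext ω; simp only [Set.mem_inter_iff, mem_setOf_eq, Set.mem_empty_iff_false, iff_false]
        rintro ⟨ha, hb⟩
        have h0 := ha 0 hbad2.1
        rw [hbad2.2, zero_sub] at h0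
        rw [hb] at h0; exact Bool.noConfusion h0
      have hL : {ω | ∀ t ∈ F, I t ω = ε t} ∩ {ω | I s ω = true} ⊆ {ω | I 0 ω = true}ᶜ := by
        intro ω hω
        have := hω.1 0 hbad2.1
        rw [hbad2.2] at this
        simp only [Set.mem_compl_iff, mem_setOf_eq, this]; simp
      rw [hR, measure_empty]
      refine measure_mono_null hL ?_
      rw [measure_compl hm0 (measure_ne_top _ _), h1]; simp
    · -- main case
      have hcs : s ∈ F → ε s = true := by
        intro h; by_contra hc
        exact hbad1 ⟨h, by revert hc; cases ε s <;> simp⟩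
      have hc0 : 0 ∈ F → ε 0 = true := by
        intro h; by_contra hc
        exact hbad2 ⟨h, by revert hc; cases ε 0 <;> simp⟩
      set ε₃ : ℤ → Bool := fun u => if u = 0 ∨ u = s then true else ε u with hε₃
      set F₃ : Finset ℤ := insert 0 (insert s F) with hF₃
      set ε₆ : ℤ → Bool := fun u => ε₃ (u + s) with hε₆
      set F₆ : Finset ℤ := F₃.image (· - s) with hF₆
      have hd3 : ∀ g : ℤ → Bool,
          (∀ t ∈ F₃, g t = ε₃ t) ↔ (∀ t ∈ F, g t = ε t) ∧ g s = true ∧ g 0 = true :=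
        fun g => cyl_decomp g F ε s hcs hc0
      have hkey : ∀ g : ℤ → Bool,
          (∀ u ∈ F₆, g u = ε₆ u) ↔ (∀ t ∈ F₃, g (t - s) = ε₃ t) := by
        intro g
        constructor
        · intro h t ht
          have := h (t - s) (Finset.mem_image_of_mem _ ht)
          simpa [hε₆, sub_add_cancel] using this
        · intro h u hu
          rw [hF₆] at hu
          obtain ⟨t, ht, rfl⟩ := Finset.mem_image.1 hu
          have := h t ht
          simpa [hε₆, sub_add_cancel] using this
      have hd6 : ∀ g : ℤ → Bool,
          (∀ u ∈ F₆, g u = ε₆ u) ↔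
            (∀ t ∈ F, g (t - s) = ε t) ∧ g 0 = true ∧ g (-s) = true := by
        intro g
        rw [hkey g]
        have := cyl_decomp (fun t => g (t - s)) F ε s hcs hc0
        simp only [sub_self, zero_sub] at this
        rw [this]
      have h0F₃ : (0 : ℤ) ∈ F₃ := by simp [hF₃]
      have h0F₆ : (0 : ℤ) ∈ F₆ := by
        rw [hF₆]; exact Finset.mem_image.2 ⟨s, by simp [hF₃], by simp⟩
      have hε₆0 : ε₆ 0 = true := by simp [hε₆, hε₃]
      have hε₃0 : ε₃ 0 = true := by simp [hε₃]
      have hnum : ∀ n,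
          Pn n ({ω | ∀ t ∈ F₃, In n t ω = ε₃ t} ∩ {ω | In n 0 ω = true})
            = Pn n ({ω | ∀ u ∈ F₆, In n u ω = ε₆ u} ∩ {ω | In n 0 ω = true}) := by
        intro n
        have e1 : {ω | ∀ t ∈ F₃, In n t ω = ε₃ t} ∩ {ω | In n 0 ω = true}
            = {ω | ∀ t ∈ F₃, In n t ω = ε₃ t} :=
          Set.inter_eq_left.2 fun ω hω => by
            have := hω 0 h0F₃; rw [hε₃0] at this; exact this
        have e2 : {ω | ∀ u ∈ F₆, In n u ω = ε₆ u} ∩ {ω | In n 0 ω = true}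
            = {ω | ∀ u ∈ F₆, In n u ω = ε₆ u} :=
          Set.inter_eq_left.2 fun ω hω => by
            have := hω 0 h0F₆; rw [hε₆0] at this; exact this
        rw [e1, e2, hstat n F₃ ε₃ (-s)]
        congr 1
        ext ω
        simp only [mem_setOf_eq]
        rw [hkey (fun t => In n t ω)]
        constructor
        · intro h t ht; have := h t ht; simpa [sub_eq_add_neg] using this
        · intro h t ht; have := h t ht; simpa [sub_eq_add_neg] using this
      have hPeq : P {ω | ∀ t ∈ F₃, I t ω = ε₃ t} = P {ω | ∀ u ∈ F₆, I u ω = ε₆ u} :=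
        tendsto_nhds_unique
          ((hconv F₃ ε₃).congr fun n => by rw [hnum n]) (hconv F₆ ε₆)
      have eL : {ω | ∀ t ∈ F₃, I t ω = ε₃ t}
          = ({ω | ∀ t ∈ F, I t ω = ε t} ∩ {ω | I s ω = true}) ∩ {ω | I 0 ω = true} := by
        ext ω
        have := hd3 (fun t => I t ω)
        simp only [mem_setOf_eq, Set.mem_inter_iff] at *
        tauto
      have eR : {ω | ∀ u ∈ F₆, I u ω = ε₆ u}
          = ({ω | ∀ t ∈ F, I (t - s) ω = ε t} ∩ {ω | I (-s) ω = true}) ∩ {ω | I 0 ω = true} := by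
        ext ω
        have := hd6 (fun t => I t ω)
        simp only [mem_setOf_eq, Set.mem_inter_iff] at *
        tauto
      calc P ({ω | ∀ t ∈ F, I t ω = ε t} ∩ {ω | I s ω = true})
          = P (({ω | ∀ t ∈ F, I t ω = ε t} ∩ {ω | I s ω = true}) ∩ {ω | I 0 ω = true}) :=
            (measure_inter_full P hm0 h1 _).symm
        _ = P {ω | ∀ t ∈ F₃, I t ω = ε₃ t} := by rw [eL]
        _ = P {ω | ∀ u ∈ F₆, I u ω = ε₆ u} := hPeq
        _ = P (({ω | ∀ t ∈ F, I (t - s) ω = ε t} ∩ {ω | I (-s) ω = true}) ∩ {ω | I 0 ω = true}) := by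
            rw [eR]
        _ = P ({ω | ∀ t ∈ F, I (t - s) ω = ε t} ∩ {ω | I (-s) ω = true}) :=
            measure_inter_full P hm0 h1 _

include hI hPn hpos hstat hconv in
lemma swap_general (s : ℤ) {C : Set (ℤ → Bool)} (hC : MeasurableSet C) :
    P ({ω | (fun t => I t ω) ∈ C} ∩ {ω | I s ω = true})
      = P ({ω | (fun t => I (t - s) ω) ∈ C} ∩ {ω | I (-s) ω = true}) := by
  have hJ : Measurable (fun ω (t : ℤ) => I t ω) :=
    measurable_pi_lambda _ fun t => hI t
  have hJ' : Measurable (fun ω (t : ℤ) => I (t - s) ω) :=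
    measurable_pi_lambda _ fun t => hI (t - s)
  set μ := Measure.map (fun ω (t : ℤ) => I t ω) (P.restrict {ω | I s ω = true}) with hμ
  set ν := Measure.map (fun ω (t : ℤ) => I (t - s) ω) (P.restrict {ω | I (-s) ω = true}) with hν
  have hms : ∀ u : ℤ, MeasurableSet {ω | I u ω = true} :=
    fun u => (hI u) (measurableSet_singleton true)
  haveI : IsFiniteMeasure μ := by
    constructor
    rw [hμ, Measure.map_apply hJ MeasurableSet.univ]
    exact lt_of_le_of_lt (Measure.restrict_le_self _) (measure_lt_top P _)
  have hμν : μ = ν := by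
    apply measure_ext_cyl
    intro F ε
    rw [hμ, hν, Measure.map_apply hJ (measurableSet_cyl F ε),
      Measure.map_apply hJ' (measurableSet_cyl F ε),
      Measure.restrict_apply (hJ (measurableSet_cyl F ε)),
      Measure.restrict_apply (hJ' (measurableSet_cyl F ε))]
    exact swap_cyl P I Pn hPn In hpos hstat hconv hI F ε s
  have h1 : μ C = P ({ω | (fun t => I t ω) ∈ C} ∩ {ω | I s ω = true}) := by
    rw [hμ, Measure.map_apply hJ hC, Measure.restrict_apply (hJ hC)]
    rfl
  have h2 : ν C = P ({ω | (fun t => I (t - s) ω) ∈ C} ∩ {ω | I (-s) ω = true}) := by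
    rw [hν, Measure.map_apply hJ' hC, Measure.restrict_apply (hJ' hC)]
    rfl
  rw [← h1, ← h2, hμν]

end Swap
section Main
variable {Ω : Type*} [MeasurableSpace Ω] (I : ℤ → Ω → Bool)


/-- first negative one at position `-(m+1)` -/
def Bset (m : ℕ) : Set Ω :=
  {ω | (∀ t : ℤ, -(m : ℤ) ≤ t → t < 0 → I t ω = false) ∧ I (-(m : ℤ) - 1) ω = true}

/-- first positive one at position `m+1` -/
def Eset (m : ℕ) : Set Ω :=
  {ω | (∀ t : ℤ, 1 ≤ t → t ≤ (m : ℤ) → I t ω = false) ∧ I ((m : ℤ) + 1) ω = true}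

lemma Bset_disj_lt {m m' : ℕ} (h : m < m') : Disjoint (Bset I m) (Bset I m') := by
  rw [Set.disjoint_left]
  rintro ω ⟨h1, h2⟩ ⟨h1', h2'⟩
  have := h1' (-(m : ℤ) - 1) (by omega) (by omega)
  rw [h2] at this; exact Bool.noConfusion this

lemma Bset_disjoint : Pairwise (Function.onFun Disjoint (Bset I)) := by
  intro m m' hmm
  rcases lt_or_gt_of_ne hmm with h | h
  · exact Bset_disj_lt I h
  · exact (Bset_disj_lt I h).symm

lemma Eset_disj_lt {m m' : ℕ} (h : m < m') : Disjoint (Eset I m) (Eset I m') := by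
  rw [Set.disjoint_left]
  rintro ω ⟨h1, h2⟩ ⟨h1', h2'⟩
  have := h1' ((m : ℤ) + 1) (by omega) (by omega)
  rw [h2] at this; exact Bool.noConfusion this

lemma Eset_disjoint : Pairwise (Function.onFun Disjoint (Eset I)) := by
  intro m m' hmm
  rcases lt_or_gt_of_ne hmm with h | h
  · exact Eset_disj_lt I h
  · exact (Eset_disj_lt I h).symm

lemma iUnion_Bset : (⋃ m, Bset I m) = {ω | SminusFn I ω ≠ 0} := by
  ext ω
  simp only [Set.mem_iUnion, mem_setOf_eq, SminusFn, ne_eq, Set.encard_eq_zero,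
    ← Set.nonempty_iff_ne_empty]
  constructor
  · rintro ⟨m, _, h2⟩
    exact ⟨-(m : ℤ) - 1, by push_cast; omega, h2⟩
  · rintro ⟨t, ht, hIt⟩
    classical
    have hN : ∃ n : ℕ, I (-(n : ℤ) - 1) ω = true :=
      ⟨(-t - 1).toNat, by rwa [show -(((-t - 1).toNat : ℤ)) - 1 = t by omega]⟩
    refine ⟨Nat.find hN, ?_, Nat.find_spec hN⟩
    intro u hu1 hu2
    by_contra hc
    have hu : I (-(((-u - 1).toNat : ℤ)) - 1) ω = true := by
      rw [show -(((-u - 1).toNat : ℤ)) - 1 = u by omega]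
      revert hc; cases I u ω <;> simp
    have := Nat.find_le (h := hN) hu
    omega

lemma iUnion_Eset : (⋃ m, Eset I m) = {ω | SplusFn I ω ≠ 0} := by
  ext ω
  simp only [Set.mem_iUnion, mem_setOf_eq, SplusFn, ne_eq, Set.encard_eq_zero,
    ← Set.nonempty_iff_ne_empty]
  constructor
  · rintro ⟨m, _, h2⟩
    exact ⟨(m : ℤ) + 1, by push_cast; omega, h2⟩
  · rintro ⟨t, ht, hIt⟩
    classical
    have hN : ∃ n : ℕ, I ((n : ℤ) + 1) ω = true :=
      ⟨(t - 1).toNat, by rwa [show (((t - 1).toNat : ℤ)) + 1 = t by omega]⟩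
    refine ⟨Nat.find hN, ?_, Nat.find_spec hN⟩
    intro u hu1 hu2
    by_contra hc
    have hu : I (((u - 1).toNat : ℤ) + 1) ω = true := by
      rw [show (((u - 1).toNat : ℤ)) + 1 = u by omega]
      revert hc; cases I u ω <;> simp
    have := Nat.find_le (h := hN) hu
    omega

/-- positive part splitting at the first positive one -/
lemma Eset_count (j : ℕ) :
    (⋃ m, Eset I m ∩ {ω | {u : ℤ | (m : ℤ) + 1 < u ∧ I u ω = true}.encard = (j : ℕ∞)})
      = {ω | SplusFn I ω = ((j + 1 : ℕ) : ℕ∞)} := by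
  ext ω
  simp only [Set.mem_iUnion, Set.mem_inter_iff, mem_setOf_eq, SplusFn]
  constructor
  · rintro ⟨m, ⟨h1, h2⟩, h3⟩
    have hsplit : {t : ℤ | 0 < t ∧ I t ω = true}
        = insert ((m : ℤ) + 1) {u : ℤ | (m : ℤ) + 1 < u ∧ I u ω = true} := by
      ext u
      simp only [mem_setOf_eq, Set.mem_insert_iff]
      constructor
      · rintro ⟨hu, hIu⟩
        rcases lt_trichotomy u ((m : ℤ) + 1) with h | h | h
        · exact absurd hIu (by rw [h1 u (by omega) (by omega)]; simp)
        · exact Or.inl h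
        · exact Or.inr ⟨h, hIu⟩
      · rintro (rfl | ⟨hu, hIu⟩)
        · exact ⟨by omega, h2⟩
        · exact ⟨by omega, hIu⟩
    rw [hsplit, Set.encard_insert_of_notMem (by simp), h3]
    push_cast; ring
  · intro h
    classical
    have hne : {t : ℤ | 0 < t ∧ I t ω = true}.Nonempty := by
      rw [← Set.encard_ne_zero, h]
      exact_mod_cast (by simp : ((j + 1 : ℕ) : ℕ∞) ≠ 0)
    obtain ⟨t, ht, hIt⟩ := hne
    have hN : ∃ n : ℕ, I ((n : ℤ) + 1) ω = true :=
      ⟨(t - 1).toNat, by rwa [show (((t - 1).toNat : ℤ)) + 1 = t by omega]⟩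
    set m := Nat.find hN with hm
    have hfirst : ∀ u : ℤ, 1 ≤ u → u ≤ (m : ℤ) → I u ω = false := by
      intro u hu1 hu2
      by_contra hc
      have hu : I (((u - 1).toNat : ℤ) + 1) ω = true := by
        rw [show (((u - 1).toNat : ℤ)) + 1 = u by omega]
        revert hc; cases I u ω <;> simp
      have := Nat.find_le (h := hN) hu
      omega
    have hm1 : I ((m : ℤ) + 1) ω = true := Nat.find_spec hN
    refine ⟨m, ⟨hfirst, hm1⟩, ?_⟩
    have hsplit : {t : ℤ | 0 < t ∧ I t ω = true}
        = insert ((m : ℤ) + 1) {u : ℤ | (m : ℤ) + 1 < u ∧ I u ω = true} := by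
      ext u
      simp only [mem_setOf_eq, Set.mem_insert_iff]
      constructor
      · rintro ⟨hu, hIu⟩
        rcases lt_trichotomy u ((m : ℤ) + 1) with h' | h' | h'
        · exact absurd hIu (by rw [hfirst u (by omega) (by omega)]; simp)
        · exact Or.inl h'
        · exact Or.inr ⟨h', hIu⟩
      · rintro (rfl | ⟨hu, hIu⟩)
        · exact ⟨by omega, hm1⟩
        · exact ⟨by omega, hIu⟩
    rw [hsplit, Set.encard_insert_of_notMem (by simp)] at h
    apply enat_add_one_cancel
    rw [h]; push_cast; ring


end Main
section Apply
variable {Ω : Type*} [MeasurableSpace Ω] (P : Measure Ω) [IsProbabilityMeasure P]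
    (I : ℤ → Ω → Bool) (hI : ∀ t, Measurable (I t))
    {Ωn : ℕ → Type*} [∀ n, MeasurableSpace (Ωn n)]
    (Pn : ∀ n, Measure (Ωn n)) (hPn : ∀ n, IsProbabilityMeasure (Pn n))
    (In : ∀ n, ℤ → Ωn n → Bool)
    (hpos : ∀ n, 0 < Pn n {ω | In n 0 ω = true})
    (hstat : ∀ n (F : Finset ℤ) (ε : ℤ → Bool) (k : ℤ),
      Pn n {ω | ∀ t ∈ F, In n t ω = ε t} = Pn n {ω | ∀ t ∈ F, In n (t + k) ω = ε t})
    (hconv : ∀ (F : Finset ℤ) (ε : ℤ → Bool),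
      Tendsto (fun n =>
          Pn n ({ω | ∀ t ∈ F, In n t ω = ε t} ∩ {ω | In n 0 ω = true})
            / Pn n {ω | In n 0 ω = true}) atTop
        (nhds (P {ω | ∀ t ∈ F, I t ω = ε t})))

include hI in
lemma msetQ (t : ℤ) (Q : Bool → Prop) : MeasurableSet {ω | Q (I t ω)} := by
  have h : {ω | Q (I t ω)} = I t ⁻¹' {b | Q b} := rfl
  rw [h]; exact (hI t) trivial

omit [MeasurableSpace Ω] in
lemma posCount_eq_Splus (ω : Ω) : posCount (fun t => I t ω) = SplusFn I ω := rfl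

include hI in
lemma measurable_Splus : Measurable (SplusFn I) := by
  have h : SplusFn I = posCount ∘ (fun ω (t : ℤ) => I t ω) := rfl
  rw [h]; exact measurable_posCount.comp (measurable_pi_lambda _ hI)

include hI in
lemma measurableSet_Bset (m : ℕ) : MeasurableSet (Bset I m) := by
  have h : Bset I m = (⋂ t : ℤ, {ω | -(m : ℤ) ≤ t → t < 0 → I t ω = false})
      ∩ {ω | I (-(m : ℤ) - 1) ω = true} := by
    ext ω; simp [Bset]
  rw [h]
  exact (MeasurableSet.iInter fun t => msetQ I hI t (fun b => -(m : ℤ) ≤ t → t < 0 → b = false)).inter (msetQ I hI (-(m : ℤ) - 1) (fun b => b = true))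

include hI in
lemma measurableSet_Eset (m : ℕ) : MeasurableSet (Eset I m) := by
  have h : Eset I m = (⋂ t : ℤ, {ω | 1 ≤ t → t ≤ (m : ℤ) → I t ω = false})
      ∩ {ω | I ((m : ℤ) + 1) ω = true} := by
    ext ω; simp [Eset]
  rw [h]
  exact (MeasurableSet.iInter fun t => msetQ I hI t (fun b => 1 ≤ t → t ≤ (m : ℤ) → b = false)).inter (msetQ I hI ((m : ℤ) + 1) (fun b => b = true))

include hI in
lemma measurableSet_count (m : ℕ) (j : ℕ) :
    MeasurableSet {ω | {u : ℤ | (m : ℤ) + 1 < u ∧ I u ω = true}.encard = (j : ℕ∞)} := by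
  have h : {ω | {u : ℤ | (m : ℤ) + 1 < u ∧ I u ω = true}.encard = (j : ℕ∞)}
      = (fun ω => posCount (fun t : ℤ => I (t + ((m : ℤ) + 1)) ω)) ⁻¹' {(j : ℕ∞)} := by
    ext ω
    have h2 := posCount_shift (fun u => I u ω) ((m : ℤ) + 1)
    simp only [Set.mem_preimage, Set.mem_singleton_iff, mem_setOf_eq]
    rw [h2]
  rw [h]
  exact (measurable_posCount.comp
    (measurable_pi_lambda _ fun t => hI (t + ((m : ℤ) + 1)))) (measurableSet_singleton _)

include hI in
lemma measurableSet_Sminus0 : MeasurableSet {ω | SminusFn I ω = 0} := by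
  have h : {ω | SminusFn I ω = 0} = ⋂ t : ℤ, {ω | t < 0 → I t ω = false} := by
    ext ω
    simp only [mem_setOf_eq, SminusFn, Set.encard_eq_zero, Set.eq_empty_iff_forall_notMem,
      Set.mem_iInter]
    constructor
    · intro h t ht
      have h2 := h t
      rw [not_and] at h2
      have h3 := h2 ht
      revert h3; cases I t ω <;> simp
    · rintro h t ⟨ht, hIt⟩
      rw [h t ht] at hIt; exact Bool.noConfusion hIt
  rw [h]
  exact MeasurableSet.iInter fun t => msetQ I hI t (fun b => t < 0 → b = false)

include hI hPn hpos hstat hconv in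
lemma PBE (m : ℕ) : P (Bset I m) = P (Eset I m) := by
  set C := {f : ℤ → Bool | ∀ t : ℤ, -(m : ℤ) ≤ t → t < 0 → f t = false} with hCdef
  have hC : MeasurableSet C := by
    have hCset : C = ⋂ t : ℤ, {f : ℤ → Bool | -(m : ℤ) ≤ t → t < 0 → f t = false} := by
      ext f; simp [hCdef]
    rw [hCset]
    exact MeasurableSet.iInter fun t =>
      measurableSet_bool_cond t (fun b => -(m : ℤ) ≤ t → t < 0 → b = false)
  have h := swap_general P I Pn hPn In hpos hstat hconv hI (-((m : ℤ) + 1)) hC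
  have eL : {ω | (fun t => I t ω) ∈ C} ∩ {ω | I (-((m : ℤ) + 1)) ω = true} = Bset I m := by
    ext ω
    simp only [Set.mem_inter_iff, mem_setOf_eq, Bset, hCdef]
    constructor
    · rintro ⟨ha, hb⟩
      exact ⟨ha, by rwa [show -(m : ℤ) - 1 = -((m : ℤ) + 1) by ring]⟩
    · rintro ⟨ha, hb⟩
      exact ⟨ha, by rwa [show -((m : ℤ) + 1) = -(m : ℤ) - 1 by ring]⟩
  have eR : {ω | (fun t => I (t - -((m : ℤ) + 1)) ω) ∈ C} ∩ {ω | I (- -((m : ℤ) + 1)) ω = true}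
      = Eset I m := by
    ext ω
    simp only [Set.mem_inter_iff, mem_setOf_eq, Eset, hCdef]
    constructor
    · rintro ⟨ha, hb⟩
      refine ⟨?_, ?_⟩
      · intro u hu1 hu2
        have h2 := ha (u - ((m : ℤ) + 1)) (by omega) (by omega)
        rwa [show u - ((m : ℤ) + 1) - -((m : ℤ) + 1) = u by ring] at h2
      · rwa [show - -((m : ℤ) + 1) = (m : ℤ) + 1 by ring] at hb
    · rintro ⟨ha, hb⟩
      refine ⟨?_, ?_⟩
      · intro t ht1 ht2
        exact ha (t - -((m : ℤ) + 1)) (by omega) (by omega)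
      · rwa [show (m : ℤ) + 1 = - -((m : ℤ) + 1) by ring] at hb
  rw [eL, eR] at h
  exact h

include hI hPn hpos hstat hconv in
lemma PBE' (m : ℕ) (j : ℕ) :
    P (Bset I m ∩ {ω | SplusFn I ω = (j : ℕ∞)})
      = P (Eset I m ∩ {ω | {u : ℤ | (m : ℤ) + 1 < u ∧ I u ω = true}.encard = (j : ℕ∞)}) := by
  set C := {f : ℤ → Bool | ∀ t : ℤ, -(m : ℤ) ≤ t → t < 0 → f t = false}
      ∩ (posCount ⁻¹' {(j : ℕ∞)}) with hCdef
  have hC : MeasurableSet C := by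
    rw [hCdef]
    refine MeasurableSet.inter ?_ (measurable_posCount (measurableSet_singleton _))
    have hCset : {f : ℤ → Bool | ∀ t : ℤ, -(m : ℤ) ≤ t → t < 0 → f t = false}
        = ⋂ t : ℤ, {f : ℤ → Bool | -(m : ℤ) ≤ t → t < 0 → f t = false} := by
      ext f; simp
    rw [hCset]
    exact MeasurableSet.iInter fun t =>
      measurableSet_bool_cond t (fun b => -(m : ℤ) ≤ t → t < 0 → b = false)
  have h := swap_general P I Pn hPn In hpos hstat hconv hI (-((m : ℤ) + 1)) hC
  have eL : {ω | (fun t => I t ω) ∈ C} ∩ {ω | I (-((m : ℤ) + 1)) ω = true}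
      = Bset I m ∩ {ω | SplusFn I ω = (j : ℕ∞)} := by
    ext ω
    simp only [Set.mem_inter_iff, mem_setOf_eq, Bset, hCdef, Set.mem_preimage,
      Set.mem_singleton_iff, posCount_eq_Splus]
    constructor
    · rintro ⟨⟨ha, hc⟩, hb⟩
      exact ⟨⟨ha, by rwa [show -(m : ℤ) - 1 = -((m : ℤ) + 1) by ring]⟩, hc⟩
    · rintro ⟨⟨ha, hb⟩, hc⟩
      exact ⟨⟨ha, hc⟩, by rwa [show -((m : ℤ) + 1) = -(m : ℤ) - 1 by ring]⟩
  have hcount : ∀ ω : Ω, posCount (fun t => I (t - -((m : ℤ) + 1)) ω)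
      = {u : ℤ | (m : ℤ) + 1 < u ∧ I u ω = true}.encard := by
    intro ω
    have hfun : (fun t : ℤ => I (t - -((m : ℤ) + 1)) ω)
        = (fun t : ℤ => I (t + ((m : ℤ) + 1)) ω) := by
      funext t
      have he : t - -((m : ℤ) + 1) = t + ((m : ℤ) + 1) := by ring
      rw [he]
    rw [hfun]
    exact posCount_shift (fun u => I u ω) ((m : ℤ) + 1)
  have eR : {ω | (fun t => I (t - -((m : ℤ) + 1)) ω) ∈ C} ∩ {ω | I (- -((m : ℤ) + 1)) ω = true}
      = Eset I m ∩ {ω | {u : ℤ | (m : ℤ) + 1 < u ∧ I u ω = true}.encard = (j : ℕ∞)} := by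
    ext ω
    simp only [Set.mem_inter_iff, mem_setOf_eq, Eset, hCdef, Set.mem_preimage,
      Set.mem_singleton_iff, hcount ω]
    constructor
    · rintro ⟨⟨ha, hc⟩, hb⟩
      refine ⟨⟨?_, ?_⟩, hc⟩
      · intro u hu1 hu2
        have h2 := ha (u - ((m : ℤ) + 1)) (by omega) (by omega)
        rwa [show u - ((m : ℤ) + 1) - -((m : ℤ) + 1) = u by ring] at h2
      · rwa [show - -((m : ℤ) + 1) = (m : ℤ) + 1 by ring] at hb
    · rintro ⟨⟨ha, hb⟩, hc⟩
      refine ⟨⟨?_, hc⟩, ?_⟩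
      · intro t ht1 ht2
        exact ha (t - -((m : ℤ) + 1)) (by omega) (by omega)
      · rwa [show (m : ℤ) + 1 = - -((m : ℤ) + 1) by ring] at hb
  rw [eL, eR] at h
  exact h

include hI hPn hpos hstat hconv in
lemma theta_eq : P {ω | SminusFn I ω = 0} = P {ω | SplusFn I ω = 0} := by
  have hB := measure_iUnion (μ := P) (Bset_disjoint I) (fun m => measurableSet_Bset I hI m)
  have hE := measure_iUnion (μ := P) (Eset_disjoint I) (fun m => measurableSet_Eset I hI m)
  rw [iUnion_Bset] at hB
  rw [iUnion_Eset] at hE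
  have hne : P {ω | SminusFn I ω ≠ 0} = P {ω | SplusFn I ω ≠ 0} := by
    rw [hB, hE]
    exact tsum_congr fun m => PBE P I hI Pn hPn In hpos hstat hconv m
  have hcm : {ω | SminusFn I ω ≠ 0} = {ω | SminusFn I ω = 0}ᶜ := rfl
  have hcp : {ω | SplusFn I ω ≠ 0} = {ω | SplusFn I ω = 0}ᶜ := rfl
  have em : P {ω | SminusFn I ω = 0} = 1 - P {ω | SminusFn I ω ≠ 0} := by
    rw [hcm, measure_compl (measurableSet_Sminus0 I hI) (measure_ne_top _ _), measure_univ]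
    exact (ENNReal.sub_sub_cancel ENNReal.one_ne_top prob_le_one).symm
  have ep : P {ω | SplusFn I ω = 0} = 1 - P {ω | SplusFn I ω ≠ 0} := by
    have hms : MeasurableSet {ω | SplusFn I ω = 0} :=
      (measurable_Splus I hI) (measurableSet_singleton 0)
    rw [hcp, measure_compl hms (measure_ne_top _ _), measure_univ]
    exact (ENNReal.sub_sub_cancel ENNReal.one_ne_top prob_le_one).symm
  rw [em, ep, hne]

include hI hPn hpos hstat hconv in
lemma key_count (j : ℕ) :
    P ({ω | SplusFn I ω = (j : ℕ∞)} ∩ {ω | SminusFn I ω ≠ 0})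
      = P {ω | SplusFn I ω = ((j + 1 : ℕ) : ℕ∞)} := by
  have hun : (⋃ m, Bset I m ∩ {ω | SplusFn I ω = (j : ℕ∞)})
      = {ω | SplusFn I ω = (j : ℕ∞)} ∩ {ω | SminusFn I ω ≠ 0} := by
    rw [← Set.iUnion_inter, iUnion_Bset]
    exact Set.inter_comm _ _
  have hdisjB : Pairwise (Function.onFun Disjoint
      (fun m => Bset I m ∩ {ω | SplusFn I ω = (j : ℕ∞)})) :=
    fun m m' hmm => ((Bset_disjoint I hmm).mono Set.inter_subset_left Set.inter_subset_left)
  have hdisjE : Pairwise (Function.onFun Disjoint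
      (fun m => Eset I m ∩ {ω | {u : ℤ | (m : ℤ) + 1 < u ∧ I u ω = true}.encard = (j : ℕ∞)})) :=
    fun m m' hmm => ((Eset_disjoint I hmm).mono Set.inter_subset_left Set.inter_subset_left)
  rw [← hun,
    measure_iUnion (μ := P) hdisjB (fun m => (measurableSet_Bset I hI m).inter
      ((measurable_Splus I hI) (measurableSet_singleton _))),
    ← Eset_count I j,
    measure_iUnion (μ := P) hdisjE (fun m => (measurableSet_Eset I hI m).inter
      (measurableSet_count I hI m j))]
  exact tsum_congr fun m => PBE' P I hI Pn hPn In hpos hstat hconv m j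

end Apply

end ClusterAux


/-- Proposition 4.1, Equation (4.5): under Assumption 1, if the extremal index
`θ = P(S₊ⁱ = 0)` is positive, then the typical cluster size pmf
`π_k = P(Sⁱ = k | S₋ⁱ = 0)` satisfies
`π_k = θ⁻¹ · [P(S₊ⁱ = k-1) - P(S₊ⁱ = k)]` for every `k ∈ ℕ`. -/
theorem typical_cluster_size_pmf
    {Ω : Type*} [MeasurableSpace Ω] (P : Measure Ω) [IsProbabilityMeasure P]
    (I : ℤ → Ω → Bool) (hI : ∀ t, Measurable (I t))
    {Ωn : ℕ → Type*} [∀ n, MeasurableSpace (Ωn n)]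
    (Pn : ∀ n, Measure (Ωn n)) (hPn : ∀ n, IsProbabilityMeasure (Pn n))
    (In : ∀ n, ℤ → Ωn n → Bool) (hIn : ∀ n t, Measurable (In n t))
    -- `P(I₀ⁿ = 1) > 0` for all `n`
    (hpos : ∀ n, 0 < Pn n {ω | In n 0 ω = true})
    -- stationarity of each `(Iₜⁿ)ₜ`
    (hstat : ∀ n (F : Finset ℤ) (ε : ℤ → Bool) (k : ℤ),
      Pn n {ω | ∀ t ∈ F, In n t ω = ε t} = Pn n {ω | ∀ t ∈ F, In n (t + k) ω = ε t})
    -- convergence of the conditional finite-dimensional distributions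
    (hconv : ∀ (F : Finset ℤ) (ε : ℤ → Bool),
      Tendsto (fun n =>
          Pn n ({ω | ∀ t ∈ F, In n t ω = ε t} ∩ {ω | In n 0 ω = true})
            / Pn n {ω | In n 0 ω = true}) atTop
        (nhds (P {ω | ∀ t ∈ F, I t ω = ε t})))

    (hθ : 0 < P {ω | SplusFn I ω = 0}) (k : ℕ) (hk : 1 ≤ k) :
    P ({ω | SiFn I ω = ((k : ℕ) : ℕ∞)} ∩ {ω | SminusFn I ω = 0}) / P {ω | SminusFn I ω = 0}
      = (P {ω | SplusFn I ω = 0})⁻¹ *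
        (P {ω | SplusFn I ω = ((k - 1 : ℕ) : ℕ∞)} - P {ω | SplusFn I ω = (k : ℕ∞)}) := by
  classical
  have h1 : P {ω | I 0 ω = true} = 1 := ClusterAux.prob_I0 P I Pn hPn In hpos hconv
  have hm0 : MeasurableSet {ω | I 0 ω = true} := (hI 0) (measurableSet_singleton true)
  have hSm0 : MeasurableSet {ω | SminusFn I ω = 0} := ClusterAux.measurableSet_Sminus0 I hI
  have hfull : ∀ᵐ ω ∂P, I 0 ω = true := by
    rw [MeasureTheory.ae_iff]
    have hc : {ω | ¬ I 0 ω = true} = {ω | I 0 ω = true}ᶜ := rfl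
    rw [hc, measure_compl hm0 (measure_ne_top _ _), measure_univ, h1]
    simp
  have hkk : (k - 1 + 1 : ℕ) = k := by omega
  set A : Set Ω := {ω | SiFn I ω = ((k : ℕ) : ℕ∞)} ∩ {ω | SminusFn I ω = 0} with hA
  set A' : Set Ω := {ω | SplusFn I ω = ((k - 1 : ℕ) : ℕ∞)} ∩ {ω | SminusFn I ω = 0} with hA'
  have hae : A =ᵐ[P] A' := by
    rw [hA, hA']
    rw [Filter.eventuallyEq_set]
    filter_upwards [hfull] with ω h0
    simp only [Set.mem_inter_iff, mem_setOf_eq]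
    have key : SminusFn I ω = 0 →
        (SiFn I ω = ((k : ℕ) : ℕ∞) ↔ SplusFn I ω = ((k - 1 : ℕ) : ℕ∞)) := by
      intro hb
      have hemp : {t : ℤ | t < 0 ∧ I t ω = true} = ∅ := Set.encard_eq_zero.mp hb
      have hins : {t : ℤ | I t ω = true} = insert 0 {t : ℤ | 0 < t ∧ I t ω = true} := by
        ext t
        simp only [mem_setOf_eq, Set.mem_insert_iff]
        constructor
        · intro ht
          rcases lt_trichotomy t 0 with h' | h' | h'
          · exfalso
            have hmem : t ∈ {t : ℤ | t < 0 ∧ I t ω = true} := ⟨h', ht⟩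
            rw [hemp] at hmem
            exact hmem
          · exact Or.inl h'
          · exact Or.inr ⟨h', ht⟩
        · rintro (rfl | ⟨_, ht⟩)
          · exact h0
          · exact ht
      have hSi : SiFn I ω = SplusFn I ω + 1 := by
        rw [SiFn, hins, Set.encard_insert_of_notMem (by simp), SplusFn]
      constructor
      · intro ha
        apply ClusterAux.enat_add_one_cancel (j := k - 1)
        rw [← hSi, ha]
        exact_mod_cast hkk.symm
      · intro ha
        rw [hSi, ha]
        exact_mod_cast hkk
    constructor
    · rintro ⟨ha, hb⟩
      exact ⟨(key hb).mp ha, hb⟩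
    · rintro ⟨ha, hb⟩
      exact ⟨(key hb).mpr ha, hb⟩
  have hnum : P ({ω | SiFn I ω = ((k : ℕ) : ℕ∞)} ∩ {ω | SminusFn I ω = 0})
      = P {ω | SplusFn I ω = ((k - 1 : ℕ) : ℕ∞)} - P {ω | SplusFn I ω = (k : ℕ∞)} := by
    rw [measure_congr hae]
    have hsplit := measure_inter_add_diff (μ := P)
      {ω | SplusFn I ω = ((k - 1 : ℕ) : ℕ∞)} hSm0
    have hdiff : {ω | SplusFn I ω = ((k - 1 : ℕ) : ℕ∞)} \ {ω | SminusFn I ω = 0}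
        = {ω | SplusFn I ω = ((k - 1 : ℕ) : ℕ∞)} ∩ {ω | SminusFn I ω ≠ 0} := rfl
    rw [hdiff, ClusterAux.key_count P I hI Pn hPn In hpos hstat hconv (k - 1)] at hsplit
    rw [hkk] at hsplit
    exact ENNReal.eq_sub_of_add_eq (measure_ne_top _ _) hsplit
  rw [hnum, ClusterAux.theta_eq P I hI Pn hPn In hpos hstat hconv,
    ENNReal.div_eq_inv_mul]
end
end

section
/- Under Assumption 1, if θ := P(S₊ⁱ = 0) > 0, then for every ℓ ∈ ℕ₀ one has P(S₊ⁱ = ℓ) = θ · Σ_{i = ℓ+1}^∞ π_i, where π_i := P(Sⁱ = i | S₋ⁱ = 0); that is, the tail of the typical cluster size satisfies θ · P(Sᵗ ≥ ℓ + 1) = P(S₊ⁱ = ℓ). -/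
/-!
Let `μ` be the law of `(I_t)` on `{0,1}^ℤ`. Under Assumption 1, `x₀ = 1` holds `μ`-a.s. and `μ`
satisfies the time-change formula `μ(θₛ⁻¹A ∩ {xₛ = 1}) = μ(A ∩ {x₋ₛ = 1})` for the shift `θₛ`:
on cylinders inside `{x₀ = x₋ₛ = 1}` it is the stationarity of the prelimit laws, which passes to
the limit, and it extends to all events by uniqueness of measures agreeing on a π-system.

Split `{S₊ = ℓ}` according to the position `-s ≤ 0` of the first `1` of the path; paths with
infinitely many `1`s on the left are negligible by Borel–Cantelli, since the time-change formula
bounds `Σₛ μ(S₊ = ℓ, x₋ₛ = 1)` by the mass of a disjoint union. Shifting by `s` turns a piece into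
`{S₋ = 0, xₛ = 1, exactly ℓ ones after s}`, and these pieces partition `{S₋ = 0, ℓ ≤ S₊ < ∞}`.
Hence `P(S₊ = ℓ) = Σᵢ P(S₋ = 0, S₊ = ℓ + i) = Σᵢ P(S₋ = 0, Sⁱ = ℓ + 1 + i)`. The reflected law
satisfies the same formula, which yields `P(S₊ = 0) = P(S₋ = 0)`.
-/

open MeasureTheory Filter Set ENNReal

noncomputable section

open Function Topology

theorem Set.encard_eq_coe_iff_exists_finset {α : Type*} {s : Set α} {n : ℕ} :
    s.encard = n ↔ ∃ F : Finset α, F.card = n ∧ s = F := by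
  refine ⟨fun h => ?_, ?_⟩
  · have hs := finite_of_encard_eq_coe h
    exact ⟨hs.toFinset, by simpa [hs.encard_eq_coe_toFinset_card] using h, hs.coe_toFinset.symm⟩
  · rintro ⟨F, rfl, rfl⟩
    simp

theorem Finset.exists_card_filter_lt_eq {α : Type*} [LinearOrder α] {j : ℕ} :
    ∀ {A : Finset α}, j < A.card → ∃ s ∈ A, (A.filter (s < ·)).card = j := by
  induction j with
  | zero =>
    intro A hA
    have hne := Finset.card_pos.mp hA
    exact ⟨A.max' hne, A.max'_mem hne, Finset.card_eq_zero.mpr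
      (Finset.filter_eq_empty_iff.mpr fun t ht => not_lt.mpr (A.le_max' t ht))⟩
  | succ j ih =>
    intro A hA
    have hne : A.Nonempty := Finset.card_pos.mp (by omega)
    obtain ⟨s, hs, hcard⟩ := ih (A := A.erase (A.max' hne))
      (by rw [Finset.card_erase_of_mem (A.max'_mem hne)]; omega)
    have hsM : s < A.max' hne :=
      lt_of_le_of_ne (A.le_max' s (Finset.mem_of_mem_erase hs)) (Finset.ne_of_mem_erase hs)
    refine ⟨s, Finset.mem_of_mem_erase hs, ?_⟩
    have hM : A.max' hne ∈ A.filter (s < ·) := Finset.mem_filter.mpr ⟨A.max'_mem hne, hsM⟩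
    rw [Finset.filter_erase, Finset.card_erase_of_mem hM] at hcard
    have := Finset.card_pos.mpr ⟨_, hM⟩
    omega

namespace ClusterIndicator

def ones (x : ℤ → Bool) : Set ℤ := {t | x t = true}

def count (S : Set ℤ) (x : ℤ → Bool) : ℕ∞ := (S ∩ ones x).encard

def shift (k : ℤ) (x : ℤ → Bool) : ℤ → Bool := fun t => x (t + k)

def reflect (x : ℤ → Bool) : ℤ → Bool := fun t => x (-t)

def hitAt (s : ℤ) : Set (ℤ → Bool) := {x | x s = true}

variable {x : ℤ → Bool}

theorem count_shift (S : Set ℤ) (k : ℤ) :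
    count S (shift k x) = count ((· - k) ⁻¹' S) x := by
  have : S ∩ ones (shift k x) = (· + k) ⁻¹' ((· - k) ⁻¹' S ∩ ones x) := by
    ext t; simp [ones, shift]
  rw [count, this, encard_preimage_of_injective_subset_range (add_left_injective k)
    fun t _ => ⟨t - k, sub_add_cancel t k⟩]
  rfl

theorem count_reflect (S : Set ℤ) : count S (reflect x) = count (-S) x := by
  have : S ∩ ones (reflect x) = Neg.neg ⁻¹' (-S ∩ ones x) := by
    ext t; simp [ones, reflect]
  rw [count, this,
    encard_preimage_of_injective_subset_range neg_injective fun t _ => ⟨-t, neg_neg t⟩]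
  rfl

theorem count_Iio_eq_zero {a : ℤ} : count (Iio a) x = 0 ↔ ∀ t < a, x t = false := by
  simp [count, ones, Set.eq_empty_iff_forall_notMem]

theorem count_Ioi_add_one_le {s s' : ℤ} (h : s < s') (hx : x s' = true) :
    count (Ioi s') x + 1 ≤ count (Ioi s) x := by
  rw [count, count, ← encard_insert_of_notMem (by simp : s' ∉ Ioi s' ∩ ones x)]
  refine encard_mono (insert_subset ⟨h, hx⟩ ?_)
  exact inter_subset_inter_left _ (Ioi_subset_Ioi h.le)

theorem encard_ones_eq (h0 : x 0 = true) (hminus : count (Iio 0) x = 0) :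
    (ones x).encard = count (Ioi 0) x + 1 := by
  have : ones x = insert 0 (Ioi 0 ∩ ones x) := by
    ext t
    have := count_Iio_eq_zero.mp hminus t
    rcases lt_trichotomy t 0 with ht | rfl | ht <;> simp_all [ones]
    omega
  rw [count, ← encard_insert_of_notMem (by simp : (0 : ℤ) ∉ Ioi 0 ∩ ones x), ← this]

theorem exists_first_hit (h0 : x 0 = true) (hfin : count (Iio 0) x ≠ ⊤) :
    ∃ s : ℕ, x (-s) = true ∧ count (Iio (-s : ℤ)) x = 0 := by
  obtain ⟨b, hb⟩ := (encard_ne_top_iff.mp hfin).bddBelow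
  obtain ⟨a, ⟨ha0, hxa⟩, hleast⟩ :=
    Int.exists_least_of_bdd (P := fun z => z ≤ 0 ∧ x z = true)
    ⟨min b 0, fun z ⟨hz0, hxz⟩ => by
      rcases hz0.lt_or_eq with hz | rfl
      · exact (min_le_left b 0).trans (hb ⟨hz, hxz⟩)
      · exact min_le_right b 0⟩ ⟨0, le_rfl, h0⟩
  refine ⟨(-a).toNat, by rwa [Int.toNat_of_nonneg (by omega), neg_neg], ?_⟩
  rw [Int.toNat_of_nonneg (by omega), neg_neg, count_Iio_eq_zero]
  intro t ht
  by_contra hxt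
  exact absurd (hleast t ⟨by omega, by simpa using hxt⟩) (by omega)

theorem exists_hit_count_Ioi_eq {k m : ℕ} (h0 : x 0 = true) (hk : count (Ioi 0) x = k)
    (hm : m ≤ k) : ∃ s : ℕ, x s = true ∧ count (Ioi (s : ℤ)) x = m := by
  classical
  obtain ⟨G, hG, hGx⟩ := encard_eq_coe_iff_exists_finset.mp hk
  have hG0 : (0 : ℤ) ∉ G := fun h => by simpa using (Set.ext_iff.mp hGx 0).mpr h
  obtain ⟨s, hs, hcard⟩ := Finset.exists_card_filter_lt_eq (j := m) (A := insert 0 G)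
    (by rw [Finset.card_insert_of_notMem hG0]; omega)
  have hmemG : ∀ t, t ∈ G ↔ 0 < t ∧ x t = true := fun t => (Set.ext_iff.mp hGx t).symm
  have hs0 : 0 ≤ s ∧ x s = true := by
    rcases Finset.mem_insert.mp hs with rfl | hs
    · exact ⟨le_rfl, h0⟩
    · exact ⟨((hmemG s).mp hs).1.le, ((hmemG s).mp hs).2⟩
  refine ⟨s.toNat, by rw [Int.toNat_of_nonneg hs0.1]; exact hs0.2, ?_⟩
  rw [Int.toNat_of_nonneg hs0.1, count, ← hcard, ← Set.encard_coe_eq_coe_finsetCard]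
  congr 1
  ext t
  simp only [mem_inter_iff, mem_Ioi, ones, mem_ofPred_eq, Finset.coe_filter, Finset.mem_insert,
    hmemG]
  constructor
  · rintro ⟨hst, hxt⟩
    exact ⟨Or.inr ⟨by omega, hxt⟩, hst⟩
  · rintro ⟨rfl | ⟨-, hxt⟩, hst⟩
    · omega
    · exact ⟨hst, hxt⟩

theorem exists_count_Ioi_eq_add {a b : ℤ} {m : ℕ} (hab : a ≤ b) (hb : count (Ioi b) x = m) :
    ∃ i : ℕ, count (Ioi a) x = (m + i : ℕ) := by
  have hfin : (Ioi a ∩ ones x).Finite := by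
    refine ((finite_Ioc a b).union (finite_of_encard_eq_coe hb)).subset fun t ⟨hat, hxt⟩ => ?_
    rcases le_or_gt t b with htb | hbt
    · exact Or.inl ⟨hat, htb⟩
    · exact Or.inr ⟨hbt, hxt⟩
  obtain ⟨n, hn⟩ := ENat.ne_top_iff_exists.mp (encard_ne_top_iff.mpr hfin)
  have hmn : m ≤ n := by
    have : (m : ℕ∞) ≤ n := by
      rw [hn, ← hb]
      exact encard_mono (inter_subset_inter_left _ (Ioi_subset_Ioi hab))
    exact_mod_cast this
  exact ⟨n - m, by rw [count, ← hn]; norm_cast; omega⟩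

theorem pairwise_disjoint_hitAt_inter_count_Ioi (m : ℕ) :
    Pairwise (Disjoint on (fun s : ℕ => hitAt s ∩ {x | count (Ioi (s : ℤ)) x = m})) := by
  refine (symm_disjoint.pairwise_on _).mpr fun s s' hss' => ?_
  refine Set.disjoint_left.mpr fun x ⟨_, hs⟩ ⟨hxs', hs'⟩ => ?_
  have := count_Ioi_add_one_le (Int.ofNat_lt.mpr hss') hxs'
  rw [hs, hs'] at this
  have : m + 1 ≤ m := by exact_mod_cast this
  omega

theorem pairwise_disjoint_hitAt_inter_count_Iio :
    Pairwise (Disjoint on (fun s : ℕ => hitAt (-s) ∩ {x | count (Iio (-s : ℤ)) x = 0})) := by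
  refine (symm_disjoint.pairwise_on _).mpr fun s s' hss' => ?_
  refine Set.disjoint_left.mpr fun x ⟨_, hs⟩ ⟨hxs', _⟩ => ?_
  have := count_Iio_eq_zero.mp hs (-s') (by omega)
  simp_all [hitAt]

theorem measurableSet_setOf_apply (t : ℤ) (p : Bool → Prop) :
    MeasurableSet {x : ℤ → Bool | p (x t)} :=
  measurable_pi_apply t MeasurableSet.of_discrete

theorem measurableSet_hitAt (s : ℤ) : MeasurableSet (hitAt s) :=
  measurableSet_setOf_apply s (· = true)

theorem measurable_shift (k : ℤ) : Measurable (shift k) :=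
  measurable_pi_lambda _ fun t => measurable_pi_apply (t + k)

theorem measurable_reflect : Measurable reflect :=
  measurable_pi_lambda _ fun t => measurable_pi_apply (-t)

theorem measurable_count (S : Set ℤ) : Measurable (count S) := by
  have hcoe : ∀ n : ℕ, MeasurableSet {x | count S x = n} := by
    intro n
    have : {x | count S x = n} = ⋃ F : {F : Finset ℤ // F.card = n},
        ⋂ t, {x | t ∈ S ∧ x t = true ↔ t ∈ F.1} := by
      ext x
      simp [count, ones, encard_eq_coe_iff_exists_finset, Set.ext_iff]
    rw [this]
    exact .iUnion fun F => .iInter fun t =>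
      measurableSet_setOf_apply t (fun b => t ∈ S ∧ b = true ↔ t ∈ F.1)
  refine measurable_to_countable' fun k => ?_
  induction k using ENat.recTopCoe with
  | top =>
    have : count S ⁻¹' {⊤} = (⋃ n : ℕ, {x | count S x = n})ᶜ := by
      ext x
      simp only [mem_preimage, mem_singleton_iff, mem_compl_iff, mem_iUnion, mem_ofPred_eq,
        not_exists]
      generalize count S x = c
      induction c using ENat.recTopCoe <;> simp
    rw [this]
    exact (MeasurableSet.iUnion hcoe).compl
  | coe n => exact hcoe n

theorem measurableSet_count_eq (S : Set ℤ) (k : ℕ∞) : MeasurableSet {x | count S x = k} :=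
  measurable_count S (measurableSet_singleton k)

theorem shift_preimage_count_Ioi (k a : ℤ) (n : ℕ∞) :
    shift k ⁻¹' {x | count (Ioi a) x = n} = {x | count (Ioi (a + k)) x = n} := by
  ext x
  simp [count_shift, preimage_sub_const_Ioi]

theorem shift_preimage_count_Iio (k a : ℤ) (n : ℕ∞) :
    shift k ⁻¹' {x | count (Iio a) x = n} = {x | count (Iio (a + k)) x = n} := by
  ext x
  simp [count_shift, preimage_sub_const_Iio]

theorem shift_preimage_hitAt (k a : ℤ) : shift k ⁻¹' hitAt a = hitAt (a + k) := rfl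

def cyl (F : Finset ℤ) (ε : ℤ → Bool) : Set (ℤ → Bool) := {x | ∀ t ∈ F, x t = ε t}

def cylinders : Set (Set (ℤ → Bool)) := {C | ∃ F ε, C = cyl F ε}

theorem measurableSet_cyl (F : Finset ℤ) (ε : ℤ → Bool) : MeasurableSet (cyl F ε) := by
  simp only [cyl, ofPred_forall]
  exact .biInter F.countable_toSet fun t _ => measurableSet_setOf_apply t (· = ε t)

theorem shift_preimage_cyl (k : ℤ) (F : Finset ℤ) (ε : ℤ → Bool) :
    shift k ⁻¹' cyl F ε = cyl (F.image (· + k)) (fun u => ε (u - k)) := by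
  ext x
  simp only [cyl, shift, mem_preimage, mem_ofPred_eq, Finset.forall_mem_image,
    add_sub_cancel_right]

theorem isPiSystem_cylinders : IsPiSystem cylinders := by
  rintro _ ⟨F, ε, rfl⟩ _ ⟨G, δ, rfl⟩ ⟨y, hyF, hyG⟩
  refine ⟨F ∪ G, y, Set.ext fun x => ?_⟩
  simp only [cyl, mem_inter_iff, mem_ofPred_eq, Finset.mem_union, or_imp, forall_and]
  constructor
  · rintro ⟨hF, hG⟩
    exact ⟨fun t ht => (hF t ht).trans (hyF t ht).symm,
      fun t ht => (hG t ht).trans (hyG t ht).symm⟩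
  · rintro ⟨hF, hG⟩
    exact ⟨fun t ht => (hF t ht).trans (hyF t ht), fun t ht => (hG t ht).trans (hyG t ht)⟩

theorem generateFrom_cylinders : MeasurableSpace.generateFrom cylinders = MeasurableSpace.pi := by
  refine le_antisymm (MeasurableSpace.generateFrom_le ?_) ?_
  · rintro _ ⟨F, ε, rfl⟩
    exact measurableSet_cyl F ε
  · refine iSup_le fun t => Measurable.comap_le ?_
    refine @measurable_to_countable' Bool (ℤ → Bool) _ _ (.generateFrom cylinders)
      (fun x => x t) fun b => ?_
    exact MeasurableSpace.measurableSet_generateFrom ⟨{t}, fun _ => b, by ext; simp [cyl]⟩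

theorem measurableSet_of_mem_cylinders {C : Set (ℤ → Bool)} (hC : C ∈ cylinders) :
    MeasurableSet C := by
  obtain ⟨F, ε, rfl⟩ := hC
  exact measurableSet_cyl F ε

theorem shift_preimage_mem_cylinders (s : ℤ) {C : Set (ℤ → Bool)} (hC : C ∈ cylinders) :
    shift s ⁻¹' C ∈ cylinders := by
  obtain ⟨F, ε, rfl⟩ := hC
  exact ⟨_, _, shift_preimage_cyl s F ε⟩

theorem hitAt_inter_hitAt_mem_cylinders (a b : ℤ) : hitAt a ∩ hitAt b ∈ cylinders :=
  ⟨{a, b}, fun _ => true, by ext; simp [cyl, hitAt]⟩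

theorem univ_mem_cylinders : (univ : Set (ℤ → Bool)) ∈ cylinders :=
  ⟨∅, fun _ => true, by ext; simp [cyl]⟩

theorem reflect_preimage_shift_preimage (s : ℤ) (A : Set (ℤ → Bool)) :
    reflect ⁻¹' (shift s ⁻¹' A) = shift (-s) ⁻¹' (reflect ⁻¹' A) := by
  have : shift s ∘ reflect = reflect ∘ shift (-s) := by
    funext x t
    simp [reflect, shift, add_comm]
  rw [← preimage_comp, ← preimage_comp, this]

theorem reflect_preimage_hitAt (s : ℤ) : reflect ⁻¹' hitAt s = hitAt (-s) := rfl

theorem reflect_preimage_count (S : Set ℤ) (n : ℕ∞) :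
    reflect ⁻¹' {x | count S x = n} = {x | count (-S) x = n} := by
  ext x
  simp [count_reflect]

theorem pairwise_disjoint_inter_count_eq_add (A : Set (ℤ → Bool)) (S : Set ℤ) (m : ℕ) :
    Pairwise (Disjoint on (fun i : ℕ => A ∩ {x | count S x = (m + i : ℕ)})) := by
  refine fun i j hij => Set.disjoint_left.mpr fun x ⟨_, hi⟩ ⟨_, hj⟩ => hij ?_
  have : m + i = m + j := by exact_mod_cast hi.symm.trans hj
  omega

/-- Laws of a `{0,1}`-valued process seen from a typical `1`, as the tail process of a cluster. -/
structure IsPalmLaw (μ : Measure (ℤ → Bool)) : Prop where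
  ae_eq_true_zero : ∀ᵐ x ∂μ, x 0 = true
  time_change : ∀ (s : ℤ) {A : Set (ℤ → Bool)}, MeasurableSet A →
    μ (shift s ⁻¹' A ∩ hitAt s) = μ (A ∩ hitAt (-s))

namespace IsPalmLaw

variable {μ : Measure (ℤ → Bool)} (h : IsPalmLaw μ)
include h

theorem map_reflect : IsPalmLaw (μ.map reflect) where
  ae_eq_true_zero := (ae_map_iff measurable_reflect.aemeasurable (measurableSet_hitAt 0)).mpr <| by
    simpa [reflect] using h.ae_eq_true_zero
  time_change s A hA := by
    rw [Measure.map_apply measurable_reflect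
        ((measurable_shift s hA).inter (measurableSet_hitAt s)),
      Measure.map_apply measurable_reflect (hA.inter (measurableSet_hitAt (-s))), preimage_inter,
      preimage_inter, reflect_preimage_shift_preimage, reflect_preimage_hitAt,
      reflect_preimage_hitAt]
    simpa only [neg_neg] using h.time_change (-s) (measurable_reflect hA)

theorem ae_count_Iio_ne_top [IsFiniteMeasure μ] :
    ∀ᵐ x ∂μ, count (Ioi 0) x ≠ ⊤ → count (Iio 0) x ≠ ⊤ := by
  have hm : ∀ m : ℕ, ∀ᵐ x ∂μ, count (Ioi 0) x = m → count (Iio 0) x ≠ ⊤ := by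
    intro m
    set A := {x | count (Ioi 0) x = m}
    have hsum : ∑' s : ℕ, μ (A ∩ hitAt (-s)) ≠ ⊤ := by
      have : ∀ s : ℕ,
          μ (A ∩ hitAt (-s)) = μ (hitAt s ∩ {x | count (Ioi (s : ℤ)) x = m}) := by
        intro s
        rw [← h.time_change s (measurableSet_count_eq _ _), shift_preimage_count_Ioi, zero_add,
          inter_comm]
      simp_rw [this]
      rw [← measure_iUnion (pairwise_disjoint_hitAt_inter_count_Ioi m)
        fun s => (measurableSet_hitAt _).inter (measurableSet_count_eq _ _)]
      exact measure_ne_top μ _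
    filter_upwards [ae_finite_setOfPred_mem hsum] with x hfin hx
    refine encard_ne_top_iff.mpr <|
      (hfin.image fun s : ℕ => -(s : ℤ)).subset fun t ⟨ht, hxt⟩ => ?_
    have hcast : ((-t).toNat : ℤ) = -t := Int.toNat_of_nonneg (by linarith [mem_Iio.mp ht])
    exact ⟨(-t).toNat, ⟨hx, by simpa [hitAt, ones, hcast] using hxt⟩, by simp [hcast]⟩
  filter_upwards [ae_all_iff.mpr hm] with x hx hfin
  obtain ⟨m, hm⟩ := ENat.ne_top_iff_exists.mp hfin
  exact hx m hm.symm

theorem measure_count_Ioi_eq_tsum_first_hit [IsFiniteMeasure μ] (m : ℕ) :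
    μ {x | count (Ioi 0) x = m} = ∑' s : ℕ,
      μ ({x | count (Ioi 0) x = m} ∩ (hitAt (-s) ∩ {x | count (Iio (-s : ℤ)) x = 0})) := by
  rw [← measure_iUnion (fun i j hij => (pairwise_disjoint_hitAt_inter_count_Iio hij).mono
      inter_subset_right inter_subset_right)
    fun s => (measurableSet_count_eq _ _).inter ((measurableSet_hitAt _).inter
      (measurableSet_count_eq _ _)), ← inter_iUnion]
  refine measure_congr (eventuallyEq_set.mpr ?_)
  filter_upwards [h.ae_eq_true_zero, h.ae_count_Iio_ne_top] with x h0 hfin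
  refine ⟨fun hm => ⟨hm, mem_iUnion.mpr ?_⟩, fun hx => hx.1⟩
  exact exists_first_hit h0 (hfin (by rw [mem_ofPred_eq.mp hm]; exact ENat.natCast_ne_top m))

theorem measure_first_hit_eq (m s : ℕ) :
    μ ({x | count (Ioi 0) x = m} ∩ (hitAt (-s) ∩ {x | count (Iio (-s : ℤ)) x = 0})) =
      μ ({x | count (Iio 0) x = 0} ∩ (hitAt s ∩ {x | count (Ioi (s : ℤ)) x = m})) := by
  have := h.time_change (-s) ((measurableSet_count_eq (Iio 0) 0).inter
    (measurableSet_count_eq (Ioi (s : ℤ)) m))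
  rw [preimage_inter, shift_preimage_count_Iio, shift_preimage_count_Ioi, neg_neg, zero_add,
    add_neg_cancel] at this
  convert this using 1 <;> congr 1 <;> ext x <;> simp only [mem_inter_iff] <;> tauto

theorem tsum_measure_hit_count_Ioi_eq (m : ℕ) :
    ∑' s : ℕ, μ ({x | count (Iio 0) x = 0} ∩ (hitAt s ∩ {x | count (Ioi (s : ℤ)) x = m}))
      =
      ∑' i : ℕ, μ ({x | count (Iio 0) x = 0} ∩ {x | count (Ioi 0) x = (m + i : ℕ)}) := by
  rw [← measure_iUnion (fun i j hij => (pairwise_disjoint_hitAt_inter_count_Ioi m hij).mono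
      inter_subset_right inter_subset_right)
    fun s => (measurableSet_count_eq _ _).inter ((measurableSet_hitAt _).inter
      (measurableSet_count_eq _ _)),
    ← measure_iUnion (pairwise_disjoint_inter_count_eq_add _ _ m)
      fun i => (measurableSet_count_eq _ _).inter (measurableSet_count_eq _ _),
    ← inter_iUnion, ← inter_iUnion]
  refine measure_congr (eventuallyEq_set.mpr ?_)
  filter_upwards [h.ae_eq_true_zero] with x h0
  simp only [mem_inter_iff, mem_iUnion]
  refine and_congr_right fun _ => ⟨fun ⟨s, _, hs⟩ => ?_, fun ⟨i, hi⟩ => ?_⟩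
  · exact exists_count_Ioi_eq_add (Int.natCast_nonneg s) hs
  · exact exists_hit_count_Ioi_eq h0 hi (Nat.le_add_right m i)

theorem measure_count_Ioi_eq_tsum [IsFiniteMeasure μ] (m : ℕ) :
    μ {x | count (Ioi 0) x = m} =
      ∑' i : ℕ, μ ({x | count (Iio 0) x = 0} ∩ {x | count (Ioi 0) x = (m + i : ℕ)}) := by
  rw [h.measure_count_Ioi_eq_tsum_first_hit, ← h.tsum_measure_hit_count_Ioi_eq]
  exact tsum_congr (h.measure_first_hit_eq m)

theorem measure_count_Ioi_eq_zero_le [IsFiniteMeasure μ] :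
    μ {x | count (Ioi 0) x = 0} ≤ μ {x | count (Iio 0) x = 0} :=
  calc μ {x | count (Ioi 0) x = 0}
      = ∑' i : ℕ, μ ({x | count (Iio 0) x = 0} ∩ {x | count (Ioi 0) x = (0 + i : ℕ)}) := by
        simpa using h.measure_count_Ioi_eq_tsum 0
    _ ≤ μ (⋃ i : ℕ, {x | count (Iio 0) x = 0} ∩ {x | count (Ioi 0) x = (0 + i : ℕ)}) :=
        tsum_meas_le_meas_iUnion_of_disjoint μ
          (fun i => (measurableSet_count_eq _ _).inter (measurableSet_count_eq _ _))
          (pairwise_disjoint_inter_count_eq_add _ _ 0)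
    _ ≤ μ {x | count (Iio 0) x = 0} := measure_mono (iUnion_subset fun _ => inter_subset_left)

theorem measure_count_Ioi_eq_zero [IsFiniteMeasure μ] :
    μ {x | count (Ioi 0) x = 0} = μ {x | count (Iio 0) x = 0} := by
  refine le_antisymm h.measure_count_Ioi_eq_zero_le ?_
  have := h.map_reflect.measure_count_Ioi_eq_zero_le
  rwa [Measure.map_apply measurable_reflect (measurableSet_count_eq _ _),
    Measure.map_apply measurable_reflect (measurableSet_count_eq _ _), reflect_preimage_count,
    reflect_preimage_count, neg_Ioi, neg_Iio, neg_zero] at this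

theorem measure_encard_ones_eq_add_one (k : ℕ∞) :
    μ ({x | (ones x).encard = k + 1} ∩ {x | count (Iio 0) x = 0}) =
      μ ({x | count (Iio 0) x = 0} ∩ {x | count (Ioi 0) x = k}) := by
  refine measure_congr (eventuallyEq_set.mpr ?_)
  filter_upwards [h.ae_eq_true_zero] with x h0
  simp only [mem_inter_iff, mem_ofPred_eq]
  constructor
  · rintro ⟨hk, hminus⟩
    rw [encard_ones_eq h0 hminus] at hk
    exact ⟨hminus, (WithTop.add_right_inj ENat.one_ne_top).mp hk⟩
  · rintro ⟨hminus, hk⟩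
    exact ⟨by rw [encard_ones_eq h0 hminus, hk], hminus⟩

theorem measure_count_Ioi_eq [IsFiniteMeasure μ] (hθ : μ {x | count (Ioi 0) x = 0} ≠ 0)
    (l : ℕ) :
    μ {x | count (Ioi 0) x = l} = μ {x | count (Ioi 0) x = 0} *
      ∑' i : ℕ, μ ({x | (ones x).encard = (l + 1 + i : ℕ)} ∩ {x | count (Iio 0) x = 0}) /
        μ {x | count (Iio 0) x = 0} := by
  have hterm : ∀ i : ℕ,
      μ ({x | (ones x).encard = (l + 1 + i : ℕ)} ∩ {x | count (Iio 0) x = 0}) =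
      μ ({x | count (Iio 0) x = 0} ∩ {x | count (Ioi 0) x = (l + i : ℕ)}) := fun i => by
    rw [← h.measure_encard_ones_eq_add_one]
    push_cast
    ring_nf
  rw [h.measure_count_Ioi_eq_zero] at hθ ⊢
  simp_rw [div_eq_mul_inv, ENNReal.tsum_mul_right, hterm, ← div_eq_mul_inv,
    ENNReal.mul_div_cancel hθ (measure_ne_top μ _)]
  exact h.measure_count_Ioi_eq_tsum l

end IsPalmLaw

section LimitOfStationary

variable {Ωn : ℕ → Type*} [∀ n, MeasurableSpace (Ωn n)] {Pn : ∀ n, Measure (Ωn n)}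
  {In : ∀ n, ℤ → Ωn n → Bool} {μ : Measure (ℤ → Bool)}
  (hfin : ∀ n, Pn n {ω | In n 0 ω = true} ≠ ∞)
  (hpos : ∀ n, 0 < Pn n {ω | In n 0 ω = true})
  (hstat : ∀ n (F : Finset ℤ) (ε : ℤ → Bool) (k : ℤ),
    Pn n {ω | ∀ t ∈ F, In n t ω = ε t} = Pn n {ω | ∀ t ∈ F, In n (t + k) ω = ε t})
  (hconv : ∀ (F : Finset ℤ) (ε : ℤ → Bool),
    Tendsto (fun n => Pn n ({ω | ∀ t ∈ F, In n t ω = ε t} ∩ {ω | In n 0 ω = true})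
      / Pn n {ω | In n 0 ω = true}) atTop (𝓝 (μ (cyl F ε))))
include hconv

include hfin hpos in
theorem measure_hitAt_zero_of_tendsto : μ (hitAt 0) = 1 := by
  have hcyl : cyl {0} (fun _ => true) = hitAt 0 := by ext; simp [cyl, hitAt]
  rw [← hcyl]
  refine tendsto_nhds_unique (hconv {0} fun _ => true) (tendsto_const_nhds.congr fun n => ?_)
  simp only [Finset.mem_singleton, forall_eq, inter_self]
  exact (ENNReal.div_self (hpos n).ne' (hfin n)).symm

include hstat in
theorem measure_shift_preimage_eq_of_tendsto {C : Set (ℤ → Bool)} (s : ℤ)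
    (hC : C ∈ cylinders) (h0 : C ⊆ hitAt 0) (hs : shift s ⁻¹' C ⊆ hitAt 0) :
    μ (shift s ⁻¹' C) = μ C := by
  have hconv' : ∀ D ∈ cylinders, D ⊆ hitAt 0 → Tendsto (fun n =>
      Pn n ((fun ω t => In n t ω) ⁻¹' D) / Pn n {ω | In n 0 ω = true})
      atTop (𝓝 (μ D)) := by
    rintro _ ⟨F, ε, rfl⟩ hD
    have h := hconv F ε
    change Tendsto (fun n =>
      Pn n ((fun ω t => In n t ω) ⁻¹' (cyl F ε ∩ hitAt 0)) / _) _ _ at h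
    rwa [inter_eq_left.mpr hD] at h
  refine tendsto_nhds_unique (hconv' _ (shift_preimage_mem_cylinders s hC) hs)
    ((hconv' C hC h0).congr fun n => ?_)
  obtain ⟨F, ε, rfl⟩ := hC
  change Pn n {ω | ∀ t ∈ F, In n t ω = ε t} / _ =
    Pn n {ω | ∀ t ∈ F, In n (t + s) ω = ε t} / _
  rw [hstat n F ε s]

include hfin hpos hstat in
theorem isPalmLaw_of_tendsto [IsProbabilityMeasure μ] : IsPalmLaw μ := by
  have hnull : μ (hitAt 0)ᶜ = 0 := (prob_compl_eq_zero_iff (measurableSet_hitAt 0)).mpr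
    (measure_hitAt_zero_of_tendsto hfin hpos hconv)
  refine ⟨measure_eq_zero_iff_ae_notMem.mp hnull |>.mono fun x hx => by simpa [hitAt] using hx,
    fun s A hA => ?_⟩
  have hcyl : ∀ C ∈ cylinders, μ (shift s ⁻¹' C ∩ hitAt s) = μ (C ∩ hitAt (-s)) := by
    intro C hC
    -- As `x 0 = 1` a.s., the two sides are the masses of `shift s ⁻¹' D` and `D`, both inside
    -- `{x 0 = 1}`, where conditioning on `x 0 = 1` does not interfere with stationarity.
    set D := C ∩ (hitAt 0 ∩ hitAt (-s))
    have hL : μ (shift s ⁻¹' C ∩ hitAt s) = μ (shift s ⁻¹' D) := by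
      rw [← measure_inter_conull hnull]
      congr 1
      simp only [D, preimage_inter, shift_preimage_hitAt, zero_add, neg_add_cancel]
      exact inter_assoc _ _ _
    have hR : μ (C ∩ hitAt (-s)) = μ D := by
      rw [← measure_inter_conull hnull, inter_assoc, inter_comm (hitAt (-s))]
    rw [hL, hR]
    rcases D.eq_empty_or_nonempty with hD | hD
    · rw [hD, preimage_empty]
    refine measure_shift_preimage_eq_of_tendsto hstat hconv s
      (isPiSystem_cylinders _ hC _ (hitAt_inter_hitAt_mem_cylinders 0 (-s)) hD)
      (inter_subset_right.trans inter_subset_left) ?_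
    exact (preimage_mono (inter_subset_right.trans inter_subset_right)).trans (by
      rw [shift_preimage_hitAt, neg_add_cancel])
  have hmap : ∀ B, MeasurableSet B →
      (μ.restrict (hitAt s)).map (shift s) B = μ (shift s ⁻¹' B ∩ hitAt s) := fun B hB => by
    rw [Measure.map_apply (measurable_shift s) hB, Measure.restrict_apply' (measurableSet_hitAt s)]
  have hagree : ∀ C ∈ cylinders,
      (μ.restrict (hitAt s)).map (shift s) C = μ.restrict (hitAt (-s)) C := fun C hC => by
    rw [hmap C (measurableSet_of_mem_cylinders hC), Measure.restrict_apply' (measurableSet_hitAt _)]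
    exact hcyl C hC
  have hν : (μ.restrict (hitAt s)).map (shift s) = μ.restrict (hitAt (-s)) :=
    ext_of_generate_finite cylinders generateFrom_cylinders.symm isPiSystem_cylinders hagree
      (hagree univ univ_mem_cylinders)
  rw [← hmap A hA, hν, Measure.restrict_apply' (measurableSet_hitAt _)]

end LimitOfStationary

end ClusterIndicator

open ClusterIndicator

theorem forward_size_from_typical_cluster_general
    {Ω : Type*} [MeasurableSpace Ω] (P : Measure Ω) [IsProbabilityMeasure P]
    (I : ℤ → Ω → Bool) (hI : ∀ t, Measurable (I t))
    {Ωn : ℕ → Type*} [∀ n, MeasurableSpace (Ωn n)]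
    (Pn : ∀ n, Measure (Ωn n)) (hPn : ∀ n, IsProbabilityMeasure (Pn n))
    (In : ∀ n, ℤ → Ωn n → Bool)
    -- `P(I₀ⁿ = 1) > 0` for all `n`
    (hpos : ∀ n, 0 < Pn n {ω | In n 0 ω = true})
    -- stationarity of each `(Iₜⁿ)ₜ`
    (hstat : ∀ n (F : Finset ℤ) (ε : ℤ → Bool) (k : ℤ),
      Pn n {ω | ∀ t ∈ F, In n t ω = ε t} = Pn n {ω | ∀ t ∈ F, In n (t + k) ω = ε t})
    -- convergence of the conditional finite-dimensional distributions
    (hconv : ∀ (F : Finset ℤ) (ε : ℤ → Bool),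
      Tendsto (fun n =>
          Pn n ({ω | ∀ t ∈ F, In n t ω = ε t} ∩ {ω | In n 0 ω = true})
            / Pn n {ω | In n 0 ω = true}) atTop
        (nhds (P {ω | ∀ t ∈ F, I t ω = ε t})))

    (hθ : 0 < P {ω | SplusFn I ω = 0}) (l : ℕ) :
    P {ω | SplusFn I ω = (l : ℕ∞)}
      = (P {ω | SplusFn I ω = 0}) * ∑' i : ℕ, P ({ω | SiFn I ω = ((l + 1 + i : ℕ) : ℕ∞)} ∩ {ω | SminusFn I ω = 0}) / P {ω | SminusFn I ω = 0} := by
  set φ : Ω → ℤ → Bool := fun ω t => I t ω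
  have hφ : Measurable φ := measurable_pi_lambda _ hI
  have : IsProbabilityMeasure (P.map φ) := Measure.isProbabilityMeasure_map hφ.aemeasurable
  have hpalm : IsPalmLaw (P.map φ) := by
    refine isPalmLaw_of_tendsto (fun n => have := hPn n; measure_ne_top _ _) hpos hstat
      fun F ε => ?_
    rw [Measure.map_apply hφ (measurableSet_cyl F ε)]
    exact hconv F ε
  have hplus : ∀ k : ℕ∞, P {ω | SplusFn I ω = k} = P.map φ {x | count (Ioi 0) x = k} :=
    fun k => (Measure.map_apply hφ (measurableSet_count_eq _ k)).symm
  have hminus : P {ω | SminusFn I ω = 0} = P.map φ {x | count (Iio 0) x = 0} :=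
    (Measure.map_apply hφ (measurableSet_count_eq _ 0)).symm
  have htotal : ∀ k : ℕ∞, P ({ω | SiFn I ω = k} ∩ {ω | SminusFn I ω = 0}) =
      P.map φ ({x | (ones x).encard = k} ∩ {x | count (Iio 0) x = 0}) := fun k =>
    (Measure.map_apply hφ ((show MeasurableSet {x : ℤ → Bool | (ones x).encard = k} by
      simpa [count] using measurableSet_count_eq univ k).inter (measurableSet_count_eq _ 0))).symm
  simp only [hplus, hminus, htotal] at hθ ⊢
  exact hpalm.measure_count_Ioi_eq hθ.ne' l

/-- Proposition 4.1, Equation (4.6): under Assumption 1, if `θ = P(S₊ⁱ = 0) > 0`,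
then for every `ℓ ∈ ℕ₀`, `P(S₊ⁱ = ℓ) = θ · Σ_{i = ℓ+1}^∞ π_i`, i.e. the tail of
the typical cluster size satisfies `θ · P(Sᵗ ≥ ℓ + 1) = P(S₊ⁱ = ℓ)`. -/
theorem forward_size_from_typical_cluster
    {Ω : Type*} [MeasurableSpace Ω] (P : Measure Ω) [IsProbabilityMeasure P]
    (I : ℤ → Ω → Bool) (hI : ∀ t, Measurable (I t))
    {Ωn : ℕ → Type*} [∀ n, MeasurableSpace (Ωn n)]
    (Pn : ∀ n, Measure (Ωn n)) (hPn : ∀ n, IsProbabilityMeasure (Pn n))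
    (In : ∀ n, ℤ → Ωn n → Bool) (hIn : ∀ n t, Measurable (In n t))
    -- `P(I₀ⁿ = 1) > 0` for all `n`
    (hpos : ∀ n, 0 < Pn n {ω | In n 0 ω = true})
    -- stationarity of each `(Iₜⁿ)ₜ`
    (hstat : ∀ n (F : Finset ℤ) (ε : ℤ → Bool) (k : ℤ),
      Pn n {ω | ∀ t ∈ F, In n t ω = ε t} = Pn n {ω | ∀ t ∈ F, In n (t + k) ω = ε t})
    -- convergence of the conditional finite-dimensional distributions
    (hconv : ∀ (F : Finset ℤ) (ε : ℤ → Bool),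
      Tendsto (fun n =>
          Pn n ({ω | ∀ t ∈ F, In n t ω = ε t} ∩ {ω | In n 0 ω = true})
            / Pn n {ω | In n 0 ω = true}) atTop
        (nhds (P {ω | ∀ t ∈ F, I t ω = ε t})))

    (hθ : 0 < P {ω | SplusFn I ω = 0}) (l : ℕ) :
    P {ω | SplusFn I ω = (l : ℕ∞)}
      = (P {ω | SplusFn I ω = 0}) * ∑' i : ℕ, P ({ω | SiFn I ω = ((l + 1 + i : ℕ) : ℕ∞)} ∩ {ω | SminusFn I ω = 0}) / P {ω | SminusFn I ω = 0} :=
  forward_size_from_typical_cluster_general P I hI Pn hPn In hpos hstat hconv hθ l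
end
end

section
/- Under Assumption 1, the following three statements are equivalent: (i) θ := P(S₊ⁱ = 0) = 0; (ii) P(S₊ⁱ = ∞) = 1 (equivalently, P(S₋ⁱ = ∞) = 1); (iii) P(Sⁱ = ∞) = 1. -/
/-!
Conditioning on `I₀ = 1` and splitting according to the last time `s ≥ 0` with `Iₛ = 1`, the
time-change formula `P((Iₜ)_{t ∈ G} = ε) = P((Iₜ₋ₛ)_{t ∈ G} = ε)` for cylinders fixing
`I₀ = Iₛ = 1`, inherited from the stationarity of the approximating processes, gives
`P(S₊ⁱ < ∞) = Σ_{s ≥ 0} P(I₋ₛ = 1, S₊ⁱ = 0)`. So `θ = 0` forces `S₊ⁱ = ∞` almost surely, and since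
the series is finite, Borel–Cantelli shows that `S₊ⁱ = 0` and `S₋ⁱ = ∞` almost never happen
together. Applying both facts also to the time-reversed process links (i), (ii) and (iii).
-/

open MeasureTheory Filter Set ENNReal

noncomputable section

section

variable {Ω : Type*}

section ClusterSize

variable (I : ℤ → Ω → Bool) (ω : Ω)

theorem sminusFn_eq_splusFn_neg : SminusFn I ω = SplusFn (fun t => I (-t)) ω := by
  have : {t : ℤ | t < 0 ∧ I t ω = true} = Neg.neg '' {t | 0 < t ∧ I (-t) ω = true} := by
    ext t; simp [Set.image_neg_eq_neg]
  rw [SminusFn, SplusFn, this, neg_injective.encard_image]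

theorem sminusFn_neg : SminusFn (fun t => I (-t)) ω = SplusFn I ω := by
  simp only [sminusFn_eq_splusFn_neg, neg_neg]

theorem splusFn_eq_zero_iff : SplusFn I ω = 0 ↔ ∀ t, 0 < t → I t ω = false := by
  simp [SplusFn, Set.eq_empty_iff_forall_notMem]

theorem splusFn_eq_top_iff_frequently :
    SplusFn I ω = ⊤ ↔ ∃ᶠ s : ℕ in atTop, I s ω = true := by
  rw [SplusFn, encard_eq_top_iff, frequently_atTop]
  constructor
  · intro hinf N
    by_contra! hN
    refine hinf ((finite_Ioo (0 : ℤ) N).subset fun t ⟨ht, hIt⟩ => ⟨ht, ?_⟩)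
    by_contra! hNt
    lift t to ℕ using ht.le
    simp [hN t (by omega)] at hIt
  · rintro hfreq hfin
    obtain ⟨M, hM⟩ := hfin.bddAbove
    obtain ⟨s, hs, hIs⟩ := hfreq (M.toNat + 1)
    have := hM ⟨by omega, hIs⟩
    omega

theorem sminusFn_eq_top_iff_frequently :
    SminusFn I ω = ⊤ ↔ ∃ᶠ s : ℕ in atTop, I (-s) ω = true := by
  rw [sminusFn_eq_splusFn_neg, splusFn_eq_top_iff_frequently]

theorem siFn_eq_top_iff : SiFn I ω = ⊤ ↔ SplusFn I ω = ⊤ ∨ SminusFn I ω = ⊤ := by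
  simp only [SiFn, SplusFn, SminusFn, encard_eq_top_iff]
  constructor
  · intro hinf
    by_contra! hfin
    refine hinf (((hfin.1.union hfin.2).union (finite_singleton 0)).subset fun t ht => ?_)
    rcases lt_trichotomy t 0 with h | rfl | h
    · exact .inl (.inr ⟨h, ht⟩)
    · exact .inr rfl
    · exact .inl (.inl ⟨h, ht⟩)
  · rintro (h | h) <;> exact h.mono fun t ht => ht.2

end ClusterSize

open Classical in
theorem exists_last_of_eventually_not {p : ℤ → Prop} (h0 : p 0) (hev : ∀ᶠ n : ℕ in atTop, ¬p n) :
    ∃ s : ℕ, p s ∧ ∀ t : ℤ, s < t → ¬p t := by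
  obtain ⟨N, hN⟩ := eventually_atTop.1 hev
  refine ⟨Nat.findGreatest (fun n => p n) N,
    Nat.findGreatest_spec (P := fun n : ℕ => p n) (Nat.zero_le N) h0, fun t ht => ?_⟩
  lift t to ℕ using by omega
  rcases le_or_gt t N with htN | htN
  · exact Nat.findGreatest_is_greatest (by exact_mod_cast ht) htN
  · exact hN t htN.le

section Measurability

variable [MeasurableSpace Ω] {I : ℤ → Ω → Bool}

theorem measurableSet_forall_mem (hI : ∀ t, Measurable (I t)) (G : Set ℤ) (ε : ℤ → Bool) :
    MeasurableSet {ω | ∀ t ∈ G, I t ω = ε t} := by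
  have : {ω | ∀ t ∈ G, I t ω = ε t} = ⋂ t ∈ G, {ω | I t ω = ε t} := by ext; simp
  exact this ▸ .biInter G.to_countable fun t _ => hI t (measurableSet_singleton _)

theorem measurableSet_splusFn_eq_top (hI : ∀ t, Measurable (I t)) :
    MeasurableSet {ω | SplusFn I ω = ⊤} := by
  have : {ω | SplusFn I ω = ⊤} = limsup (fun s : ℕ => {ω | I s ω = true}) atTop := by
    ext ω; simp [splusFn_eq_top_iff_frequently, mem_limsup_iff_frequently_mem]
  exact this ▸ MeasurableSet.measurableSet_limsup fun s => hI s (measurableSet_singleton true)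

theorem measurableSet_sminusFn_eq_top (hI : ∀ t, Measurable (I t)) :
    MeasurableSet {ω | SminusFn I ω = ⊤} := by
  simpa only [sminusFn_eq_splusFn_neg] using measurableSet_splusFn_eq_top fun t => hI (-t)

theorem measurableSet_siFn_eq_top (hI : ∀ t, Measurable (I t)) :
    MeasurableSet {ω | SiFn I ω = ⊤} := by
  simp only [siFn_eq_top_iff, ofPred_or]
  exact (measurableSet_splusFn_eq_top hI).union (measurableSet_sminusFn_eq_top hI)

end Measurability

open Classical in
theorem measure_forall_mem_eq_iInf [MeasurableSpace Ω] (P : Measure Ω) [IsFiniteMeasure P]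
    {I : ℤ → Ω → Bool} (hI : ∀ t, Measurable (I t)) (G : Set ℤ) (ε : ℤ → Bool) (N : ℕ) :
    P {ω | ∀ t ∈ G, I t ω = ε t}
      = ⨅ m : ℕ, P {ω | ∀ t ∈ (Finset.Icc (-(m + N : ℤ)) (m + N)).filter (· ∈ G), I t ω = ε t} := by
  have hanti : Antitone fun m : ℕ =>
      {ω | ∀ t ∈ (Finset.Icc (-(m + N : ℤ)) (m + N)).filter (· ∈ G), I t ω = ε t} := by
    intro m m' hm ω hω t ht
    simp only [Finset.mem_filter, Finset.mem_Icc] at ht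
    exact hω t (Finset.mem_filter.2 ⟨Finset.mem_Icc.2 ⟨by omega, by omega⟩, ht.2⟩)
  rw [← hanti.measure_iInter
    (fun m => (measurableSet_forall_mem hI _ ε).nullMeasurableSet) ⟨0, measure_ne_top _ _⟩]
  congr 1
  ext ω
  simp only [mem_iInter, mem_ofPred_eq, Finset.mem_filter, Finset.mem_Icc]
  exact ⟨fun h m t ht => h t ht.2, fun h t ht => h t.natAbs t ⟨⟨by omega, by omega⟩, ht⟩⟩

theorem setOf_forall_mem_image_sub {α : Type*} (K : ℤ → α → Bool) (F : Finset ℤ) (ε : ℤ → Bool)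
    (s : ℤ) :
    {ω | ∀ u ∈ F.image (· - s), K u ω = ε (u + s)} = {ω | ∀ t ∈ F, K (t - s) ω = ε t} := by
  simp

theorem forall_mem_insert_Ici_iff (K : ℤ → Bool) (s : ℕ) :
    (∀ t ∈ insert 0 (Ici (s : ℤ)), K t = decide (t ≤ s))
      ↔ K 0 = true ∧ K s = true ∧ ∀ t : ℤ, s < t → K t = false := by
  simp only [mem_insert_iff, mem_Ici, forall_eq_or_imp, Nat.cast_nonneg, decide_true]
  refine and_congr_right fun _ => ⟨fun h => ⟨by simpa using h s le_rfl, fun t ht => ?_⟩, ?_⟩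
  · simpa [not_le.2 ht] using h t ht.le
  · rintro ⟨hs, hgt⟩ t ht
    rcases ht.eq_or_lt with rfl | ht
    · simpa using hs
    · simpa [not_le.2 ht] using hgt t ht

/-- Assumption 1: `I` is the limit of the finite-dimensional distributions of the stationary
processes `Iⁿ` conditioned on `I₀ⁿ = 1`. -/
structure IsPalmLimit [MeasurableSpace Ω] (P : Measure Ω) (I : ℤ → Ω → Bool)
    {Ωn : ℕ → Type*} [∀ n, MeasurableSpace (Ωn n)] (Pn : ∀ n, Measure (Ωn n))
    (In : ∀ n, ℤ → Ωn n → Bool) : Prop where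
  isProbabilityMeasure : ∀ n, IsProbabilityMeasure (Pn n)
  pos : ∀ n, 0 < Pn n {ω | In n 0 ω = true}
  stationary : ∀ n (F : Finset ℤ) (ε : ℤ → Bool) (k : ℤ),
    Pn n {ω | ∀ t ∈ F, In n t ω = ε t} = Pn n {ω | ∀ t ∈ F, In n (t + k) ω = ε t}
  tendsto : ∀ (F : Finset ℤ) (ε : ℤ → Bool),
    Tendsto (fun n =>
        Pn n ({ω | ∀ t ∈ F, In n t ω = ε t} ∩ {ω | In n 0 ω = true})
          / Pn n {ω | In n 0 ω = true}) atTop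
      (nhds (P {ω | ∀ t ∈ F, I t ω = ε t}))

namespace IsPalmLimit

variable [MeasurableSpace Ω] {P : Measure Ω} {I : ℤ → Ω → Bool}
  {Ωn : ℕ → Type*} [∀ n, MeasurableSpace (Ωn n)] {Pn : ∀ n, Measure (Ωn n)}
  {In : ∀ n, ℤ → Ωn n → Bool}

theorem comp_neg (h : IsPalmLimit P I Pn In) :
    IsPalmLimit P (fun t => I (-t)) Pn (fun n t => In n (-t)) where
  isProbabilityMeasure := h.isProbabilityMeasure
  pos n := by simpa using h.pos n
  stationary n F ε k := by
    simpa [Finset.forall_mem_image, add_comm] using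
      h.stationary n (F.image Neg.neg) (fun t => ε (-t)) (-k)
  tendsto F ε := by
    simpa [Finset.forall_mem_image] using h.tendsto (F.image Neg.neg) (fun t => ε (-t))

theorem measure_eq_one (h : IsPalmLimit P I Pn In) : P {ω | I 0 ω = true} = 1 := by
  have hone (n : ℕ) : Pn n {ω | In n 0 ω = true} / Pn n {ω | In n 0 ω = true} = 1 :=
    haveI := h.isProbabilityMeasure n
    ENNReal.div_self (h.pos n).ne' (measure_ne_top _ _)
  have := h.tendsto {0} fun _ => true
  simp only [Finset.mem_singleton, forall_eq, inter_self, hone] at this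
  exact tendsto_nhds_unique this tendsto_const_nhds

theorem measure_shift_finset (h : IsPalmLimit P I Pn In) {F : Finset ℤ} {ε : ℤ → Bool} {s : ℤ}
    (h0 : 0 ∈ F) (hs : s ∈ F) (hε0 : ε 0 = true) (hεs : ε s = true) :
    P {ω | ∀ t ∈ F, I t ω = ε t} = P {ω | ∀ t ∈ F, I (t - s) ω = ε t} := by
  have hsub (n : ℕ) : {ω | ∀ t ∈ F, In n t ω = ε t} ⊆ {ω | In n 0 ω = true} :=
    fun ω hω => (hω 0 h0).trans hε0
  have hsub' (n : ℕ) : {ω | ∀ t ∈ F, In n (t - s) ω = ε t} ⊆ {ω | In n 0 ω = true} :=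
    fun ω hω => by simpa [hεs] using hω s hs
  have hlim := h.tendsto (F.image (· - s)) fun u => ε (u + s)
  simp only [setOf_forall_mem_image_sub] at hlim
  refine tendsto_nhds_unique ((h.tendsto F ε).congr fun n => ?_) hlim
  rw [inter_eq_left.2 (hsub n), inter_eq_left.2 (hsub' n), h.stationary n F ε (-s)]
  simp only [sub_eq_add_neg]

theorem measure_shift [IsFiniteMeasure P] (h : IsPalmLimit P I Pn In) (hI : ∀ t, Measurable (I t))
    {G : Set ℤ} {ε : ℤ → Bool} {s : ℤ} (h0 : 0 ∈ G) (hs : s ∈ G) (hε0 : ε 0 = true)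
    (hεs : ε s = true) :
    P {ω | ∀ t ∈ G, I t ω = ε t} = P {ω | ∀ t ∈ G, I (t - s) ω = ε t} := by
  classical
  rw [measure_forall_mem_eq_iInf P hI G ε s.natAbs,
    measure_forall_mem_eq_iInf P (fun t => hI (t - s)) G ε s.natAbs]
  refine iInf_congr fun m => h.measure_shift_finset ?_ ?_ hε0 hεs
  all_goals simp only [Finset.mem_filter, Finset.mem_Icc]
  exacts [⟨⟨by omega, by omega⟩, h0⟩, ⟨⟨by omega, by omega⟩, hs⟩]

theorem measure_splusFn_ne_top [IsProbabilityMeasure P] (h : IsPalmLimit P I Pn In)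
    (hI : ∀ t, Measurable (I t)) :
    P {ω | SplusFn I ω ≠ ⊤} = ∑' s : ℕ, P {ω | I (-s) ω = true ∧ SplusFn I ω = 0} := by
  set A : ℕ → Set Ω := fun s => {ω | ∀ t ∈ insert 0 (Ici (s : ℤ)), I t ω = decide (t ≤ s)}
  have hI0 : P {ω | I 0 ω = true}ᶜ = 0 :=
    (prob_compl_eq_zero_iff (hI 0 (measurableSet_singleton true))).2 h.measure_eq_one
  have hA_disj : Pairwise (Function.onFun Disjoint A) := by
    refine pairwise_disjoint_on A |>.2 fun s s' hss' => disjoint_left.2 fun ω hs hs' => ?_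
    simp only [A, mem_ofPred_eq, forall_mem_insert_Ici_iff] at hs hs'
    simp [hs.2.2 s' (by exact_mod_cast hss')] at hs'
  have hA_union : ⋃ s, A s = {ω | SplusFn I ω ≠ ⊤} ∩ {ω | I 0 ω = true} := by
    ext ω
    simp only [A, mem_iUnion, mem_ofPred_eq, forall_mem_insert_Ici_iff, mem_inter_iff,
      Ne, splusFn_eq_top_iff_frequently, not_frequently, Bool.not_eq_true]
    constructor
    · rintro ⟨s, h0, -, hgt⟩
      exact ⟨eventually_atTop.2 ⟨s + 1, fun n hn => hgt n (by omega)⟩, h0⟩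
    · rintro ⟨hev, h0⟩
      obtain ⟨s, hs, hgt⟩ := exists_last_of_eventually_not (p := fun t => I t ω = true) h0
        (by simpa using hev)
      exact ⟨s, h0, hs, by simpa using hgt⟩
  have hA_shift (s : ℕ) : P (A s) = P {ω | I (-s) ω = true ∧ SplusFn I ω = 0} := by
    rw [h.measure_shift hI (s := s) (by simp) (by simp) (by simp) (by simp),
      ← measure_inter_conull (s := {ω | I (-s) ω = true ∧ SplusFn I ω = 0}) hI0]
    congr 1
    ext ω
    simp only [mem_ofPred_eq, mem_inter_iff, forall_mem_insert_Ici_iff (fun t => I (t - s) ω),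
      zero_sub, sub_self, splusFn_eq_zero_iff]
    refine ⟨fun ⟨hs, h0, hgt⟩ => ⟨⟨hs, fun u hu => ?_⟩, h0⟩,
      fun ⟨⟨hs, hpos⟩, h0⟩ => ⟨hs, h0, fun t ht => hpos _ (by omega)⟩⟩
    simpa using hgt (u + s) (by omega)
  calc P {ω | SplusFn I ω ≠ ⊤}
      = P ({ω | SplusFn I ω ≠ ⊤} ∩ {ω | I 0 ω = true}) := (measure_inter_conull hI0).symm
    _ = ∑' s, P (A s) := by
      rw [← hA_union, measure_iUnion hA_disj fun s => measurableSet_forall_mem hI _ _]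
    _ = _ := tsum_congr hA_shift

theorem ae_splusFn_eq_zero_imp_sminusFn_ne_top [IsProbabilityMeasure P]
    (h : IsPalmLimit P I Pn In) (hI : ∀ t, Measurable (I t)) :
    ∀ᵐ ω ∂P, SplusFn I ω = 0 → SminusFn I ω ≠ ⊤ := by
  have hsum : ∑' s : ℕ, P {ω | I (-s) ω = true ∧ SplusFn I ω = 0} ≠ ∞ := by
    rw [← h.measure_splusFn_ne_top hI]
    exact measure_ne_top _ _
  -- Borel–Cantelli: on `{S₊ = 0, S₋ = ∞}` infinitely many of the summed events occur.
  refine ae_iff.2 (measure_mono_null (fun ω hω => ?_) (measure_limsup_atTop_eq_zero hsum))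
  simp only [mem_ofPred_eq, Classical.not_imp, not_not] at hω
  rw [mem_limsup_iff_frequently_mem]
  exact ((sminusFn_eq_top_iff_frequently I ω).1 hω.2).mono fun s hs => ⟨hs, hω.1⟩

theorem ae_splusFn_ne_zero_iff [IsProbabilityMeasure P] (h : IsPalmLimit P I Pn In)
    (hI : ∀ t, Measurable (I t)) :
    (∀ᵐ ω ∂P, SplusFn I ω ≠ 0) ↔ ∀ᵐ ω ∂P, SplusFn I ω = ⊤ := by
  simp only [ae_iff, ne_eq, not_not]
  refine ⟨fun hθ => ?_, fun hfin => measure_mono_null (fun ω hω => by simp_all) hfin⟩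
  change P {ω | SplusFn I ω ≠ ⊤} = 0
  rw [h.measure_splusFn_ne_top hI]
  exact ENNReal.tsum_eq_zero.2 fun s => measure_mono_null (fun ω hω => hω.2) hθ

end IsPalmLimit

end

theorem theta_zero_iff_infinite_cluster_general
    {Ω : Type*} [MeasurableSpace Ω] (P : Measure Ω) [IsProbabilityMeasure P]
    (I : ℤ → Ω → Bool) (hI : ∀ t, Measurable (I t))
    {Ωn : ℕ → Type*} [∀ n, MeasurableSpace (Ωn n)]
    (Pn : ∀ n, Measure (Ωn n)) (hPn : ∀ n, IsProbabilityMeasure (Pn n))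
    (In : ∀ n, ℤ → Ωn n → Bool)
    -- `P(I₀ⁿ = 1) > 0` for all `n`
    (hpos : ∀ n, 0 < Pn n {ω | In n 0 ω = true})
    -- stationarity of each `(Iₜⁿ)ₜ`
    (hstat : ∀ n (F : Finset ℤ) (ε : ℤ → Bool) (k : ℤ),
      Pn n {ω | ∀ t ∈ F, In n t ω = ε t} = Pn n {ω | ∀ t ∈ F, In n (t + k) ω = ε t})
    -- convergence of the conditional finite-dimensional distributions
    (hconv : ∀ (F : Finset ℤ) (ε : ℤ → Bool),
      Tendsto (fun n =>
          Pn n ({ω | ∀ t ∈ F, In n t ω = ε t} ∩ {ω | In n 0 ω = true})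
            / Pn n {ω | In n 0 ω = true}) atTop
        (nhds (P {ω | ∀ t ∈ F, I t ω = ε t})))

    :
    ((P {ω | SplusFn I ω = 0}) = 0 ↔ P {ω | SplusFn I ω = ⊤} = 1)
    ∧ (P {ω | SplusFn I ω = ⊤} = 1 ↔ P {ω | SminusFn I ω = ⊤} = 1)
    ∧ (P {ω | SplusFn I ω = ⊤} = 1 ↔ P {ω | SiFn I ω = ⊤} = 1) := by
  have h : IsPalmLimit P I Pn In := ⟨hPn, hpos, hstat, hconv⟩
  have hI_neg : ∀ t, Measurable (I (-t)) := fun t => hI (-t)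
  have hθ : P {ω | SplusFn I ω = 0} = 0 ↔ ∀ᵐ ω ∂P, SplusFn I ω ≠ 0 := by
    simp only [ae_iff, ne_eq, not_not]
  have hplus := h.ae_splusFn_ne_zero_iff hI
  have hminus : (∀ᵐ ω ∂P, SminusFn I ω ≠ 0) ↔ ∀ᵐ ω ∂P, SminusFn I ω = ⊤ := by
    simpa only [← sminusFn_eq_splusFn_neg] using h.comp_neg.ae_splusFn_ne_zero_iff hI_neg
  have hnull := h.ae_splusFn_eq_zero_imp_sminusFn_ne_top hI
  have hnull_neg : ∀ᵐ ω ∂P, SminusFn I ω = 0 → SplusFn I ω ≠ ⊤ := by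
    simpa only [← sminusFn_eq_splusFn_neg, sminusFn_neg] using
      h.comp_neg.ae_splusFn_eq_zero_imp_sminusFn_ne_top hI_neg
  simp only [← mem_ae_iff_prob_eq_one (measurableSet_splusFn_eq_top hI),
    ← mem_ae_iff_prob_eq_one (measurableSet_sminusFn_eq_top hI),
    ← mem_ae_iff_prob_eq_one (measurableSet_siFn_eq_top hI), hθ]
  refine ⟨hplus, ⟨fun htop => hminus.1 ?_, fun htop => hplus.1 ?_⟩, fun htop => ?_, fun htop => ?_⟩
  · filter_upwards [htop, hnull_neg] with ω hω hω' hzero using hω' hzero hω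
  · filter_upwards [htop, hnull] with ω hω hω' hzero using hω' hzero hω
  · filter_upwards [htop] with ω hω using (siFn_eq_top_iff I ω).2 (.inl hω)
  · refine hplus.1 ?_
    filter_upwards [htop, hnull] with ω hω hω' hzero
    rcases (siFn_eq_top_iff I ω).1 hω with hplus_top | hminus_top
    · simp [hzero] at hplus_top
    · exact hω' hzero hminus_top

/-- Theorem 4.2(a): under Assumption 1, the statements `θ = P(S₊ⁱ = 0) = 0`,
`P(S₊ⁱ = ∞) = 1` (equivalently `P(S₋ⁱ = ∞) = 1`) and `P(Sⁱ = ∞) = 1` are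
equivalent. -/
theorem theta_zero_iff_infinite_cluster
    {Ω : Type*} [MeasurableSpace Ω] (P : Measure Ω) [IsProbabilityMeasure P]
    (I : ℤ → Ω → Bool) (hI : ∀ t, Measurable (I t))
    {Ωn : ℕ → Type*} [∀ n, MeasurableSpace (Ωn n)]
    (Pn : ∀ n, Measure (Ωn n)) (hPn : ∀ n, IsProbabilityMeasure (Pn n))
    (In : ∀ n, ℤ → Ωn n → Bool) (hIn : ∀ n t, Measurable (In n t))
    -- `P(I₀ⁿ = 1) > 0` for all `n`
    (hpos : ∀ n, 0 < Pn n {ω | In n 0 ω = true})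
    -- stationarity of each `(Iₜⁿ)ₜ`
    (hstat : ∀ n (F : Finset ℤ) (ε : ℤ → Bool) (k : ℤ),
      Pn n {ω | ∀ t ∈ F, In n t ω = ε t} = Pn n {ω | ∀ t ∈ F, In n (t + k) ω = ε t})
    -- convergence of the conditional finite-dimensional distributions
    (hconv : ∀ (F : Finset ℤ) (ε : ℤ → Bool),
      Tendsto (fun n =>
          Pn n ({ω | ∀ t ∈ F, In n t ω = ε t} ∩ {ω | In n 0 ω = true})
            / Pn n {ω | In n 0 ω = true}) atTop
        (nhds (P {ω | ∀ t ∈ F, I t ω = ε t})))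

    :
    ((P {ω | SplusFn I ω = 0}) = 0 ↔ P {ω | SplusFn I ω = ⊤} = 1)
    ∧ (P {ω | SplusFn I ω = ⊤} = 1 ↔ P {ω | SminusFn I ω = ⊤} = 1)
    ∧ (P {ω | SplusFn I ω = ⊤} = 1 ↔ P {ω | SiFn I ω = ⊤} = 1) :=
  theta_zero_iff_infinite_cluster_general P I hI Pn hPn In hpos hstat hconv
end
end

section
/- Under Assumption 1, θ := P(S₊ⁱ = 0) > 0 if and only if P(Sⁱ < ∞) > 0; moreover, if θ > 0, then the typical cluster size is almost surely finite: P(Sⁱ < ∞ | S₋ⁱ = 0) = 1. -/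
open MeasureTheory Filter Set ENNReal

noncomputable section

/-! Write `L k` for the event that `I₀ = 1` and the cluster through `0` starts at `-k`, and `R k`
for the event `I₀ = I_k = 1`, `S₋ⁱ = 0`. Conditioning the stationary processes `Iⁿ` on `I₀ⁿ = 1`
turns stationarity into the time-change formula for the limit, and shifting by `k` it gives
`P(L k) = P(R k)`. The `L k` are disjoint, so `∑ P(R k) ≤ 1` and Borel–Cantelli shows that
`S₋ⁱ = 0` forces `Sⁱ < ∞` almost surely. Conversely `I₀ = 1` almost surely, so a finite cluster
lies in some `L k`, while `R k ⊆ {S₋ⁱ = 0}`: if `P(S₋ⁱ = 0) = 0` then `P(Sⁱ < ∞) = 0`. The time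
reversal `t ↦ -t` preserves the time-change formula and swaps `S₋ⁱ` and `S₊ⁱ`. -/

section TailProcess

variable {Ω : Type*} {X : ℤ → Ω → Bool}

def timeReversal (X : ℤ → Ω → Bool) : ℤ → Ω → Bool := fun t => X (-t)

@[simp]
lemma timeReversal_apply (t : ℤ) : timeReversal X t = X (-t) := rfl

lemma encard_setOf_neg (p : ℤ → Prop) : {t : ℤ | p (-t)}.encard = {t : ℤ | p t}.encard := by
  rw [← neg_injective.encard_image]
  congr 1
  ext t
  simp

lemma SminusFn_timeReversal : SminusFn (timeReversal X) = SplusFn X := by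
  ext ω
  simpa [SminusFn, SplusFn] using encard_setOf_neg (fun t => 0 < t ∧ X t ω = true)

lemma SiFn_timeReversal : SiFn (timeReversal X) = SiFn X := by
  ext ω
  exact encard_setOf_neg (fun t => X t ω = true)

lemma SminusFn_eq_zero_iff {ω : Ω} : SminusFn X ω = 0 ↔ ∀ t < 0, X t ω = false := by
  simp [SminusFn, Set.encard_eq_zero, Set.eq_empty_iff_forall_notMem]

lemma exists_first_one {ω : Ω} (hfin : SiFn X ω ≠ ⊤) (h0 : X 0 ω = true) :
    ∃ k : ℕ, X (-k) ω = true ∧ X 0 ω = true ∧ ∀ t < -(k : ℤ), X t ω = false := by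
  obtain ⟨a, ha, hmin⟩ := Set.exists_min_image _ id (Set.encard_ne_top_iff.1 hfin) ⟨0, h0⟩
  have ha0 : a ≤ 0 := hmin 0 h0
  refine ⟨(-a).toNat, by rwa [Int.toNat_of_nonneg (by omega), neg_neg], h0, fun t ht => ?_⟩
  cases hXt : X t ω
  · rfl
  · have := hmin t hXt
    simp only [id] at this
    omega

lemma setOf_first_one_eq_cylinder (Y : ℤ → Ω → Bool) (k : ℕ) :
    {ω | Y (-k) ω = true ∧ Y 0 ω = true ∧ ∀ t < -(k : ℤ), Y t ω = false}
      = {ω | ∀ t ∈ {t : ℤ | t ≤ -k ∨ t = 0}, Y t ω = decide (t = -k ∨ t = 0)} := by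
  have hk_nonpos : -(k : ℤ) ≤ 0 := by simp
  ext ω
  simp only [mem_ofPred_eq]
  constructor
  · rintro ⟨hk, h0, hlt⟩ t (ht | rfl)
    · rcases ht.lt_or_eq with ht | rfl
      · simpa [ht.ne, (ht.trans_le hk_nonpos).ne] using hlt t ht
      · simpa using hk
    · simpa using h0
  · intro h
    refine ⟨by simpa using h (-k) (Or.inl le_rfl), by simpa using h 0 (Or.inr rfl),
      fun t ht => ?_⟩
    simpa [ht.ne, (ht.trans_le hk_nonpos).ne] using h t (Or.inl ht.le)

variable [MeasurableSpace Ω] {μ : Measure Ω}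

def SatisfiesTimeChange (μ : Measure Ω) (X : ℤ → Ω → Bool) : Prop :=
  ∀ (F : Finset ℤ) (ε : ℤ → Bool) (k : ℤ), 0 ∈ F → k ∈ F → ε 0 = true → ε k = true →
    μ {ω | ∀ t ∈ F, X t ω = ε t} = μ {ω | ∀ t ∈ F, X (t - k) ω = ε t}

lemma satisfiesTimeChange_of_tendsto {Ωn : ℕ → Type*} [∀ n, MeasurableSpace (Ωn n)]
    {Pn : ∀ n, Measure (Ωn n)} {In : ∀ n, ℤ → Ωn n → Bool}
    (hstat : ∀ n (F : Finset ℤ) (ε : ℤ → Bool) (k : ℤ),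
      Pn n {ω | ∀ t ∈ F, In n t ω = ε t} = Pn n {ω | ∀ t ∈ F, In n (t + k) ω = ε t})
    (hconv : ∀ (F : Finset ℤ) (ε : ℤ → Bool),
      Tendsto (fun n => Pn n ({ω | ∀ t ∈ F, In n t ω = ε t} ∩ {ω | In n 0 ω = true})
          / Pn n {ω | In n 0 ω = true}) atTop (nhds (μ {ω | ∀ t ∈ F, X t ω = ε t}))) :
    SatisfiesTimeChange μ X := by
  intro F ε k h0 hk hε0 hεk
  have hF := hconv F ε
  have hshift := hconv (F.image (· - k)) (fun s => ε (s + k))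
  have hcyl : ∀ n, {ω | ∀ t ∈ F, In n t ω = ε t} ∩ {ω | In n 0 ω = true}
      = {ω | ∀ t ∈ F, In n t ω = ε t} := fun n => inter_eq_left.2 fun _ h => hε0 ▸ h 0 h0
  have hcyl_shift : ∀ n, {ω | ∀ t ∈ F, In n (t - k) ω = ε t} ∩ {ω | In n 0 ω = true}
      = {ω | ∀ t ∈ F, In n (t - k) ω = ε t} :=
    fun n => inter_eq_left.2 fun _ h => by simpa [hεk] using h k hk
  simp only [Finset.forall_mem_image, sub_add_cancel, hcyl_shift] at hshift
  simp only [hcyl, hstat _ F ε (-k), ← sub_eq_add_neg] at hF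
  exact tendsto_nhds_unique hF hshift

lemma ae_zero_eq_true_of_tendsto [IsProbabilityMeasure μ] (hX0 : Measurable (X 0))
    {Ωn : ℕ → Type*} [∀ n, MeasurableSpace (Ωn n)]
    {Pn : ∀ n, Measure (Ωn n)} {In : ∀ n, ℤ → Ωn n → Bool} (hPn : ∀ n, IsProbabilityMeasure (Pn n))
    (hpos : ∀ n, 0 < Pn n {ω | In n 0 ω = true})
    (hconv : ∀ (F : Finset ℤ) (ε : ℤ → Bool),
      Tendsto (fun n => Pn n ({ω | ∀ t ∈ F, In n t ω = ε t} ∩ {ω | In n 0 ω = true})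
          / Pn n {ω | In n 0 ω = true}) atTop (nhds (μ {ω | ∀ t ∈ F, X t ω = ε t}))) :
    ∀ᵐ ω ∂μ, X 0 ω = true := by
  have h := hconv {0} fun _ => true
  simp only [Finset.mem_singleton, forall_eq, inter_self] at h
  rw [ae_iff_measure_eq (by measurability), measure_univ]
  refine tendsto_nhds_unique (h.congr fun n => ?_) tendsto_const_nhds
  exact ENNReal.div_self (hpos n).ne' (measure_ne_top _ _)

lemma SatisfiesTimeChange.timeReversal (h : SatisfiesTimeChange μ X) :
    SatisfiesTimeChange μ (timeReversal X) := by
  intro F ε k h0 hk hε0 hεk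
  have key := h (F.map (Equiv.neg ℤ).toEmbedding) (fun s => ε (-s)) (-k)
    (by simpa using h0) (by simpa using hk) (by simpa using hε0) (by simpa using hεk)
  convert key using 2 <;> ext ω <;> simp only [mem_ofPred_eq, Finset.mem_map_equiv]
  · exact ⟨fun h t ht => by simpa using h (-t) (by simpa using ht),
      fun h t ht => by simpa using h (-t) (by simpa using ht)⟩
  · exact ⟨fun h t ht => by simpa [add_comm, sub_eq_add_neg] using h (-t) (by simpa using ht),
      fun h t ht => by simpa [add_comm, sub_eq_add_neg] using h (-t) (by simpa using ht)⟩

open Classical in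
lemma measure_setOf_forall_eq_iInf [IsFiniteMeasure μ] {Y : ℤ → Ω → Bool}
    (hY : ∀ t, Measurable (Y t)) (F : Set ℤ) (ε : ℤ → Bool) (A : Finset ℤ) (hA : ↑A ⊆ F) :
    μ {ω | ∀ t ∈ F, Y t ω = ε t}
      = ⨅ s : Finset ℤ, μ {ω | ∀ t ∈ A ∪ {t ∈ s | t ∈ F}, Y t ω = ε t} := by
  set C : Finset ℤ → Set Ω := fun s => {ω | ∀ t ∈ A ∪ {t ∈ s | t ∈ F}, Y t ω = ε t}
  have hcyl : {ω | ∀ t ∈ F, Y t ω = ε t} = ⋂ s, C s := by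
    ext ω
    simp only [C, mem_ofPred_eq, mem_iInter, Finset.mem_union, Finset.mem_filter]
    exact ⟨fun h s t ht => h t (ht.elim (fun htA => hA htA) And.right),
      fun h t ht => h {t} t (Or.inr ⟨Finset.mem_singleton_self t, ht⟩)⟩
  have hC : Antitone C := fun s s' hss' ω hω t ht => by
    refine hω t ?_
    simp only [Finset.mem_union, Finset.mem_filter] at ht ⊢
    exact ht.imp_right fun h => ⟨hss' h.1, h.2⟩
  rw [hcyl]
  exact hC.measure_iInter (fun _ => by measurability) ⟨∅, measure_ne_top _ _⟩

variable [IsFiniteMeasure μ]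

lemma SatisfiesTimeChange.measure_eq (h : SatisfiesTimeChange μ X)
    (hX : ∀ t, Measurable (X t)) {F : Set ℤ} {ε : ℤ → Bool} {k : ℤ} (h0 : 0 ∈ F) (hk : k ∈ F)
    (hε0 : ε 0 = true) (hεk : ε k = true) :
    μ {ω | ∀ t ∈ F, X t ω = ε t} = μ {ω | ∀ t ∈ F, X (t - k) ω = ε t} := by
  have hA : ↑({0, k} : Finset ℤ) ⊆ F := by simp [insert_subset_iff, h0, hk]
  rw [measure_setOf_forall_eq_iInf hX F ε _ hA,
    measure_setOf_forall_eq_iInf (fun t => hX (t - k)) F ε _ hA]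
  exact iInf_congr fun s => h _ ε k (by simp) (by simp) hε0 hεk

lemma SatisfiesTimeChange.measure_first_one_eq (h : SatisfiesTimeChange μ X)
    (hX : ∀ t, Measurable (X t)) (k : ℕ) :
    μ {ω | X (-k) ω = true ∧ X 0 ω = true ∧ ∀ t < -(k : ℤ), X t ω = false}
      = μ {ω | X k ω = true ∧ X 0 ω = true ∧ ∀ t < 0, X t ω = false} := by
  rw [setOf_first_one_eq_cylinder, h.measure_eq hX (Or.inr rfl) (Or.inl le_rfl) (by simp) (by simp),
    ← setOf_first_one_eq_cylinder (fun t => X (t - -k))]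
  congr 1
  ext ω
  simp only [mem_ofPred_eq, sub_neg_eq_add, neg_add_cancel, zero_add]
  refine ⟨fun ⟨h0, hk, hlt⟩ => ⟨hk, h0, fun t ht => ?_⟩,
    fun ⟨hk, h0, hlt⟩ => ⟨h0, hk, fun t ht => hlt _ (by omega)⟩⟩
  simpa using hlt (t - k) (by omega)

lemma SatisfiesTimeChange.tsum_measure_ne_top (h : SatisfiesTimeChange μ X)
    (hX : ∀ t, Measurable (X t)) :
    ∑' k : ℕ, μ {ω | X k ω = true ∧ X 0 ω = true ∧ ∀ t < 0, X t ω = false} ≠ ∞ := by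
  have hdisj : Pairwise (Function.onFun Disjoint fun k : ℕ =>
      {ω | X (-k) ω = true ∧ X 0 ω = true ∧ ∀ t < -(k : ℤ), X t ω = false}) := by
    intro j k hjk
    refine Set.disjoint_left.2 fun ω ⟨hj, _, hltj⟩ ⟨hk, _, hltk⟩ => ?_
    rcases hjk.lt_or_gt with hlt | hlt
    · simp [hltj (-k) (by omega)] at hk
    · simp [hltk (-j) (by omega)] at hj
  simp_rw [← h.measure_first_one_eq hX]
  rw [← measure_iUnion hdisj fun _ => by measurability]
  exact measure_ne_top _ _

lemma SatisfiesTimeChange.ae_SiFn_ne_top_of_SminusFn_eq_zero (h : SatisfiesTimeChange μ X)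
    (hX : ∀ t, Measurable (X t)) (h0 : ∀ᵐ ω ∂μ, X 0 ω = true) :
    ∀ᵐ ω ∂μ, SminusFn X ω = 0 → SiFn X ω ≠ ⊤ := by
  filter_upwards [ae_eventually_notMem (h.tsum_measure_ne_top hX), h0] with ω hev hω0 hminus
  obtain ⟨N, hN⟩ := eventually_atTop.1 hev
  rw [SminusFn_eq_zero_iff] at hminus
  refine Set.encard_ne_top_iff.2 ((Set.finite_Ico 0 (N : ℤ)).subset fun t (ht : X t ω) => ?_)
  by_contra hout
  rcases lt_or_ge t 0 with hneg | hnonneg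
  · simp [hminus t hneg] at ht
  · lift t to ℕ using hnonneg
    exact hN t (by simpa using hout) ⟨ht, hω0, hminus⟩

lemma SatisfiesTimeChange.ae_SiFn_ne_top_of_SplusFn_eq_zero (h : SatisfiesTimeChange μ X)
    (hX : ∀ t, Measurable (X t)) (h0 : ∀ᵐ ω ∂μ, X 0 ω = true) :
    ∀ᵐ ω ∂μ, SplusFn X ω = 0 → SiFn X ω ≠ ⊤ := by
  simpa [SminusFn_timeReversal, SiFn_timeReversal] using
    h.timeReversal.ae_SiFn_ne_top_of_SminusFn_eq_zero (fun t => hX (-t)) (by simpa using h0)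

lemma SatisfiesTimeChange.measure_SiFn_ne_top_eq_zero_of_SminusFn (h : SatisfiesTimeChange μ X)
    (hX : ∀ t, Measurable (X t)) (h0 : ∀ᵐ ω ∂μ, X 0 ω = true)
    (hminus : μ {ω | SminusFn X ω = 0} = 0) : μ {ω | SiFn X ω ≠ ⊤} = 0 := by
  refine measure_mono_null_ae (t := ⋃ k : ℕ,
      {ω | X (-k) ω = true ∧ X 0 ω = true ∧ ∀ t < -(k : ℤ), X t ω = false}) ?_
    (measure_iUnion_null fun k => ?_)
  · filter_upwards [h0] with ω hω0 hfin
    exact mem_iUnion.2 (exists_first_one hfin hω0)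
  · rw [h.measure_first_one_eq hX]
    exact measure_mono_null (fun ω hω => SminusFn_eq_zero_iff.2 hω.2.2) hminus

lemma SatisfiesTimeChange.measure_SiFn_ne_top_eq_zero_of_SplusFn (h : SatisfiesTimeChange μ X)
    (hX : ∀ t, Measurable (X t)) (h0 : ∀ᵐ ω ∂μ, X 0 ω = true)
    (hplus : μ {ω | SplusFn X ω = 0} = 0) : μ {ω | SiFn X ω ≠ ⊤} = 0 := by
  simpa [SiFn_timeReversal] using h.timeReversal.measure_SiFn_ne_top_eq_zero_of_SminusFn
    (fun t => hX (-t)) (by simpa using h0) (by simpa [SminusFn_timeReversal] using hplus)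

end TailProcess

theorem theta_pos_iff_finite_cluster_general
    {Ω : Type*} [MeasurableSpace Ω] (P : Measure Ω) [IsProbabilityMeasure P]
    (I : ℤ → Ω → Bool) (hI : ∀ t, Measurable (I t))
    {Ωn : ℕ → Type*} [∀ n, MeasurableSpace (Ωn n)]
    (Pn : ∀ n, Measure (Ωn n)) (hPn : ∀ n, IsProbabilityMeasure (Pn n))
    (In : ∀ n, ℤ → Ωn n → Bool)
    -- `P(I₀ⁿ = 1) > 0` for all `n`
    (hpos : ∀ n, 0 < Pn n {ω | In n 0 ω = true})
    -- stationarity of each `(Iₜⁿ)ₜ`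
    (hstat : ∀ n (F : Finset ℤ) (ε : ℤ → Bool) (k : ℤ),
      Pn n {ω | ∀ t ∈ F, In n t ω = ε t} = Pn n {ω | ∀ t ∈ F, In n (t + k) ω = ε t})
    -- convergence of the conditional finite-dimensional distributions
    (hconv : ∀ (F : Finset ℤ) (ε : ℤ → Bool),
      Tendsto (fun n =>
          Pn n ({ω | ∀ t ∈ F, In n t ω = ε t} ∩ {ω | In n 0 ω = true})
            / Pn n {ω | In n 0 ω = true}) atTop
        (nhds (P {ω | ∀ t ∈ F, I t ω = ε t})))

    :
    (0 < (P {ω | SplusFn I ω = 0}) ↔ 0 < P {ω | SiFn I ω ≠ ⊤})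
    ∧ (0 < (P {ω | SplusFn I ω = 0}) →
        P ({ω | SiFn I ω ≠ ⊤} ∩ {ω | SminusFn I ω = 0})
          / P {ω | SminusFn I ω = 0} = 1) := by
  have hT : SatisfiesTimeChange P I := satisfiesTimeChange_of_tendsto hstat hconv
  have h0 : ∀ᵐ ω ∂P, I 0 ω = true := ae_zero_eq_true_of_tendsto (hI 0) hPn hpos hconv
  have hθ_iff : 0 < P {ω | SplusFn I ω = 0} ↔ 0 < P {ω | SiFn I ω ≠ ⊤} :=
    ⟨fun hθ => hθ.trans_le (measure_mono_ae (hT.ae_SiFn_ne_top_of_SplusFn_eq_zero hI h0)),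
      fun hfin => pos_iff_ne_zero.2 fun hθ =>
        hfin.ne' (hT.measure_SiFn_ne_top_eq_zero_of_SplusFn hI h0 hθ)⟩
  refine ⟨hθ_iff, fun hθ => ?_⟩
  have hminus : P {ω | SminusFn I ω = 0} ≠ 0 := fun hminus =>
    (hθ_iff.1 hθ).ne' (hT.measure_SiFn_ne_top_eq_zero_of_SminusFn hI h0 hminus)
  have hcond : P ({ω | SiFn I ω ≠ ⊤} ∩ {ω | SminusFn I ω = 0}) = P {ω | SminusFn I ω = 0} := by
    refine le_antisymm (measure_mono inter_subset_right) (measure_mono_ae ?_)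
    filter_upwards [hT.ae_SiFn_ne_top_of_SminusFn_eq_zero hI h0] with ω hfin hω
    exact ⟨hfin hω, hω⟩
  rw [hcond, ENNReal.div_self hminus (measure_ne_top _ _)]

/-- Theorem 4.2(b), first part: under Assumption 1, `θ = P(S₊ⁱ = 0) > 0` iff
`P(Sⁱ < ∞) > 0`; moreover, if `θ > 0` then the typical cluster size is a.s.
finite: `P(Sⁱ < ∞ | S₋ⁱ = 0) = 1`. -/
theorem theta_pos_iff_finite_cluster
    {Ω : Type*} [MeasurableSpace Ω] (P : Measure Ω) [IsProbabilityMeasure P]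
    (I : ℤ → Ω → Bool) (hI : ∀ t, Measurable (I t))
    {Ωn : ℕ → Type*} [∀ n, MeasurableSpace (Ωn n)]
    (Pn : ∀ n, Measure (Ωn n)) (hPn : ∀ n, IsProbabilityMeasure (Pn n))
    (In : ∀ n, ℤ → Ωn n → Bool) (hIn : ∀ n t, Measurable (In n t))
    -- `P(I₀ⁿ = 1) > 0` for all `n`
    (hpos : ∀ n, 0 < Pn n {ω | In n 0 ω = true})
    -- stationarity of each `(Iₜⁿ)ₜ`
    (hstat : ∀ n (F : Finset ℤ) (ε : ℤ → Bool) (k : ℤ),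
      Pn n {ω | ∀ t ∈ F, In n t ω = ε t} = Pn n {ω | ∀ t ∈ F, In n (t + k) ω = ε t})
    -- convergence of the conditional finite-dimensional distributions
    (hconv : ∀ (F : Finset ℤ) (ε : ℤ → Bool),
      Tendsto (fun n =>
          Pn n ({ω | ∀ t ∈ F, In n t ω = ε t} ∩ {ω | In n 0 ω = true})
            / Pn n {ω | In n 0 ω = true}) atTop
        (nhds (P {ω | ∀ t ∈ F, I t ω = ε t})))

    :
    (0 < (P {ω | SplusFn I ω = 0}) ↔ 0 < P {ω | SiFn I ω ≠ ⊤})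
    ∧ (0 < (P {ω | SplusFn I ω = 0}) →
        P ({ω | SiFn I ω ≠ ⊤} ∩ {ω | SminusFn I ω = 0})
          / P {ω | SminusFn I ω = 0} = 1) :=
  theta_pos_iff_finite_cluster_general P I hI Pn hPn In hpos hstat hconv
end
end

section
/- Under Assumption 1, if θ := P(S₊ⁱ = 0) > 0, then θ = P(S₊ⁱ < ∞) / E(Sᵗ), where E(Sᵗ) := Σ_{k=1}^∞ k · π_k ∈ (0, ∞] is the expected typical cluster size; equivalently, θ · E(Sᵗ) = P(S₊ⁱ < ∞). -/
open MeasureTheory Filter Set ENNReal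

noncomputable section

/-!
Push the process forward to its law `Q` on paths `ℤ → Bool`. Under Assumption 1, `Q` is a limit
of Palm distributions of stationary sequences; hence it is carried by paths marked at `0` and
satisfies the time-change formula: restricted to paths marked at both `0` and `c`, `Q` is
invariant under re-centring the path at `c`.

Decomposing according to the leftmost mark of the cluster (a mass-transport argument), the
time-change formula gives, for every shift-invariant event `Φ`,
`Q(Φ, S₋ < ∞) = E[Sⁱ; Φ, S₋ = 0]`. For `Φ = {Sⁱ = k}` this reads
`Q(Sⁱ = k) = k · Q(Sⁱ = k, S₋ = 0)`, and for `Φ = {Sⁱ = ∞}` it shows that an infinite cluster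
is a.s. infinite on both sides. The same holds for the reflected path, with `S₊` in place of
`S₋`; comparing the two yields `P(S₋ = 0) = θ`, and then `θ · E(Sᵗ) = ∑ₖ Q(Sⁱ = k) = P(S₊ < ∞)`.
-/

lemma ENNReal.eq_div_of_mul_eq {a b c : ℝ≥0∞} (h : a * b = c) (ha : a ≠ 0) (hc₀ : c ≠ 0)
    (hc : c ≠ ⊤) : a = c / b := by
  have hb₀ : b ≠ 0 := by rintro rfl; simp_all
  have hb : b ≠ ⊤ := by rintro rfl; simp_all [ENNReal.mul_top ha]
  rw [ENNReal.eq_div_iff hb₀ hb, mul_comm, h]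

lemma measure_inter_ne_top_eq_tsum {α : Type*} [MeasurableSpace α] (μ : Measure α) {A : Set α}
    (hA : MeasurableSet A) {g : α → ℕ∞} (hg : Measurable g) :
    μ (A ∩ {x | g x ≠ ⊤}) = ∑' k : ℕ, μ (A ∩ {x | g x = k}) := by
  have : A ∩ {x | g x ≠ ⊤} = ⋃ k : ℕ, A ∩ {x | g x = k} := by
    ext x
    simp [ENat.ne_top_iff_exists, eq_comm]
  rw [this, measure_iUnion]
  · exact fun k l hkl => disjoint_left.2 fun x hk hl => hkl (by exact_mod_cast hk.2.symm.trans hl.2)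
  · exact fun k => hA.inter (hg (measurableSet_singleton _))

namespace BoolPath

def markedAt (c : ℤ) : Set (ℤ → Bool) := {f | f c = true}

def shift (c : ℤ) (f : ℤ → Bool) : ℤ → Bool := fun t => f (t - c)

def reflect (f : ℤ → Bool) : ℤ → Bool := fun t => f (-t)

def countOn (S : Set ℤ) (f : ℤ → Bool) : ℕ∞ := {t ∈ S | f t = true}.encard

def cyl (F : Finset ℤ) (ε : ℤ → Bool) : Set (ℤ → Bool) := {f | ∀ t ∈ F, f t = ε t}

-- `∅` is added so that the family is closed under intersections
def cylSets : Set (Set (ℤ → Bool)) := insert ∅ {A | ∃ F ε, A = cyl F ε}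

lemma measurable_shift (c : ℤ) : Measurable (shift c) :=
  measurable_pi_lambda _ fun t => measurable_pi_apply (t - c)

lemma measurable_reflect : Measurable reflect :=
  measurable_pi_lambda _ fun t => measurable_pi_apply (-t)

lemma measurableSet_markedAt (c : ℤ) : MeasurableSet (markedAt c) :=
  measurableSet_eq_fun (measurable_pi_apply c) measurable_const

lemma measurable_countOn (S : Set ℤ) : Measurable (countOn S) :=
  measurable_encard.comp <| measurable_set_iff.2 fun t => by
    simp only [mem_ofPred_eq]; fun_prop

lemma measurableSet_countOn_eq (S : Set ℤ) (k : ℕ∞) : MeasurableSet {f | countOn S f = k} :=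
  measurable_countOn S (measurableSet_singleton k)

lemma measurableSet_countOn_ne (S : Set ℤ) (k : ℕ∞) : MeasurableSet {f | countOn S f ≠ k} :=
  (measurableSet_countOn_eq S k).compl

lemma measurableSet_cyl (F : Finset ℤ) (ε : ℤ → Bool) : MeasurableSet (cyl F ε) := by
  simp only [cyl, ofPred_forall]
  exact .iInter fun t => .iInter fun _ =>
    measurableSet_eq_fun (measurable_pi_apply t) measurable_const

lemma measurableSet_of_mem_cylSets {A : Set (ℤ → Bool)} (hA : A ∈ cylSets) : MeasurableSet A := by
  obtain rfl | ⟨F, ε, rfl⟩ := hA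
  exacts [.empty, measurableSet_cyl F ε]

lemma cyl_mem_cylSets (F : Finset ℤ) (ε : ℤ → Bool) : cyl F ε ∈ cylSets :=
  .inr ⟨F, ε, rfl⟩

lemma markedAt_eq_cyl (c : ℤ) : markedAt c = cyl {c} fun _ => true := by
  ext f; simp [markedAt, cyl]

lemma markedAt_mem_cylSets (c : ℤ) : markedAt c ∈ cylSets :=
  markedAt_eq_cyl c ▸ cyl_mem_cylSets _ _

lemma cyl_inter_cyl {F G : Finset ℤ} {ε δ : ℤ → Bool} (h : (cyl F ε ∩ cyl G δ).Nonempty) :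
    cyl F ε ∩ cyl G δ = cyl (F ∪ G) (fun t => if t ∈ F then ε t else δ t) := by
  obtain ⟨g, hgF, hgG⟩ := h
  ext f
  simp only [cyl, mem_inter_iff, mem_ofPred_eq, Finset.mem_union]
  constructor
  · rintro ⟨hF, hG⟩ t (ht | ht)
    · simp [ht, hF t ht]
    · split_ifs with htF
      exacts [hF t htF, hG t ht]
  · intro h
    refine ⟨fun t ht => by simpa [ht] using h t (.inl ht), fun t ht => ?_⟩
    by_cases htF : t ∈ F
    · rw [← hgG t ht, hgF t htF]
      simpa [htF] using h t (.inl htF)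
    · simpa [htF] using h t (.inr ht)

lemma inter_mem_cylSets {A B : Set (ℤ → Bool)} (hA : A ∈ cylSets) (hB : B ∈ cylSets) :
    A ∩ B ∈ cylSets := by
  obtain rfl | ⟨F, ε, rfl⟩ := hA
  · simp [cylSets]
  obtain rfl | ⟨G, δ, rfl⟩ := hB
  · simp [cylSets]
  rcases (cyl F ε ∩ cyl G δ).eq_empty_or_nonempty with h | h
  · exact .inl h
  · exact cyl_inter_cyl h ▸ cyl_mem_cylSets _ _

lemma isPiSystem_cylSets : IsPiSystem cylSets :=
  fun _ hA _ hB _ => inter_mem_cylSets hA hB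

lemma generateFrom_cylSets :
    MeasurableSpace.generateFrom cylSets = (inferInstance : MeasurableSpace (ℤ → Bool)) := by
  refine le_antisymm (MeasurableSpace.generateFrom_le fun _ => measurableSet_of_mem_cylSets) ?_
  refine iSup_le fun t => (MeasurableSpace.comap_le_iff_le_map).2 ?_
  exact @measurable_to_bool _ (.generateFrom cylSets) _
    (MeasurableSpace.measurableSet_generateFrom (markedAt_mem_cylSets t))

lemma ext_of_cylSets {μ ν : Measure (ℤ → Bool)} [IsFiniteMeasure μ]
    (h : ∀ A ∈ cylSets, μ A = ν A) : μ = ν := by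
  refine ext_of_generate_finite _ generateFrom_cylSets.symm isPiSystem_cylSets h ?_
  simpa [cyl] using h _ (cyl_mem_cylSets ∅ fun _ => true)

lemma preimage_shift_cyl (c : ℤ) (F : Finset ℤ) (ε : ℤ → Bool) :
    shift c ⁻¹' cyl F ε = cyl (F.image (· - c)) (fun s => ε (s + c)) := by
  ext f
  simp [cyl, shift]

lemma shift_comp_reflect (c : ℤ) : shift c ∘ reflect = reflect ∘ shift (-c) := by
  funext f t
  simp only [Function.comp, shift, reflect]
  congr 1
  ring

lemma countOn_mono {S T : Set ℤ} (h : S ⊆ T) (f : ℤ → Bool) : countOn S f ≤ countOn T f :=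
  encard_mono fun _ ht => ⟨h ht.1, ht.2⟩

lemma countOn_eq_zero {S : Set ℤ} {f : ℤ → Bool} : countOn S f = 0 ↔ ∀ t ∈ S, f t = false := by
  simp [countOn, eq_empty_iff_forall_notMem]

lemma countOn_shift (S : Set ℤ) (c : ℤ) (f : ℤ → Bool) :
    countOn S (shift c f) = countOn ((· + c) ⁻¹' S) f := by
  have : {t ∈ S | shift c f t = true} = (· - c) ⁻¹' {s ∈ (· + c) ⁻¹' S | f s = true} := by
    ext t; simp [shift]
  rw [countOn, this, encard_preimage_of_injective_subset_range sub_left_injective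
    fun s _ => ⟨s + c, by simp⟩]
  rfl

lemma countOn_reflect (S : Set ℤ) (f : ℤ → Bool) : countOn S (reflect f) = countOn (-S) f := by
  have : {t ∈ S | reflect f t = true} = Neg.neg ⁻¹' {s ∈ -S | f s = true} := by
    ext t; simp [reflect]
  rw [countOn, this, encard_preimage_of_injective_subset_range neg_injective (by simp)]
  rfl

lemma countOn_univ_shift (c : ℤ) (f : ℤ → Bool) : countOn univ (shift c f) = countOn univ f := by
  simp [countOn_shift]

lemma countOn_Iio_shift (c : ℤ) (f : ℤ → Bool) :
    countOn (Iio c) (shift c f) = countOn (Iio 0) f := by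
  simp [countOn_shift]

lemma exists_countOn_Iio_eq_zero {f : ℤ → Bool} (h0 : f 0 = true) (h : countOn (Iio 0) f ≠ ⊤) :
    ∃ c, f c = true ∧ countOn (Iio c) f = 0 := by
  have hfin : {t ∈ Iic 0 | f t = true}.Finite := by
    refine ((encard_ne_top_iff.1 h).insert 0).subset fun t ⟨ht, hft⟩ => ?_
    rcases (mem_Iic.1 ht).eq_or_lt with rfl | ht
    exacts [mem_insert _ _, .inr ⟨ht, hft⟩]
  obtain ⟨c, ⟨hc, hfc⟩, hmin⟩ := exists_min_image _ id hfin ⟨0, self_mem_Iic, h0⟩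
  refine ⟨c, hfc, countOn_eq_zero.2 fun t (ht : t < c) => ?_⟩
  by_contra hft
  exact (hmin t ⟨(ht.trans_le hc).le, Bool.not_eq_false _ ▸ hft⟩).not_gt ht

lemma eq_of_countOn_Iio_eq_zero {f : ℤ → Bool} {c d : ℤ} (hc : f c = true) (hd : f d = true)
    (hc' : countOn (Iio c) f = 0) (hd' : countOn (Iio d) f = 0) : c = d := by
  by_contra hne
  rcases lt_or_gt_of_ne hne with h | h
  · simpa [hc] using countOn_eq_zero.1 hd' c h
  · simpa [hd] using countOn_eq_zero.1 hc' d h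

lemma countOn_Iio_ne_top_of_countOn_Iio_eq_zero {f : ℤ → Bool} {c : ℤ}
    (hc : countOn (Iio c) f = 0) : countOn (Iio 0) f ≠ ⊤ := by
  refine encard_ne_top_iff.2 ((finite_Ico c 0).subset fun t ⟨ht, hft⟩ => ⟨?_, ht⟩)
  by_contra htc
  simpa [hft] using countOn_eq_zero.1 hc t (not_le.1 htc)

lemma tsum_indicator_markedAt (f : ℤ → Bool) :
    ∑' c, (markedAt c).indicator (1 : (ℤ → Bool) → ℝ≥0∞) f = countOn univ f := by
  have : ∀ c, (markedAt c).indicator (1 : (ℤ → Bool) → ℝ≥0∞) f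
      = {t | f t = true}.indicator 1 c := fun c => by
    by_cases h : f c = true <;> simp [indicator, markedAt, h]
  simp_rw [this]
  rw [← tsum_subtype, Pi.one_def, ENNReal.tsum_set_one, countOn, sep_univ]

lemma tsum_measure_inter_markedAt (Q : Measure (ℤ → Bool)) (E : Set (ℤ → Bool)) :
    ∑' c, Q (E ∩ markedAt c) = ∫⁻ f in E, countOn univ f ∂Q := by
  simp_rw [← tsum_indicator_markedAt]
  rw [lintegral_tsum fun c => (measurable_one.indicator (measurableSet_markedAt c)).aemeasurable]
  simp_rw [lintegral_indicator_one (measurableSet_markedAt _),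
    Measure.restrict_apply (measurableSet_markedAt _), inter_comm]

def SatisfiesTimeChange (Q : Measure (ℤ → Bool)) : Prop :=
  ∀ c B, MeasurableSet B → B ⊆ markedAt 0 ∩ markedAt c → Q (shift c ⁻¹' B) = Q B

/-- Each of the `k` marks of a cluster is equally likely to sit at the origin, so the origin is
the extreme mark of its cluster on the side `T` with probability `1 / k`. -/
def ClusterBalanced (Q : Measure (ℤ → Bool)) (T : Set ℤ) : Prop :=
  ∀ k : ℕ∞, Q ({f | countOn univ f = k} ∩ {f | countOn T f ≠ ⊤})
    = k * Q ({f | countOn univ f = k} ∩ {f | countOn T f = 0})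

namespace SatisfiesTimeChange

variable {Q : Measure (ℤ → Bool)}

lemma of_cylSets [IsFiniteMeasure Q]
    (h : ∀ c, ∀ B ∈ cylSets, B ⊆ markedAt 0 ∩ markedAt c → Q (shift c ⁻¹' B) = Q B) :
    SatisfiesTimeChange Q := by
  intro c B hB hBc
  have hM := (measurableSet_markedAt 0).inter (measurableSet_markedAt c)
  have hext : (Q.map (shift c)).restrict (markedAt 0 ∩ markedAt c)
      = Q.restrict (markedAt 0 ∩ markedAt c) := by
    refine ext_of_cylSets fun A hA => ?_
    have hA' := measurableSet_of_mem_cylSets hA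
    rw [Measure.restrict_apply hA', Measure.restrict_apply hA',
      Measure.map_apply (measurable_shift c) (hA'.inter hM)]
    exact h c _ (inter_mem_cylSets hA (inter_mem_cylSets (markedAt_mem_cylSets 0)
      (markedAt_mem_cylSets c))) inter_subset_right
  have h := congrArg (· B) hext
  simp only [Measure.restrict_apply hB, inter_eq_left.2 hBc,
    Measure.map_apply (measurable_shift c) hB] at h
  exact h

lemma map_reflect (hQ : SatisfiesTimeChange Q) : SatisfiesTimeChange (Q.map reflect) := by
  intro c B hB hBc
  have hR : reflect ⁻¹' B ⊆ markedAt 0 ∩ markedAt (-c) := fun f hf => by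
    simpa [markedAt, reflect] using hBc hf
  rw [Measure.map_apply measurable_reflect hB, Measure.map_apply measurable_reflect
    (measurable_shift c hB), ← preimage_comp, shift_comp_reflect, preimage_comp,
    hQ (-c) _ (measurable_reflect hB) hR]

theorem measure_inter_countOn_Iio_ne_top (hQ : SatisfiesTimeChange Q) {Φ : Set (ℤ → Bool)}
    (hΦ : MeasurableSet Φ) (hΦs : ∀ c, shift c ⁻¹' Φ = Φ) :
    Q (Φ ∩ markedAt 0 ∩ {f | countOn (Iio 0) f ≠ ⊤})
      = ∫⁻ f in Φ ∩ markedAt 0 ∩ {f | countOn (Iio 0) f = 0}, countOn univ f ∂Q := by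
  set E := Φ ∩ markedAt 0 ∩ {f | countOn (Iio 0) f = 0}
  set A : ℤ → Set (ℤ → Bool) := fun c =>
    Φ ∩ markedAt 0 ∩ markedAt c ∩ {f | countOn (Iio c) f = 0}
  have hA : ∀ c, MeasurableSet (A c) := fun c =>
    ((hΦ.inter (measurableSet_markedAt 0)).inter (measurableSet_markedAt c)).inter
      (measurableSet_countOn_eq _ 0)
  have hAdisj : Pairwise (Function.onFun Disjoint A) := fun c d hcd =>
    disjoint_left.2 fun f ⟨⟨_, hc⟩, hc'⟩ ⟨⟨_, hd⟩, hd'⟩ =>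
      hcd (eq_of_countOn_Iio_eq_zero hc hd hc' hd')
  have hunion : Φ ∩ markedAt 0 ∩ {f | countOn (Iio 0) f ≠ ⊤} = ⋃ c, A c := by
    ext f
    simp only [A, mem_inter_iff, mem_iUnion, mem_ofPred_eq]
    constructor
    · rintro ⟨⟨hf, h0⟩, hfin⟩
      obtain ⟨c, hc, hc'⟩ := exists_countOn_Iio_eq_zero h0 hfin
      exact ⟨c, ⟨⟨hf, h0⟩, hc⟩, hc'⟩
    · rintro ⟨c, ⟨⟨hf, h0⟩, -⟩, hc'⟩
      exact ⟨⟨hf, h0⟩, countOn_Iio_ne_top_of_countOn_Iio_eq_zero hc'⟩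
  have hshift : ∀ c, shift c ⁻¹' A c = E ∩ markedAt (-c) := fun c => by
    ext f
    have hf : f ∈ shift c ⁻¹' Φ ↔ f ∈ Φ := by rw [hΦs]
    simp only [A, E, mem_preimage, mem_inter_iff, mem_ofPred_eq, markedAt,
      countOn_Iio_shift] at hf ⊢
    simp only [shift, sub_self, zero_sub, hf]
    tauto
  calc Q (Φ ∩ markedAt 0 ∩ {f | countOn (Iio 0) f ≠ ⊤})
      = ∑' c, Q (A c) := by rw [hunion, measure_iUnion hAdisj hA]
    _ = ∑' c, Q (E ∩ markedAt (-c)) := by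
      refine tsum_congr fun c => ?_
      rw [← hshift, hQ c _ (hA c) fun f hf => ⟨hf.1.1.2, hf.1.2⟩]
    _ = ∑' c, Q (E ∩ markedAt c) := (Equiv.neg ℤ).tsum_eq fun c => Q (E ∩ markedAt c)
    _ = ∫⁻ f in E, countOn univ f ∂Q := tsum_measure_inter_markedAt Q E

lemma clusterBalanced_Iio (hQ : SatisfiesTimeChange Q) (h0 : ∀ᵐ f ∂Q, f 0 = true) :
    ClusterBalanced Q (Iio 0) := by
  intro k
  set Φ := {f | countOn univ f = k}
  have hΦ : MeasurableSet Φ := measurableSet_countOn_eq _ _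
  have h := hQ.measure_inter_countOn_Iio_ne_top hΦ fun c => by
    ext f; simp [Φ, countOn_univ_shift]
  have hc : Q (markedAt 0)ᶜ = 0 := ae_iff.1 h0
  rw [setLIntegral_congr_fun ((hΦ.inter (measurableSet_markedAt 0)).inter
      (measurableSet_countOn_eq _ _)) fun f hf => by rw [hf.1.1], setLIntegral_const,
    inter_right_comm, measure_inter_conull hc, inter_right_comm, measure_inter_conull hc] at h
  exact h

lemma clusterBalanced_Ioi (hQ : SatisfiesTimeChange Q) (h0 : ∀ᵐ f ∂Q, f 0 = true) :
    ClusterBalanced Q (Ioi 0) := by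
  have h0' : ∀ᵐ f ∂Q.map reflect, f 0 = true := by
    rw [ae_map_iff measurable_reflect.aemeasurable (measurableSet_markedAt 0)]
    simpa [reflect] using h0
  intro k
  have h := hQ.map_reflect.clusterBalanced_Iio h0' k
  rw [Measure.map_apply measurable_reflect
      ((measurableSet_countOn_eq _ _).inter (measurableSet_countOn_ne _ _)),
    Measure.map_apply measurable_reflect
      ((measurableSet_countOn_eq _ _).inter (measurableSet_countOn_eq _ _))] at h
  simpa only [preimage_inter, preimage_ofPred_eq, countOn_reflect, neg_univ, neg_Iio, neg_zero]
    using h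

end SatisfiesTimeChange

namespace ClusterBalanced

variable {Q : Measure (ℤ → Bool)} {T : Set ℤ}

lemma measure_countOn_univ_eq (h : ClusterBalanced Q T) (k : ℕ) :
    Q {f | countOn univ f = k} = k * Q ({f | countOn univ f = k} ∩ {f | countOn T f = 0}) := by
  have hfin : {f | countOn univ f = k} ⊆ {f | countOn T f ≠ ⊤} := fun f hf =>
    ne_top_of_le_ne_top (hf ▸ ENat.natCast_ne_top k) (countOn_mono (subset_univ T) f)
  rw [← ENat.toENNReal_coe, ← h, inter_eq_left.2 hfin]

lemma measure_countOn_univ_eq_top_inter [IsFiniteMeasure Q] (h : ClusterBalanced Q T) :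
    Q ({f | countOn univ f = ⊤} ∩ {f | countOn T f ≠ ⊤}) = 0 := by
  have h := h ⊤
  rw [ENat.toENNReal_top] at h
  rcases eq_or_ne (Q ({f | countOn univ f = ⊤} ∩ {f | countOn T f = 0})) 0 with h0 | h0
  · rwa [h0, mul_zero] at h
  · exact absurd (h.trans (ENNReal.top_mul h0)) (measure_ne_top Q _)

lemma measure_countOn_eq_zero [IsFiniteMeasure Q] (h : ClusterBalanced Q T) :
    Q {f | countOn T f = 0} = ∑' k : ℕ, Q ({f | countOn univ f = k} ∩ {f | countOn T f = 0}) := by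
  rw [← measure_eq_measure_of_null_sdiff inter_subset_left
      (measure_mono_null (fun f hf => ?_) h.measure_countOn_univ_eq_top_inter),
    measure_inter_ne_top_eq_tsum Q (measurableSet_countOn_eq _ _) (measurable_countOn univ)]
  · simp_rw [inter_comm]
  · simp_all

lemma tsum_measure_countOn_univ [IsFiniteMeasure Q] (h : ClusterBalanced Q T) :
    ∑' k : ℕ, Q {f | countOn univ f = k} = Q {f | countOn T f ≠ ⊤} := by
  have hsub : {f | countOn univ f ≠ ⊤} ⊆ {f | countOn T f ≠ ⊤} := fun f hf =>
    ne_top_of_le_ne_top hf (countOn_mono (subset_univ T) f)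
  rw [← measure_eq_measure_of_null_sdiff hsub (measure_mono_null
      (fun f hf => by simp_all) h.measure_countOn_univ_eq_top_inter),
    ← univ_inter {f | countOn univ f ≠ ⊤},
    measure_inter_ne_top_eq_tsum Q .univ (measurable_countOn univ)]
  simp_rw [univ_inter]

end ClusterBalanced

theorem SatisfiesTimeChange.extremalIndex_mul_mean_eq {Q : Measure (ℤ → Bool)}
    [IsFiniteMeasure Q] (hQ : SatisfiesTimeChange Q) (h0 : ∀ᵐ f ∂Q, f 0 = true)
    (hθ : Q {f | countOn (Ioi 0) f = 0} ≠ 0) :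
    Q {f | countOn (Ioi 0) f = 0} * ∑' k : ℕ, (k : ℝ≥0∞) *
        (Q ({f | countOn univ f = k} ∩ {f | countOn (Iio 0) f = 0}) / Q {f | countOn (Iio 0) f = 0})
      = Q {f | countOn (Ioi 0) f ≠ ⊤} := by
  set p : ℕ → ℝ≥0∞ := fun k => Q ({f | countOn univ f = k} ∩ {f | countOn (Iio 0) f = 0})
  set q : ℕ → ℝ≥0∞ := fun k => Q ({f | countOn univ f = k} ∩ {f | countOn (Ioi 0) f = 0})
  have hIio := hQ.clusterBalanced_Iio h0
  have hIoi := hQ.clusterBalanced_Ioi h0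
  have hpq : p = q := by
    funext k
    rcases eq_or_ne k 0 with rfl | hk
    · have h : Q {f | countOn univ f = (0 : ℕ)} = 0 := by simpa using hIio.measure_countOn_univ_eq 0
      exact (measure_mono_null inter_subset_left h).trans
        (measure_mono_null inter_subset_left h).symm
    · exact (ENNReal.mul_right_inj (Nat.cast_ne_zero.2 hk) (ENNReal.natCast_ne_top k)).1
        ((hIio.measure_countOn_univ_eq k).symm.trans (hIoi.measure_countOn_univ_eq k))
  have hθ' : Q {f | countOn (Iio 0) f = 0} = Q {f | countOn (Ioi 0) f = 0} := by
    rw [hIio.measure_countOn_eq_zero, hIoi.measure_countOn_eq_zero]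
    exact congrArg tsum hpq
  have hmean : ∑' k : ℕ, (k : ℝ≥0∞) * p k = Q {f | countOn (Ioi 0) f ≠ ⊤} := by
    rw [← hIoi.tsum_measure_countOn_univ]
    exact tsum_congr fun k => (hIio.measure_countOn_univ_eq k).symm
  have hdiv : ∑' k : ℕ, (k : ℝ≥0∞) * (p k / Q {f | countOn (Iio 0) f = 0})
      = (∑' k : ℕ, (k : ℝ≥0∞) * p k) / Q {f | countOn (Iio 0) f = 0} := by
    simp_rw [div_eq_mul_inv, ← mul_assoc, ENNReal.tsum_mul_right]
  rw [hdiv, hmean, hθ', ENNReal.mul_div_cancel hθ (measure_ne_top Q _)]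

section PalmLimit

variable {μ : ℕ → Measure (ℤ → Bool)} {Q : Measure (ℤ → Bool)}

theorem satisfiesTimeChange_of_tendsto [IsFiniteMeasure Q]
    (hstat : ∀ n c F ε, μ n (shift c ⁻¹' cyl F ε) = μ n (cyl F ε))
    (hlim : ∀ F ε, Tendsto (fun n => μ n (cyl F ε ∩ markedAt 0) / μ n (markedAt 0)) atTop
      (nhds (Q (cyl F ε)))) :
    SatisfiesTimeChange Q := by
  refine .of_cylSets fun c B hB hBc => ?_
  obtain rfl | ⟨F, ε, rfl⟩ := hB
  · rfl
  have h0 : cyl F ε ⊆ markedAt 0 := hBc.trans inter_subset_left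
  have hs0 : shift c ⁻¹' cyl F ε ⊆ markedAt 0 := fun f hf => by
    simpa [shift, markedAt] using (hBc hf).2
  have hlim' := hlim (F.image (· - c)) fun s => ε (s + c)
  rw [← preimage_shift_cyl] at hlim'
  -- the ratios along the sequence already agree, by stationarity
  refine tendsto_nhds_unique hlim' ((hlim F ε).congr fun n => ?_)
  rw [inter_eq_left.2 h0, inter_eq_left.2 hs0, hstat n c F ε]

lemma ae_markedAt_zero_of_tendsto [∀ n, IsFiniteMeasure (μ n)] [IsProbabilityMeasure Q]
    (hpos : ∀ n, μ n (markedAt 0) ≠ 0)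
    (hlim : ∀ F ε, Tendsto (fun n => μ n (cyl F ε ∩ markedAt 0) / μ n (markedAt 0)) atTop
      (nhds (Q (cyl F ε)))) :
    ∀ᵐ f ∂Q, f 0 = true := by
  have h := hlim {0} fun _ => true
  rw [← markedAt_eq_cyl] at h
  simp_rw [inter_self, ENNReal.div_self (hpos _) (measure_ne_top _ _)] at h
  rw [ae_iff]
  exact (prob_compl_eq_zero_iff (measurableSet_markedAt 0)).2
    (tendsto_nhds_unique tendsto_const_nhds h).symm

end PalmLimit

def pathMap {Ω : Type*} (I : ℤ → Ω → Bool) (ω : Ω) : ℤ → Bool := fun t => I t ω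

lemma measurable_pathMap {Ω : Type*} [MeasurableSpace Ω] {I : ℤ → Ω → Bool}
    (hI : ∀ t, Measurable (I t)) : Measurable (pathMap I) :=
  measurable_pi_lambda _ hI

theorem satisfiesTimeChange_of_palm_limit {Ω : Type*} [MeasurableSpace Ω] {P : Measure Ω}
    [IsProbabilityMeasure P] {I : ℤ → Ω → Bool} (hI : ∀ t, Measurable (I t))
    {Ωn : ℕ → Type*} [∀ n, MeasurableSpace (Ωn n)] {Pn : ∀ n, Measure (Ωn n)}
    (hPn : ∀ n, IsProbabilityMeasure (Pn n)) {In : ∀ n, ℤ → Ωn n → Bool}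
    (hIn : ∀ n t, Measurable (In n t)) (hpos : ∀ n, 0 < Pn n {ω | In n 0 ω = true})
    (hstat : ∀ n (F : Finset ℤ) (ε : ℤ → Bool) (k : ℤ),
      Pn n {ω | ∀ t ∈ F, In n t ω = ε t} = Pn n {ω | ∀ t ∈ F, In n (t + k) ω = ε t})
    (hconv : ∀ (F : Finset ℤ) (ε : ℤ → Bool),
      Tendsto (fun n => Pn n ({ω | ∀ t ∈ F, In n t ω = ε t} ∩ {ω | In n 0 ω = true})
        / Pn n {ω | In n 0 ω = true}) atTop (nhds (P {ω | ∀ t ∈ F, I t ω = ε t}))) :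
    SatisfiesTimeChange (P.map (pathMap I)) ∧ ∀ᵐ f ∂P.map (pathMap I), f 0 = true := by
  have hφ := measurable_pathMap hI
  have hφn := fun n => measurable_pathMap (hIn n)
  have := Measure.isProbabilityMeasure_map (μ := P) hφ.aemeasurable
  have (n : ℕ) : IsFiniteMeasure ((Pn n).map (pathMap (In n))) := by
    have := hPn n; infer_instance
  have hlim : ∀ F ε, Tendsto (fun n => (Pn n).map (pathMap (In n)) (cyl F ε ∩ markedAt 0)
      / (Pn n).map (pathMap (In n)) (markedAt 0)) atTop
      (nhds (P.map (pathMap I) (cyl F ε))) := fun F ε => by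
    simp only [Measure.map_apply (hφn _) (measurableSet_markedAt 0),
      Measure.map_apply (hφn _) ((measurableSet_cyl F ε).inter (measurableSet_markedAt 0)),
      Measure.map_apply hφ (measurableSet_cyl F ε)]
    exact hconv F ε
  refine ⟨satisfiesTimeChange_of_tendsto (fun n c F ε => ?_) hlim,
    ae_markedAt_zero_of_tendsto (fun n => ?_) hlim⟩
  · rw [Measure.map_apply (hφn n) (measurable_shift c (measurableSet_cyl F ε)),
      Measure.map_apply (hφn n) (measurableSet_cyl F ε)]
    exact (hstat n F ε (-c)).symm
  · rw [Measure.map_apply (hφn n) (measurableSet_markedAt 0)]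
    exact (hpos n).ne'

end BoolPath

open BoolPath

/-- Theorem 4.2(b), Equation (4.8): under Assumption 1, if `θ = P(S₊ⁱ = 0) > 0`,
then `θ = P(S₊ⁱ < ∞) / E(Sᵗ)`, where `E(Sᵗ) = Σ_{k≥1} k·π_k` is the expected
typical cluster size; equivalently `θ · E(Sᵗ) = P(S₊ⁱ < ∞)`. -/
theorem theta_eq_finite_over_typical_mean
    {Ω : Type*} [MeasurableSpace Ω] (P : Measure Ω) [IsProbabilityMeasure P]
    (I : ℤ → Ω → Bool) (hI : ∀ t, Measurable (I t))
    {Ωn : ℕ → Type*} [∀ n, MeasurableSpace (Ωn n)]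
    (Pn : ∀ n, Measure (Ωn n)) (hPn : ∀ n, IsProbabilityMeasure (Pn n))
    (In : ∀ n, ℤ → Ωn n → Bool) (hIn : ∀ n t, Measurable (In n t))
    -- `P(I₀ⁿ = 1) > 0` for all `n`
    (hpos : ∀ n, 0 < Pn n {ω | In n 0 ω = true})
    -- stationarity of each `(Iₜⁿ)ₜ`
    (hstat : ∀ n (F : Finset ℤ) (ε : ℤ → Bool) (k : ℤ),
      Pn n {ω | ∀ t ∈ F, In n t ω = ε t} = Pn n {ω | ∀ t ∈ F, In n (t + k) ω = ε t})
    -- convergence of the conditional finite-dimensional distributions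
    (hconv : ∀ (F : Finset ℤ) (ε : ℤ → Bool),
      Tendsto (fun n =>
          Pn n ({ω | ∀ t ∈ F, In n t ω = ε t} ∩ {ω | In n 0 ω = true})
            / Pn n {ω | In n 0 ω = true}) atTop
        (nhds (P {ω | ∀ t ∈ F, I t ω = ε t})))

    (hθ : 0 < P {ω | SplusFn I ω = 0}) :
    (P {ω | SplusFn I ω = 0}) * (∑' k : ℕ, (k : ℝ≥0∞) * (P ({ω | SiFn I ω = ((k : ℕ) : ℕ∞)} ∩ {ω | SminusFn I ω = 0}) / P {ω | SminusFn I ω = 0})) = P {ω | SplusFn I ω ≠ ⊤}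
    ∧ (P {ω | SplusFn I ω = 0}) = P {ω | SplusFn I ω ≠ ⊤} / (∑' k : ℕ, (k : ℝ≥0∞) * (P ({ω | SiFn I ω = ((k : ℕ) : ℕ∞)} ∩ {ω | SminusFn I ω = 0}) / P {ω | SminusFn I ω = 0})) := by
  have hφ := measurable_pathMap hI
  have := Measure.isProbabilityMeasure_map (μ := P) hφ.aemeasurable
  obtain ⟨hQ, h0⟩ := satisfiesTimeChange_of_palm_limit hI hPn hIn hpos hstat hconv
  have hmap {A : Set (ℤ → Bool)} (hA : MeasurableSet A) :
      P.map (pathMap I) A = P (pathMap I ⁻¹' A) :=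
    Measure.map_apply hφ hA
  have hSi (k : ℕ) : pathMap I ⁻¹' ({f | countOn univ f = k} ∩ {f | countOn (Iio 0) f = 0})
      = {ω | SiFn I ω = k} ∩ {ω | SminusFn I ω = 0} := by
    ext ω; simp [pathMap, countOn, SiFn, SminusFn]
  have key := hQ.extremalIndex_mul_mean_eq h0
    (by rw [hmap (measurableSet_countOn_eq _ _)]; exact hθ.ne')
  simp only [hmap (measurableSet_countOn_eq _ _), hmap (measurableSet_countOn_ne _ _),
    hmap ((measurableSet_countOn_eq _ _).inter (measurableSet_countOn_eq _ _)), hSi] at key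
  refine ⟨key, ENNReal.eq_div_of_mul_eq key hθ.ne' ?_ (measure_ne_top _ _)⟩
  exact (hθ.trans_le (measure_mono fun ω (h : SplusFn I ω = 0) => by simp [h])).ne'
end
end
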